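/- arXiv:math/0404345 — 3 statements merged into one kernel-verified Lean document; each statement's English description precedes it below -/
import Mathlib

section
/- Let 1 ≤ k ≤ l. If l and k are both odd, then Σ_{w ∈ W⁻_[{k}]} sgn(w) = 0. Otherwise, |Σ_{w ∈ W⁻_[{k}]} sgn(w)| = 2·C(⌊(l+1)/2⌋, ⌊k/2⌋), where C(·,·) is the binomial coefficient. Consequently the incidence number [∅;{α_k}] := (−1)^{k−1}·|Σ_{w ∈ W⁻_[{k}]} sgn(w)| equals ((−1)^{k−1} − 1)·C((l+1)/2, ⌊k/2⌋) when l is odd, and equals 2·(−1)^{k−1}·C(l/2, ⌊k/2⌋) when l is even. -/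
open Equiv Finset

namespace CK

/-- value of the permutation word at position `j`, as a natural number. -/
def pval (m : ℕ) (w : Equiv.Perm (Fin m)) (j : ℕ) : ℕ :=
  if h : j < m then (w ⟨j, h⟩ : ℕ) else 0

lemma pval_lt {m : ℕ} (w : Equiv.Perm (Fin m)) {j : ℕ} (h : j < m) : pval m w j < m := by
  rw [pval, dif_pos h]
  exact (w ⟨j, h⟩).2

lemma pval_inj {m : ℕ} (w : Equiv.Perm (Fin m)) {i j : ℕ} (hi : i < m) (hj : j < m)
    (h : pval m w i = pval m w j) : i = j := by
  rw [pval, dif_pos hi, pval, dif_pos hj] at h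
  have := w.injective (Fin.ext h)
  simpa using congrArg Fin.val this

/-- adjacency condition at every junction `(j, j+1)` except `j+1 = k`. -/
def cond (m k : ℕ) (w : Equiv.Perm (Fin m)) : Prop :=
  ∀ j : ℕ, j + 1 < m → j + 1 ≠ k →
    pval m w j < pval m w (j + 1) ∧ (pval m w j + pval m w (j + 1)) % 2 = 1

open Classical in
noncomputable def V (m k : ℕ) : Finset (Equiv.Perm (Fin m)) :=
  Finset.univ.filter (cond m k)

lemma mem_V {m k : ℕ} {w : Equiv.Perm (Fin m)} : w ∈ V m k ↔ cond m k w := by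
  classical
  simp [V]

lemma one_mem_V (m k : ℕ) : (1 : Equiv.Perm (Fin m)) ∈ V m k := by
  rw [mem_V]
  intro j h _
  rw [pval, dif_pos (by omega : j < m), pval, dif_pos h]
  simp only [Perm.one_apply]
  omega

lemma V_eq_one {m k : ℕ} (hk : k = 0 ∨ m ≤ k) : V m k = {1} := by
  ext w
  simp only [mem_singleton, mem_V]
  constructor
  · intro h
    have key : ∀ j : ℕ, j < m → j ≤ pval m w j := by
      intro j
      induction j with
      | zero => intro hj; omega
      | succ i ih =>
        intro hj
        have h2 := (h i hj (by omega)).1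
        have h3 := ih (by omega)
        omega
    have hsum : ∑ i : Fin m, ((w i : ℕ)) = ∑ i : Fin m, (i : ℕ) := Equiv.sum_comp w _
    have hpt : ∀ i ∈ (univ : Finset (Fin m)), (i : ℕ) = (w i : ℕ) := by
      refine (Finset.sum_eq_sum_iff_of_le ?_).1 hsum.symm
      intro i _
      have := key (i : ℕ) i.2
      rw [pval, dif_pos i.2] at this
      simpa using this
    ext i
    have := hpt i (mem_univ i)
    simp [this]
  · rintro rfl
    exact mem_V.1 (one_mem_V m k)

lemma zero_cases {m k : ℕ} (hk1 : 1 ≤ k) (hkm : k < m) {w : Equiv.Perm (Fin m)}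
    (hw : w ∈ V m k) : pval m w 0 = 0 ∨ pval m w k = 0 := by
  rw [mem_V] at hw
  set p := w.symm ⟨0, by omega⟩ with hp
  have hwp : w p = ⟨0, by omega⟩ := w.apply_symm_apply _
  have hwp' : pval m w (p : ℕ) = 0 := by
    rw [pval, dif_pos p.2]
    have : w ⟨(p : ℕ), p.2⟩ = w p := by congr 1
    rw [this, hwp]
  by_contra hcon
  push_neg at hcon
  have hp0 : (p : ℕ) ≠ 0 := fun h0 => hcon.1 (by rwa [h0] at hwp')
  have hpk : (p : ℕ) ≠ k := fun h0 => hcon.2 (by rwa [h0] at hwp')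
  have hlt : (p : ℕ) - 1 + 1 < m := by have := p.2; omega
  have h2 := (hw ((p : ℕ) - 1) hlt (by omega)).1
  have h3 : (p : ℕ) - 1 + 1 = (p : ℕ) := by omega
  rw [h3, hwp'] at h2
  omega


noncomputable def mapA (n : ℕ) (e : Equiv.Perm (Fin n)) : Equiv.Perm (Fin (n + 1)) :=
  Equiv.Perm.decomposeFin.symm (0, e)

noncomputable def mapB (n k : ℕ) (hk : k < n + 1) (e : Equiv.Perm (Fin n)) :
    Equiv.Perm (Fin (n + 1)) :=
  mapA n e * (⟨k, hk⟩ : Fin (n + 1)).cycleRange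

lemma mapA_zero {n : ℕ} (e : Equiv.Perm (Fin n)) : pval (n + 1) (mapA n e) 0 = 0 := by
  rw [pval, dif_pos (by omega : 0 < n + 1)]
  have : (⟨0, by omega⟩ : Fin (n + 1)) = 0 := rfl
  rw [this, mapA, Equiv.Perm.decomposeFin_symm_apply_zero]
  rfl

lemma mapA_succ {n : ℕ} (e : Equiv.Perm (Fin n)) {j : ℕ} (h : j < n) :
    pval (n + 1) (mapA n e) (j + 1) = pval n e j + 1 := by
  rw [pval, dif_pos (by omega : j + 1 < n + 1), pval, dif_pos h]
  have : (⟨j + 1, by omega⟩ : Fin (n + 1)) = (⟨j, h⟩ : Fin n).succ := rfl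
  rw [this, mapA, Equiv.Perm.decomposeFin_symm_apply_succ, Equiv.swap_self]
  simp

lemma mapB_lt {n k : ℕ} (hk : k < n + 1) (e : Equiv.Perm (Fin n)) {j : ℕ} (hj : j < k)
    (hjn : j < n) : pval (n + 1) (mapB n k hk e) j = pval n e j + 1 := by
  have hcr : (⟨k, hk⟩ : Fin (n + 1)).cycleRange ⟨j, by omega⟩ = ⟨j + 1, by omega⟩ := by
    apply Fin.ext
    rw [Fin.coe_cycleRange_of_lt (by simpa [Fin.lt_def] using hj)]
  rw [pval, dif_pos (by omega : j < n + 1)]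
  rw [mapB, Equiv.Perm.mul_apply, hcr]
  have h2 := mapA_succ e hjn
  rw [pval, dif_pos (show j + 1 < n + 1 by omega)] at h2
  exact h2

lemma mapB_self {n k : ℕ} (hk : k < n + 1) (e : Equiv.Perm (Fin n)) :
    pval (n + 1) (mapB n k hk e) k = 0 := by
  rw [pval, dif_pos hk, mapB, Equiv.Perm.mul_apply, Fin.cycleRange_self]
  have h0 := mapA_zero e
  rw [pval, dif_pos (by omega : 0 < n + 1)] at h0
  convert h0 using 2
  rfl

lemma mapB_gt {n k : ℕ} (hk : k < n + 1) (e : Equiv.Perm (Fin n)) {j : ℕ} (hj : k < j)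
    (hjn : j < n + 1) : pval (n + 1) (mapB n k hk e) j = pval n e (j - 1) + 1 := by
  have hcr : (⟨k, hk⟩ : Fin (n + 1)).cycleRange ⟨j, hjn⟩ = ⟨j, hjn⟩ :=
    Fin.cycleRange_of_gt (by simpa [Fin.lt_def] using hj)
  rw [pval, dif_pos hjn, mapB, Equiv.Perm.mul_apply, hcr]
  have h2 := mapA_succ e (show j - 1 < n by omega)
  rw [pval, dif_pos (show j - 1 + 1 < n + 1 by omega)] at h2
  have : (⟨j, hjn⟩ : Fin (n + 1)) = ⟨j - 1 + 1, by omega⟩ := Fin.ext (by simp; omega)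
  rw [this, h2]


lemma sign_mapA {n : ℕ} (e : Equiv.Perm (Fin n)) :
    Equiv.Perm.sign (mapA n e) = Equiv.Perm.sign e := by
  rw [mapA, Equiv.Perm.decomposeFin.symm_sign, if_pos rfl, one_mul]

lemma sign_mapB {n k : ℕ} (hk : k < n + 1) (e : Equiv.Perm (Fin n)) :
    Equiv.Perm.sign (mapB n k hk e) = Equiv.Perm.sign e * (-1) ^ k := by
  rw [mapB, map_mul, sign_mapA, Fin.sign_cycleRange]

lemma mapA_injective {n : ℕ} : Function.Injective (mapA n) := by
  intro a b hab
  have h2 := Equiv.Perm.decomposeFin.symm.injective hab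
  simpa using h2

lemma mapB_injective {n k : ℕ} (hk : k < n + 1) : Function.Injective (mapB n k hk) := by
  intro a b hab
  exact mapA_injective (mul_right_cancel hab)

/-- Bijection for the `w(0) = 0` part. -/
lemma imgA {n k : ℕ} (hk1 : 1 ≤ k) (hkn : k ≤ n) :
    (V (n + 1) k).filter (fun w => pval (n + 1) w 0 = 0) =
    ((V n (k - 1)).filter (fun e => 2 ≤ k → pval n e 0 % 2 = 0)).image (mapA n) := by
  ext w
  simp only [mem_filter, mem_image]
  constructor
  · rintro ⟨hwV, hw0⟩
    rw [mem_V] at hwV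
    set pe := Equiv.Perm.decomposeFin w with hpedef
    have hsymm : Equiv.Perm.decomposeFin.symm pe = w := Equiv.symm_apply_apply _ _
    have hfst : pe.1 = 0 := by
      have h1 : (Equiv.Perm.decomposeFin.symm (pe.1, pe.2)) 0 = pe.1 :=
        Equiv.Perm.decomposeFin_symm_apply_zero _ _
      rw [Prod.mk.eta, hsymm] at h1
      rw [pval, dif_pos (by omega : 0 < n + 1)] at hw0
      rw [← h1]
      apply Fin.ext
      exact hw0
    have hmap : mapA n pe.2 = w := by
      rw [mapA, ← hfst, Prod.mk.eta, hsymm]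
    have hval : ∀ j, j < n → pval (n + 1) w (j + 1) = pval n pe.2 j + 1 := by
      intro j hj
      rw [← hmap]
      exact mapA_succ pe.2 hj
    refine ⟨pe.2, ⟨?_, ?_⟩, hmap⟩
    · rw [mem_V]
      intro j hj hjk
      have hc := hwV (j + 1) (by omega) (by omega)
      rw [hval j (by omega), hval (j + 1) (by omega)] at hc
      omega
    · intro hk2
      have hc := hwV 0 (by omega) (by omega)
      rw [hval 0 (by omega), hw0] at hc
      omega
  · rintro ⟨e, ⟨heV, hemark⟩, rfl⟩
    rw [mem_V] at heV
    have h0 := mapA_zero e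
    refine ⟨?_, h0⟩
    rw [mem_V]
    intro j hj hjk
    rcases Nat.eq_zero_or_pos j with rfl | hjpos
    · rw [h0, mapA_succ e (by omega : 0 < n)]
      have := hemark (by omega)
      omega
    · obtain ⟨i, rfl⟩ : ∃ i, j = i + 1 := ⟨j - 1, by omega⟩
      rw [mapA_succ e (by omega : i < n), mapA_succ e (by omega : i + 1 < n)]
      have hc := heV i (by omega) (by omega)
      omega

/-- Bijection for the `w(k) = 0` part. -/
lemma imgB {n k : ℕ} (hk1 : 1 ≤ k) (hkn : k ≤ n) :
    (V (n + 1) k).filter (fun w => pval (n + 1) w k = 0) =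
    ((V n k).filter (fun e => k < n → pval n e k % 2 = 0)).image (mapB n k (by omega)) := by
  ext w
  simp only [mem_filter, mem_image]
  constructor
  · rintro ⟨hwV, hwk0⟩
    rw [mem_V] at hwV
    set c := ((⟨k, by omega⟩ : Fin (n + 1)).cycleRange : Equiv.Perm (Fin (n + 1))) with hc
    set w' := w * c⁻¹ with hw'def
    have hw'0 : w' 0 = 0 := by
      rw [hw'def, Equiv.Perm.mul_apply]
      have : c⁻¹ 0 = ⟨k, by omega⟩ := by
        rw [hc]
        exact Fin.cycleRange_symm_zero _
      rw [this]
      rw [pval, dif_pos (by omega : k < n + 1)] at hwk0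
      exact Fin.ext hwk0
    set pe := Equiv.Perm.decomposeFin w' with hpedef
    have hsymm : Equiv.Perm.decomposeFin.symm pe = w' := Equiv.symm_apply_apply _ _
    have hfst : pe.1 = 0 := by
      have h1 : (Equiv.Perm.decomposeFin.symm (pe.1, pe.2)) 0 = pe.1 :=
        Equiv.Perm.decomposeFin_symm_apply_zero _ _
      rw [Prod.mk.eta, hsymm] at h1
      rw [← h1, hw'0]
    have hmap : mapB n k (by omega) pe.2 = w := by
      rw [mapB, mapA, ← hfst, Prod.mk.eta, hsymm, hw'def, ← hc]
      group
    have hvlt : ∀ j, j < k → pval (n + 1) w j = pval n pe.2 j + 1 := by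
      intro j hj
      rw [← hmap]
      exact mapB_lt _ pe.2 hj (by omega)
    have hvgt : ∀ j, k < j → j < n + 1 → pval (n + 1) w j = pval n pe.2 (j - 1) + 1 := by
      intro j hj hjn
      rw [← hmap]
      exact mapB_gt _ pe.2 hj hjn
    refine ⟨pe.2, ⟨?_, ?_⟩, hmap⟩
    · rw [mem_V]
      intro j hj hjk
      rcases lt_trichotomy (j + 1) k with h | h | h
      · have hc2 := hwV j (by omega) (by omega)
        rw [hvlt j (by omega), hvlt (j + 1) (by omega)] at hc2
        omega
      · omega
      · have hc2 := hwV (j + 1) (by omega) (by omega)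
        rw [hvgt (j + 1) (by omega) (by omega), hvgt (j + 2) (by omega) (by omega)] at hc2
        have e1 : j + 1 - 1 = j := by omega
        have e2 : j + 2 - 1 = j + 1 := by omega
        rw [e1, e2] at hc2
        omega
    · intro hkn'
      have hc2 := hwV k (by omega) (by omega)
      rw [hwk0, hvgt (k + 1) (by omega) (by omega)] at hc2
      simp only [Nat.add_sub_cancel] at hc2
      omega
  · rintro ⟨e, ⟨heV, hemark⟩, rfl⟩
    rw [mem_V] at heV
    refine ⟨?_, mapB_self _ e⟩
    rw [mem_V]
    intro j hj hjk
    rcases lt_trichotomy (j + 1) k with h | h | h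
    · rw [mapB_lt _ e (by omega) (by omega), mapB_lt _ e (by omega) (by omega)]
      have hc2 := heV j (by omega) (by omega)
      omega
    · omega
    · rcases Nat.eq_or_lt_of_le (show k ≤ j by omega) with rfl | hlt
      · rw [mapB_self _ e, mapB_gt _ e (by omega) (by omega)]
        simp only [Nat.add_sub_cancel]
        have := hemark (by omega)
        omega
      · rw [mapB_gt _ e (by omega) (by omega), mapB_gt _ e (by omega) (by omega)]
        simp only [Nat.add_sub_cancel]
        have hc2 := heV (j - 1) (by omega) (by omega)
        have e1 : j - 1 + 1 = j := by omega
        rw [e1] at hc2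
        omega


def N0f (m k : ℕ) : ℕ :=
  if m % 2 = 1 then (if k % 2 = 1 then 2 else 1) * Nat.choose ((m - 1) / 2) (k / 2)
  else if k % 2 = 1 then Nat.choose ((m - 2) / 2) (k / 2)
  else Nat.choose (m / 2) (k / 2) + Nat.choose ((m - 2) / 2) (k / 2 - 1)

def O0f (m k : ℕ) : ℕ :=
  if m % 2 = 1 then (if k % 2 = 1 then 0 else 1) * Nat.choose ((m - 1) / 2) (k / 2)
  else Nat.choose ((m - 2) / 2) (k / 2)

def Nkf (m k : ℕ) : ℕ :=
  if m % 2 = 1 then (if k % 2 = 0 then 2 else 1) * Nat.choose ((m - 1) / 2) (k / 2)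
  else if k % 2 = 1 then Nat.choose ((m - 2) / 2) (k / 2)
  else Nat.choose (m / 2) (k / 2) + Nat.choose ((m - 2) / 2) (k / 2)

def Okf (m k : ℕ) : ℕ :=
  if m % 2 = 1 then (if k % 2 = 0 then 0 else 1) * Nat.choose ((m - 1) / 2) (k / 2)
  else if k % 2 = 1 then Nat.choose ((m - 2) / 2) (k / 2)
  else Nat.choose ((m - 2) / 2) (k / 2 - 1)

lemma pascal (x y : ℕ) : (x + 1).choose (y + 1) = x.choose y + x.choose (y + 1) :=
  Nat.choose_succ_succ' x y

lemma R1 {m k : ℕ} (hk1 : 1 ≤ k) (hkm : k ≤ m) :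
    N0f (m + 1) k = (if k = 1 then 1 else N0f m (k - 1)) + (if k = m then 0 else O0f m k) := by
  rcases Nat.even_or_odd m with ⟨a, rfl⟩ | ⟨a, rfl⟩ <;>
    rcases Nat.even_or_odd k with ⟨b, rfl⟩ | ⟨b, rfl⟩ <;>
    simp only [N0f, O0f]
  · -- m = a+a, k = b+b
    obtain ⟨c, rfl⟩ : ∃ c, b = c + 1 := ⟨b - 1, by omega⟩
    simp only [show (a + a + 1) % 2 = 1 from by omega, show (a + a) % 2 = 0 from by omega,
      show (c + 1 + (c + 1)) % 2 = 0 from by omega,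
      show (c + 1 + (c + 1) - 1) % 2 = 1 from by omega,
      show (a + a + 1 - 1) / 2 = a from by omega,
      show (c + 1 + (c + 1)) / 2 = c + 1 from by omega,
      show (c + 1 + (c + 1) - 1) / 2 = c from by omega,
      show (a + a) / 2 = a from by omega, show (a + a - 2) / 2 = a - 1 from by omega]
    norm_num
    rw [if_neg (by omega : ¬(c + 1 + (c + 1) = 1))]
    by_cases hb : c + 1 + (c + 1) = a + a
    · rw [if_pos hb]
      obtain rfl : a = c + 1 := by omega
      simp [Nat.choose_self]
    · rw [if_neg hb]
      obtain ⟨d, rfl⟩ : ∃ d, a = d + 1 := ⟨a - 1, by omega⟩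
      rw [show d + 1 - 1 = d from rfl, pascal d c]
  · -- m = a+a, k = 2b+1
    simp only [show (a + a + 1) % 2 = 1 from by omega, show (a + a) % 2 = 0 from by omega,
      show (2 * b + 1) % 2 = 1 from by omega, show (2 * b + 1 - 1) % 2 = 0 from by omega,
      show (a + a + 1 - 1) / 2 = a from by omega, show (2 * b + 1) / 2 = b from by omega,
      show (2 * b + 1 - 1) / 2 = b from by omega, show (a + a) / 2 = a from by omega,
      show (a + a - 2) / 2 = a - 1 from by omega]
    norm_num
    rcases Nat.eq_zero_or_pos b with rfl | hb
    · simp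
      rw [if_neg (by omega : ¬(1 : ℕ) = a + a)]
    · rw [if_neg (by omega : ¬b = 0)]
      obtain ⟨c, rfl⟩ : ∃ c, b = c + 1 := ⟨b - 1, by omega⟩
      obtain ⟨d, rfl⟩ : ∃ d, a = d + 1 := ⟨a - 1, by omega⟩
      simp only [Nat.add_sub_cancel]
      rw [pascal d c, if_neg (by omega : ¬(2 * (c + 1) + 1 = d + 1 + (d + 1)))]
      ring
  · -- m = 2a+1, k = b+b
    obtain ⟨c, rfl⟩ : ∃ c, b = c + 1 := ⟨b - 1, by omega⟩
    simp only [show (2 * a + 1 + 1) % 2 = 0 from by omega, show (2 * a + 1) % 2 = 1 from by omega,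
      show (c + 1 + (c + 1)) % 2 = 0 from by omega,
      show (c + 1 + (c + 1) - 1) % 2 = 1 from by omega,
      show (2 * a + 1 + 1) / 2 = a + 1 from by omega,
      show (2 * a + 1 + 1 - 2) / 2 = a from by omega,
      show (2 * a + 1 - 1) / 2 = a from by omega,
      show (c + 1 + (c + 1)) / 2 = c + 1 from by omega,
      show (c + 1 + (c + 1) - 1) / 2 = c from by omega]
    norm_num
    rw [if_neg (by omega : ¬(c + 1 + (c + 1) = 1)),
      if_neg (by omega : ¬(c + 1 + (c + 1) = 2 * a + 1)), pascal a c]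
    ring
  · -- m = 2a+1, k = 2b+1
    simp only [show (2 * a + 1 + 1) % 2 = 0 from by omega, show (2 * a + 1) % 2 = 1 from by omega,
      show (2 * b + 1) % 2 = 1 from by omega, show (2 * b + 1 - 1) % 2 = 0 from by omega,
      show (2 * a + 1 + 1) / 2 = a + 1 from by omega,
      show (2 * a + 1 + 1 - 2) / 2 = a from by omega,
      show (2 * a + 1 - 1) / 2 = a from by omega,
      show (2 * b + 1) / 2 = b from by omega, show (2 * b + 1 - 1) / 2 = b from by omega]
    norm_num
    rcases Nat.eq_zero_or_pos b with rfl | hb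
    · simp
    · intro h; omega

lemma R2a {m k : ℕ} (hk1 : 1 ≤ k) (hkm : k < m) : O0f (m + 1) k + Okf m k = N0f m k := by
  rcases Nat.even_or_odd m with ⟨a, rfl⟩ | ⟨a, rfl⟩ <;>
    rcases Nat.even_or_odd k with ⟨b, rfl⟩ | ⟨b, rfl⟩ <;>
    simp only [N0f, O0f, Okf]
  · obtain ⟨c, rfl⟩ : ∃ c, b = c + 1 := ⟨b - 1, by omega⟩
    simp only [show (a + a + 1) % 2 = 1 from by omega, show (a + a) % 2 = 0 from by omega,
      show (c + 1 + (c + 1)) % 2 = 0 from by omega,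
      show (a + a + 1 - 1) / 2 = a from by omega,
      show (c + 1 + (c + 1)) / 2 = c + 1 from by omega,
      show (a + a) / 2 = a from by omega, show (a + a - 2) / 2 = a - 1 from by omega]
    norm_num
  · simp only [show (a + a + 1) % 2 = 1 from by omega, show (a + a) % 2 = 0 from by omega,
      show (2 * b + 1) % 2 = 1 from by omega,
      show (a + a + 1 - 1) / 2 = a from by omega, show (2 * b + 1) / 2 = b from by omega,
      show (a + a - 2) / 2 = a - 1 from by omega]
    norm_num
  · obtain ⟨c, rfl⟩ : ∃ c, b = c + 1 := ⟨b - 1, by omega⟩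
    simp only [show (2 * a + 1 + 1) % 2 = 0 from by omega, show (2 * a + 1) % 2 = 1 from by omega,
      show (c + 1 + (c + 1)) % 2 = 0 from by omega,
      show (2 * a + 1 + 1 - 2) / 2 = a from by omega,
      show (2 * a + 1 - 1) / 2 = a from by omega,
      show (c + 1 + (c + 1)) / 2 = c + 1 from by omega]
    norm_num
  · simp only [show (2 * a + 1 + 1) % 2 = 0 from by omega, show (2 * a + 1) % 2 = 1 from by omega,
      show (2 * b + 1) % 2 = 1 from by omega,
      show (2 * a + 1 + 1 - 2) / 2 = a from by omega,
      show (2 * a + 1 - 1) / 2 = a from by omega,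
      show (2 * b + 1) / 2 = b from by omega]
    norm_num
    omega

lemma R2b {m : ℕ} (hm : 1 ≤ m) : O0f (m + 1) m = 1 := by
  rcases Nat.even_or_odd m with ⟨a, rfl⟩ | ⟨a, rfl⟩ <;> simp only [O0f]
  · simp only [show (a + a + 1) % 2 = 1 from by omega, show (a + a) % 2 = 0 from by omega,
      show (a + a + 1 - 1) / 2 = a from by omega, show (a + a) / 2 = a from by omega]
    norm_num
  · simp only [show (2 * a + 1 + 1) % 2 = 0 from by omega,
      show (2 * a + 1 + 1 - 2) / 2 = a from by omega, show (2 * a + 1) / 2 = a from by omega]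
    norm_num

lemma R3 {m k : ℕ} (hk1 : 1 ≤ k) (hkm : k ≤ m) :
    Nkf (m + 1) k = (if k = 1 then 0 else Okf m (k - 1)) + (if k = m then 1 else Nkf m k) := by
  rcases Nat.even_or_odd m with ⟨a, rfl⟩ | ⟨a, rfl⟩ <;>
    rcases Nat.even_or_odd k with ⟨b, rfl⟩ | ⟨b, rfl⟩ <;>
    simp only [Nkf, Okf]
  · -- m = a+a, k = b+b : LHS 2C(a,b) = C(a-1,b-1) + C(a,b)+C(a-1,b) (or boundary)
    obtain ⟨c, rfl⟩ : ∃ c, b = c + 1 := ⟨b - 1, by omega⟩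
    simp only [show (a + a + 1) % 2 = 1 from by omega, show (a + a) % 2 = 0 from by omega,
      show (c + 1 + (c + 1)) % 2 = 0 from by omega,
      show (c + 1 + (c + 1) - 1) % 2 = 1 from by omega,
      show (a + a + 1 - 1) / 2 = a from by omega,
      show (c + 1 + (c + 1)) / 2 = c + 1 from by omega,
      show (c + 1 + (c + 1) - 1) / 2 = c from by omega,
      show (a + a) / 2 = a from by omega, show (a + a - 2) / 2 = a - 1 from by omega]
    norm_num
    rw [if_neg (by omega : ¬(c + 1 + (c + 1) = 1))]
    by_cases hb : c + 1 + (c + 1) = a + a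
    · rw [if_pos hb]
      obtain rfl : a = c + 1 := by omega
      simp [Nat.choose_self]
    · rw [if_neg hb]
      obtain ⟨d, rfl⟩ : ∃ d, a = d + 1 := ⟨a - 1, by omega⟩
      rw [show d + 1 - 1 = d from rfl, pascal d c]
      ring
  · -- m = a+a, k = 2b+1
    simp only [show (a + a + 1) % 2 = 1 from by omega, show (a + a) % 2 = 0 from by omega,
      show (2 * b + 1) % 2 = 1 from by omega, show (2 * b + 1 - 1) % 2 = 0 from by omega,
      show (a + a + 1 - 1) / 2 = a from by omega, show (2 * b + 1) / 2 = b from by omega,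
      show (2 * b + 1 - 1) / 2 = b from by omega,
      show (a + a - 2) / 2 = a - 1 from by omega]
    norm_num
    rcases Nat.eq_zero_or_pos b with rfl | hb
    · simp
    · rw [if_neg (by omega : ¬b = 0)]
      obtain ⟨c, rfl⟩ : ∃ c, b = c + 1 := ⟨b - 1, by omega⟩
      obtain ⟨d, rfl⟩ : ∃ d, a = d + 1 := ⟨a - 1, by omega⟩
      simp only [Nat.add_sub_cancel]
      rw [pascal d c, if_neg (by omega : ¬(2 * (c + 1) + 1 = d + 1 + (d + 1)))]
  · -- m = 2a+1, k = b+b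
    obtain ⟨c, rfl⟩ : ∃ c, b = c + 1 := ⟨b - 1, by omega⟩
    simp only [show (2 * a + 1 + 1) % 2 = 0 from by omega, show (2 * a + 1) % 2 = 1 from by omega,
      show (c + 1 + (c + 1)) % 2 = 0 from by omega,
      show (c + 1 + (c + 1) - 1) % 2 = 1 from by omega,
      show (2 * a + 1 + 1) / 2 = a + 1 from by omega,
      show (2 * a + 1 + 1 - 2) / 2 = a from by omega,
      show (2 * a + 1 - 1) / 2 = a from by omega,
      show (c + 1 + (c + 1)) / 2 = c + 1 from by omega,
      show (c + 1 + (c + 1) - 1) / 2 = c from by omega]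
    norm_num
    rw [if_neg (by omega : ¬(c + 1 + (c + 1) = 1)),
      if_neg (by omega : ¬(c + 1 + (c + 1) = 2 * a + 1)), pascal a c]
    ring
  · -- m = 2a+1, k = 2b+1
    simp only [show (2 * a + 1 + 1) % 2 = 0 from by omega, show (2 * a + 1) % 2 = 1 from by omega,
      show (2 * b + 1) % 2 = 1 from by omega, show (2 * b + 1 - 1) % 2 = 0 from by omega,
      show (2 * a + 1 + 1 - 2) / 2 = a from by omega,
      show (2 * a + 1 - 1) / 2 = a from by omega,
      show (2 * b + 1) / 2 = b from by omega, show (2 * b + 1 - 1) / 2 = b from by omega]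
    norm_num
    rcases Nat.eq_zero_or_pos b with rfl | hb
    · by_cases hm : 0 = a
      · subst hm; simp
      · simp [if_neg hm]
    · by_cases hm : b = a
      · subst hm; simp [Nat.choose_self]
      · intro h; omega

lemma R4a {m k : ℕ} (hk2 : 2 ≤ k) (hkm : k ≤ m) :
    Okf (m + 1) k + O0f m (k - 1) = Nkf m (k - 1) := by
  rcases Nat.even_or_odd m with ⟨a, rfl⟩ | ⟨a, rfl⟩ <;>
    rcases Nat.even_or_odd k with ⟨b, rfl⟩ | ⟨b, rfl⟩ <;>
    simp only [Nkf, Okf, O0f]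
  · obtain ⟨c, rfl⟩ : ∃ c, b = c + 1 := ⟨b - 1, by omega⟩
    simp only [show (a + a + 1) % 2 = 1 from by omega, show (a + a) % 2 = 0 from by omega,
      show (c + 1 + (c + 1)) % 2 = 0 from by omega,
      show (c + 1 + (c + 1) - 1) % 2 = 1 from by omega,
      show (a + a + 1 - 1) / 2 = a from by omega,
      show (c + 1 + (c + 1)) / 2 = c + 1 from by omega,
      show (c + 1 + (c + 1) - 1) / 2 = c from by omega,
      show (a + a - 2) / 2 = a - 1 from by omega]
    norm_num
  · obtain ⟨c, rfl⟩ : ∃ c, b = c + 1 := ⟨b - 1, by omega⟩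
    simp only [show (a + a + 1) % 2 = 1 from by omega, show (a + a) % 2 = 0 from by omega,
      show (2 * (c + 1) + 1) % 2 = 1 from by omega,
      show (2 * (c + 1) + 1 - 1) % 2 = 0 from by omega,
      show (a + a + 1 - 1) / 2 = a from by omega,
      show (2 * (c + 1) + 1) / 2 = c + 1 from by omega,
      show (2 * (c + 1) + 1 - 1) / 2 = c + 1 from by omega,
      show (a + a) / 2 = a from by omega,
      show (a + a - 2) / 2 = a - 1 from by omega]
    norm_num
  · obtain ⟨c, rfl⟩ : ∃ c, b = c + 1 := ⟨b - 1, by omega⟩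
    simp only [show (2 * a + 1 + 1) % 2 = 0 from by omega, show (2 * a + 1) % 2 = 1 from by omega,
      show (c + 1 + (c + 1)) % 2 = 0 from by omega,
      show (c + 1 + (c + 1) - 1) % 2 = 1 from by omega,
      show (2 * a + 1 + 1 - 2) / 2 = a from by omega,
      show (2 * a + 1 - 1) / 2 = a from by omega,
      show (c + 1 + (c + 1)) / 2 = c + 1 from by omega,
      show (c + 1 + (c + 1) - 1) / 2 = c from by omega]
    norm_num
  · obtain ⟨c, rfl⟩ : ∃ c, b = c + 1 := ⟨b - 1, by omega⟩
    simp only [show (2 * a + 1 + 1) % 2 = 0 from by omega, show (2 * a + 1) % 2 = 1 from by omega,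
      show (2 * (c + 1) + 1) % 2 = 1 from by omega,
      show (2 * (c + 1) + 1 - 1) % 2 = 0 from by omega,
      show (2 * a + 1 + 1 - 2) / 2 = a from by omega,
      show (2 * a + 1 - 1) / 2 = a from by omega,
      show (2 * (c + 1) + 1) / 2 = c + 1 from by omega,
      show (2 * (c + 1) + 1 - 1) / 2 = c + 1 from by omega]
    norm_num
    omega

lemma R4b {m : ℕ} : Okf (m + 1) 1 = 1 := by
  rcases Nat.even_or_odd m with ⟨a, rfl⟩ | ⟨a, rfl⟩ <;> simp only [Okf]
  · simp only [show (a + a + 1) % 2 = 1 from by omega,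
      show (a + a + 1 - 1) / 2 = a from by omega, show (1 : ℕ) % 2 = 1 from rfl,
      show (1 : ℕ) / 2 = 0 from rfl]
    norm_num
  · simp only [show (2 * a + 1 + 1) % 2 = 0 from by omega,
      show (2 * a + 1 + 1 - 2) / 2 = a from by omega, show (1 : ℕ) % 2 = 1 from rfl,
      show (1 : ℕ) / 2 = 0 from rfl]
    norm_num


lemma pval_one {m j : ℕ} (h : j < m) : pval m (1 : Equiv.Perm (Fin m)) j = j := by
  rw [pval, dif_pos h]
  simp

lemma card_filter_union_split {α : Type*} [DecidableEq α] {s t u : Finset α} (h : s = t ∪ u)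
    (hd : Disjoint t u) (p : α → Prop) [DecidablePred p] :
    (s.filter p).card = (t.filter p).card + (u.filter p).card := by
  subst h
  rw [filter_union,
    card_union_of_disjoint (hd.mono (filter_subset _ _) (filter_subset _ _))]

lemma card_filter_image {α β : Type*} [DecidableEq α] [DecidableEq β] (s : Finset α) (f : α → β)
    (hf : Function.Injective f) (p : β → Prop) [DecidablePred p] :
    ((s.image f).filter p).card = (s.filter (fun a => p (f a))).card := by
  rw [Finset.filter_image, card_image_of_injective _ hf]

theorem master : ∀ m k : ℕ, 1 ≤ k → k < m →
    (((V m k).filter (fun w => pval m w 0 % 2 = 0)).card = N0f m k ∧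
     ((V m k).filter (fun w => pval m w 0 % 2 = 1)).card = O0f m k ∧
     ((V m k).filter (fun w => pval m w k % 2 = 0)).card = Nkf m k ∧
     ((V m k).filter (fun w => pval m w k % 2 = 1)).card = Okf m k) ∧
    ∀ w ∈ V m k, Equiv.Perm.sign w = (-1) ^ (k * pval m w 0) := by
  intro m
  induction m with
  | zero => intro k h1 h2; omega
  | succ n ih =>
    intro k hk1 hklt
    have hkn : k ≤ n := by omega
    classical
    have hU : V (n + 1) k = (V (n + 1) k).filter (fun w => pval (n + 1) w 0 = 0)
        ∪ (V (n + 1) k).filter (fun w => pval (n + 1) w k = 0) := by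
      ext w
      simp only [mem_union, mem_filter]
      constructor
      · intro hw
        exact (zero_cases hk1 hklt hw).imp (fun h => ⟨hw, h⟩) (fun h => ⟨hw, h⟩)
      · tauto
    have hD : Disjoint ((V (n + 1) k).filter (fun w => pval (n + 1) w 0 = 0))
        ((V (n + 1) k).filter (fun w => pval (n + 1) w k = 0)) := by
      rw [Finset.disjoint_left]
      intro w h1 h2
      simp only [mem_filter] at h1 h2
      have := pval_inj w (show 0 < n + 1 by omega) (show k < n + 1 by omega)
        (by rw [h1.2, h2.2])
      omega
    have himgA := imgA hk1 hkn
    have himgB := imgB hk1 hkn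
    -- A1 computations
    have c1a : (((V (n + 1) k).filter (fun w => pval (n + 1) w 0 = 0)).filter
        (fun w => pval (n + 1) w 0 % 2 = 0)).card = (if k = 1 then 1 else N0f n (k - 1)) := by
      rw [himgA, card_filter_image _ _ mapA_injective]
      rw [Finset.filter_congr (fun e _ => by
        simp only [mapA_zero] : ∀ e ∈ (V n (k - 1)).filter
          (fun e => 2 ≤ k → pval n e 0 % 2 = 0),
          (pval (n + 1) (mapA n e) 0 % 2 = 0) ↔ True)]
      rw [Finset.filter_true_of_mem (fun _ _ => trivial)]
      rcases eq_or_lt_of_le hk1 with h1 | h2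
      · rw [if_pos h1.symm, ← h1]
        rw [show (1 : ℕ) - 1 = 0 from rfl, V_eq_one (Or.inl rfl)]
        rw [Finset.filter_singleton, if_pos (by omega)]
        exact Finset.card_singleton _
      · rw [if_neg (by omega)]
        rw [Finset.filter_congr (fun e _ =>
          ⟨fun h => h (by omega), fun h _ => h⟩ : ∀ e ∈ V n (k - 1),
          ((2 ≤ k → pval n e 0 % 2 = 0) ↔ (pval n e 0 % 2 = 0)))]
        exact (ih (k - 1) (by omega) (by omega)).1.1
    have c1b : (((V (n + 1) k).filter (fun w => pval (n + 1) w 0 = 0)).filter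
        (fun w => pval (n + 1) w 0 % 2 = 1)).card = 0 := by
      rw [himgA, card_filter_image _ _ mapA_injective, Finset.card_eq_zero]
      apply Finset.filter_false_of_mem
      intro e _
      rw [mapA_zero]
      omega
    have hk1n : k - 1 < n := by omega
    have hvalk : ∀ e : Equiv.Perm (Fin n), pval (n + 1) (mapA n e) k = pval n e (k - 1) + 1 := by
      intro e
      have h := mapA_succ e hk1n
      rwa [show k - 1 + 1 = k from by omega] at h
    have c1c : (((V (n + 1) k).filter (fun w => pval (n + 1) w 0 = 0)).filter
        (fun w => pval (n + 1) w k % 2 = 0)).card = (if k = 1 then 0 else Okf n (k - 1)) := by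
      rw [himgA, card_filter_image _ _ mapA_injective]
      rw [Finset.filter_filter]
      rcases eq_or_lt_of_le hk1 with h1 | h2
      · subst h1
        rw [if_pos rfl, Finset.card_eq_zero]
        apply Finset.filter_false_of_mem
        intro e he
        rw [V_eq_one (Or.inl rfl)] at he
        rw [mem_singleton] at he
        subst he
        rw [hvalk, pval_one (by omega)]
        omega
      · rw [if_neg (by omega)]
        rw [Finset.filter_congr (fun e he => ?_ : ∀ e ∈ V n (k - 1),
          ((2 ≤ k → pval n e 0 % 2 = 0) ∧ pval (n + 1) (mapA n e) k % 2 = 0)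
            ↔ (pval n e (k - 1) % 2 = 1))]
        · exact (ih (k - 1) (by omega) (by omega)).1.2.2.2
        · rw [hvalk]
          constructor
          · intro h; omega
          · intro hodd
            refine ⟨fun _ => ?_, by omega⟩
            rcases zero_cases (by omega) hk1n he with h0 | hkk
            · omega
            · omega
    -- c1d with the additive identity, only for k ≥ 2
    have c1d_step : 2 ≤ k → (((V (n + 1) k).filter (fun w => pval (n + 1) w 0 = 0)).filter
        (fun w => pval (n + 1) w k % 2 = 1)).card + O0f n (k - 1) = Nkf n (k - 1) := by
      intro h2
      rw [himgA, card_filter_image _ _ mapA_injective, Finset.filter_filter]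
      rw [Finset.filter_congr (fun e he => ?_ : ∀ e ∈ V n (k - 1),
        ((2 ≤ k → pval n e 0 % 2 = 0) ∧ pval (n + 1) (mapA n e) k % 2 = 1)
          ↔ (pval n e 0 % 2 = 0 ∧ pval n e (k - 1) % 2 = 0))]
      · have hXO : Disjoint ((V n (k - 1)).filter
            (fun e => pval n e 0 % 2 = 0 ∧ pval n e (k - 1) % 2 = 0))
            ((V n (k - 1)).filter (fun e => pval n e 0 % 2 = 1)) := by
          rw [Finset.disjoint_left]
          intro e h1 h2'
          simp only [mem_filter] at h1 h2'
          omega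
        have hXU : (V n (k - 1)).filter
            (fun e => pval n e 0 % 2 = 0 ∧ pval n e (k - 1) % 2 = 0)
            ∪ (V n (k - 1)).filter (fun e => pval n e 0 % 2 = 1)
            = (V n (k - 1)).filter (fun e => pval n e (k - 1) % 2 = 0) := by
          ext e
          simp only [mem_union, mem_filter]
          constructor
          · intro h
            rcases h with h | h
            · exact ⟨h.1, h.2.2⟩
            · refine ⟨h.1, ?_⟩
              rcases zero_cases (by omega) hk1n h.1 with h0 | hkk
              · omega
              · omega
          · intro h
            rcases Nat.even_or_odd (pval n e 0) with he0 | he0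
            · left
              rw [Nat.even_iff] at he0
              exact ⟨h.1, he0, h.2⟩
            · right
              rw [Nat.odd_iff] at he0
              exact ⟨h.1, he0⟩
        have hcu := Finset.card_union_of_disjoint hXO
        rw [hXU] at hcu
        have hO := (ih (k - 1) (by omega) (by omega)).1.2.1
        have hN := (ih (k - 1) (by omega) (by omega)).1.2.2.1
        omega
      · rw [hvalk]
        constructor
        · intro h
          exact ⟨h.1 h2, by omega⟩
        · intro h
          exact ⟨fun _ => h.1, by omega⟩
    have c1d1 : k = 1 → (((V (n + 1) k).filter (fun w => pval (n + 1) w 0 = 0)).filter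
        (fun w => pval (n + 1) w k % 2 = 1)).card = 1 := by
      intro h1
      subst h1
      rw [himgA, card_filter_image _ _ mapA_injective, Finset.filter_filter]
      rw [show (1 : ℕ) - 1 = 0 from rfl, V_eq_one (Or.inl rfl)]
      rw [Finset.filter_singleton, if_pos, Finset.card_singleton]
      refine ⟨by omega, ?_⟩
      rw [hvalk, show (1 : ℕ) - 1 = 0 from rfl, pval_one (by omega)]
    -- A2 computations
    have hpfB : k < n + 1 := by omega
    have hv0 : ∀ e : Equiv.Perm (Fin n),
        pval (n + 1) (mapB n k hpfB e) 0 = pval n e 0 + 1 :=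
      fun e => mapB_lt hpfB e (by omega) (by omega)
    have c2a : (((V (n + 1) k).filter (fun w => pval (n + 1) w k = 0)).filter
        (fun w => pval (n + 1) w 0 % 2 = 0)).card = (if k = n then 0 else O0f n k) := by
      rw [himgB, card_filter_image _ _ (mapB_injective _), Finset.filter_filter]
      by_cases hkeq : k = n
      · subst hkeq
        rw [if_pos rfl, V_eq_one (Or.inr le_rfl), Finset.filter_singleton, if_neg, card_empty]
        rintro ⟨-, h⟩
        rw [hv0, pval_one (by omega)] at h
        omega
      · have hkn' : k < n := lt_of_le_of_ne hkn hkeq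
        rw [if_neg hkeq]
        rw [Finset.filter_congr (fun e he => ?_ : ∀ e ∈ V n k,
          ((k < n → pval n e k % 2 = 0) ∧ pval (n + 1) (mapB n k hpfB e) 0 % 2 = 0)
            ↔ (pval n e 0 % 2 = 1))]
        · exact (ih k hk1 hkn').1.2.1
        · rw [hv0]
          constructor
          · intro h; omega
          · intro hodd
            refine ⟨fun _ => ?_, by omega⟩
            rcases zero_cases hk1 hkn' he with h0 | hkk <;> omega
    have c2b_step : k < n → (((V (n + 1) k).filter (fun w => pval (n + 1) w k = 0)).filter
        (fun w => pval (n + 1) w 0 % 2 = 1)).card + Okf n k = N0f n k := by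
      intro hkn'
      rw [himgB, card_filter_image _ _ (mapB_injective _), Finset.filter_filter]
      rw [Finset.filter_congr (fun e he => ?_ : ∀ e ∈ V n k,
        ((k < n → pval n e k % 2 = 0) ∧ pval (n + 1) (mapB n k hpfB e) 0 % 2 = 1)
          ↔ (pval n e 0 % 2 = 0 ∧ pval n e k % 2 = 0))]
      · have hXO : Disjoint ((V n k).filter
            (fun e => pval n e 0 % 2 = 0 ∧ pval n e k % 2 = 0))
            ((V n k).filter (fun e => pval n e k % 2 = 1)) := by
          rw [Finset.disjoint_left]
          intro e h1 h2'
          simp only [mem_filter] at h1 h2'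
          omega
        have hXU : (V n k).filter (fun e => pval n e 0 % 2 = 0 ∧ pval n e k % 2 = 0)
            ∪ (V n k).filter (fun e => pval n e k % 2 = 1)
            = (V n k).filter (fun e => pval n e 0 % 2 = 0) := by
          ext e
          simp only [mem_union, mem_filter]
          constructor
          · intro h
            rcases h with h | h
            · exact ⟨h.1, h.2.1⟩
            · refine ⟨h.1, ?_⟩
              rcases zero_cases hk1 hkn' h.1 with h0 | hkk <;> omega
          · intro h
            rcases Nat.even_or_odd (pval n e k) with hek | hek
            · rw [Nat.even_iff] at hek
              exact Or.inl ⟨h.1, h.2, hek⟩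
            · rw [Nat.odd_iff] at hek
              exact Or.inr ⟨h.1, hek⟩
        have hcu := Finset.card_union_of_disjoint hXO
        rw [hXU] at hcu
        have hO := (ih k hk1 hkn').1.1
        have hN := (ih k hk1 hkn').1.2.2.2
        omega
      · rw [hv0]
        constructor
        · intro h
          refine ⟨by omega, h.1 hkn'⟩
        · intro h
          exact ⟨fun _ => h.2, by omega⟩
    have c2b_n : k = n → (((V (n + 1) k).filter (fun w => pval (n + 1) w k = 0)).filter
        (fun w => pval (n + 1) w 0 % 2 = 1)).card = 1 := by
      intro hkeq
      subst hkeq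
      rw [himgB, card_filter_image _ _ (mapB_injective _), Finset.filter_filter]
      rw [V_eq_one (Or.inr le_rfl), Finset.filter_singleton, if_pos, card_singleton]
      refine ⟨fun h => absurd h (lt_irrefl _), ?_⟩
      rw [hv0, pval_one (by omega)]
    have c2c : (((V (n + 1) k).filter (fun w => pval (n + 1) w k = 0)).filter
        (fun w => pval (n + 1) w k % 2 = 0)).card = (if k = n then 1 else Nkf n k) := by
      rw [himgB, card_filter_image _ _ (mapB_injective _), Finset.filter_filter]
      by_cases hkeq : k = n
      · subst hkeq
        rw [if_pos rfl, V_eq_one (Or.inr le_rfl), Finset.filter_singleton, if_pos, card_singleton]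
        refine ⟨fun h => absurd h (lt_irrefl _), ?_⟩
        rw [mapB_self]
      · have hkn' : k < n := lt_of_le_of_ne hkn hkeq
        rw [if_neg hkeq]
        rw [Finset.filter_congr (fun e he => ?_ : ∀ e ∈ V n k,
          ((k < n → pval n e k % 2 = 0) ∧ pval (n + 1) (mapB n k hpfB e) k % 2 = 0)
            ↔ (pval n e k % 2 = 0))]
        · exact (ih k hk1 hkn').1.2.2.1
        · rw [mapB_self]
          constructor
          · intro h; exact h.1 hkn'
          · intro h; exact ⟨fun _ => h, by omega⟩
    have c2d : (((V (n + 1) k).filter (fun w => pval (n + 1) w k = 0)).filter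
        (fun w => pval (n + 1) w k % 2 = 1)).card = 0 := by
      rw [himgB, card_filter_image _ _ (mapB_injective _), Finset.filter_filter,
        Finset.card_eq_zero]
      apply Finset.filter_false_of_mem
      intro e _
      rw [mapB_self]
      omega
    refine ⟨⟨?_, ?_, ?_, ?_⟩, ?_⟩
    · rw [card_filter_union_split hU hD, c1a, c2a, R1 hk1 hkn]
    · rw [card_filter_union_split hU hD, c1b, zero_add]
      by_cases hkeq : k = n
      · rw [c2b_n hkeq, hkeq, R2b (by omega)]
      · have hkn' : k < n := lt_of_le_of_ne hkn hkeq
        have h1 := c2b_step hkn'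
        have h2 := R2a hk1 hkn'
        omega
    · rw [card_filter_union_split hU hD, c1c, c2c, R3 hk1 hkn]
    · rw [card_filter_union_split hU hD, c2d, add_zero]
      rcases eq_or_lt_of_le hk1 with h1 | h2
      · rw [c1d1 h1.symm, ← h1, R4b]
      · have h3 := c1d_step h2
        have h4 := R4a h2 hkn
        omega
    · -- sign
      intro w hw
      rcases zero_cases hk1 hklt hw with h0 | hk0
      · have hw1 : w ∈ (V (n + 1) k).filter (fun w => pval (n + 1) w 0 = 0) :=
          mem_filter.2 ⟨hw, h0⟩
        rw [himgA] at hw1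
        obtain ⟨e, he, rfl⟩ := Finset.mem_image.1 hw1
        rw [mapA_zero, mul_zero, pow_zero, sign_mapA]
        rcases eq_or_lt_of_le hk1 with h1 | h2
        · have heV := (mem_filter.1 he).1
          rw [← h1, show (1 : ℕ) - 1 = 0 from rfl, V_eq_one (Or.inl rfl), mem_singleton] at heV
          rw [heV, map_one]
        · have heV := (mem_filter.1 he).1
          have hmark := (mem_filter.1 he).2 h2
          rw [(ih (k - 1) (by omega) (by omega)).2 e heV]
          exact Even.neg_one_pow ((Nat.even_iff.2 hmark).mul_left _)
      · have hw2 : w ∈ (V (n + 1) k).filter (fun w => pval (n + 1) w k = 0) :=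
          mem_filter.2 ⟨hw, hk0⟩
        rw [himgB] at hw2
        obtain ⟨e, he, rfl⟩ := Finset.mem_image.1 hw2
        rw [sign_mapB, hv0]
        by_cases hkeq : k = n
        · have heV := (mem_filter.1 he).1
          rw [hkeq, V_eq_one (Or.inr le_rfl), mem_singleton] at heV
          rw [heV, map_one, one_mul, pval_one (by omega), zero_add, mul_one]
        · have hkn' : k < n := lt_of_le_of_ne hkn hkeq
          have heV := (mem_filter.1 he).1
          rw [(ih k hk1 hkn').2 e heV, ← pow_add,
            show k * pval n e 0 + k = k * (pval n e 0 + 1) from by ring]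


lemma sum_sign (m k : ℕ) (hk1 : 1 ≤ k) (hkm : k < m) :
    ∑ w ∈ V m k, (Equiv.Perm.sign w : ℤ) =
      (N0f m k : ℤ) + (-1) ^ k * (O0f m k : ℤ) := by
  classical
  have key : ∀ w ∈ V m k, ((Equiv.Perm.sign w : ℤˣ) : ℤ) = (-1 : ℤ) ^ (k * pval m w 0) := by
    intro w hw
    rw [(master m k hk1 hkm).2 w hw]
    push_cast
    ring
  rw [← Finset.sum_filter_add_sum_filter_not (V m k) (fun w => pval m w 0 % 2 = 0)]
  have h1 : ∑ w ∈ (V m k).filter (fun w => pval m w 0 % 2 = 0), (Equiv.Perm.sign w : ℤ)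
      = (N0f m k : ℤ) := by
    have hterm : ∀ w ∈ (V m k).filter (fun w => pval m w 0 % 2 = 0),
        ((Equiv.Perm.sign w : ℤˣ) : ℤ) = 1 := by
      intro w hw
      rw [mem_filter] at hw
      rw [key w hw.1]
      exact Even.neg_one_pow ((Nat.even_iff.2 hw.2).mul_left _)
    rw [Finset.sum_congr rfl hterm, Finset.sum_const, ← (master m k hk1 hkm).1.1]
    simp
  have h2 : ∑ w ∈ (V m k).filter (fun w => ¬pval m w 0 % 2 = 0), (Equiv.Perm.sign w : ℤ)
      = (-1) ^ k * (O0f m k : ℤ) := by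
    rw [Finset.filter_congr (fun w _ => by omega : ∀ w ∈ V m k,
      (¬pval m w 0 % 2 = 0) ↔ (pval m w 0 % 2 = 1))]
    have hterm : ∀ w ∈ (V m k).filter (fun w => pval m w 0 % 2 = 1),
        ((Equiv.Perm.sign w : ℤˣ) : ℤ) = (-1) ^ k := by
      intro w hw
      rw [mem_filter] at hw
      rw [key w hw.1]
      have hp : Odd (pval m w 0) := Nat.odd_iff.2 hw.2
      rcases Nat.even_or_odd k with hke | hko
      · rw [Even.neg_one_pow (hke.mul_right _), Even.neg_one_pow hke]
      · rw [Odd.neg_one_pow (hko.mul hp), Odd.neg_one_pow hko]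
    rw [Finset.sum_congr rfl hterm, Finset.sum_const, ← (master m k hk1 hkm).1.2.1]
    simp [mul_comm]
  rw [h1, h2]

lemma hzero {l k : ℕ} (hk1 : 1 ≤ k) (hk2 : k ≤ l) (hl : Odd l) (hk : Odd k) :
    (N0f (l + 1) k : ℤ) + (-1) ^ k * (O0f (l + 1) k : ℤ) = 0 := by
  rw [hk.neg_one_pow]
  suffices h : N0f (l + 1) k = O0f (l + 1) k by rw [h]; ring
  obtain ⟨a, rfl⟩ := hl
  obtain ⟨b, rfl⟩ := hk
  simp only [N0f, O0f,
    show (2 * a + 1 + 1) % 2 = 0 from by omega, show (2 * b + 1) % 2 = 1 from by omega,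
    show (2 * a + 1 + 1 - 2) / 2 = a from by omega, show (2 * b + 1) / 2 = b from by omega]
  norm_num

lemma hval {l k : ℕ} (hk1 : 1 ≤ k) (hk2 : k ≤ l) (h : ¬(Odd l ∧ Odd k)) :
    (N0f (l + 1) k : ℤ) + (-1) ^ k * (O0f (l + 1) k : ℤ)
      = 2 * (Nat.choose ((l + 1) / 2) (k / 2) : ℤ) := by
  rcases Nat.even_or_odd k with hk | hk
  · rw [hk.neg_one_pow, one_mul]
    have : N0f (l + 1) k + O0f (l + 1) k = 2 * Nat.choose ((l + 1) / 2) (k / 2) := by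
      obtain ⟨b, rfl⟩ := hk
      have hb : 1 ≤ b := by omega
      rcases Nat.even_or_odd l with ⟨a, rfl⟩ | ⟨a, rfl⟩
      · -- l = a + a even, m = l+1 odd
        simp only [N0f, O0f, show (a + a + 1) % 2 = 1 from by omega,
          show (b + b) % 2 = 0 from by omega,
          show (a + a + 1 - 1) / 2 = a from by omega,
          show (b + b) / 2 = b from by omega,
          show (a + a + 1) / 2 = a from by omega]
        norm_num
        omega
      · -- l = 2a+1 odd, m even
        simp only [N0f, O0f, show (2 * a + 1 + 1) % 2 = 0 from by omega,
          show (b + b) % 2 = 0 from by omega,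
          show (2 * a + 1 + 1 - 2) / 2 = a from by omega,
          show (b + b) / 2 = b from by omega,
          show (2 * a + 1 + 1) / 2 = a + 1 from by omega]
        norm_num
        obtain ⟨c, rfl⟩ : ∃ c, b = c + 1 := ⟨b - 1, by omega⟩
        rw [show c + 1 - 1 = c from rfl, pascal a c]
        ring
    have hcast : (N0f (l + 1) k : ℤ) + (O0f (l + 1) k : ℤ)
        = ((N0f (l + 1) k + O0f (l + 1) k : ℕ) : ℤ) := by push_cast; ring
    rw [hcast, this]
    push_cast
    ring
  · -- k odd, so l must be even
    have hl : Even l := by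
      rcases Nat.even_or_odd l with h' | h'
      · exact h'
      · exact absurd ⟨h', hk⟩ h
    rw [hk.neg_one_pow]
    obtain ⟨a, rfl⟩ := hl
    obtain ⟨b, rfl⟩ := hk
    have : N0f (a + a + 1) (2 * b + 1) = 2 * Nat.choose ((a + a + 1) / 2) ((2 * b + 1) / 2)
        ∧ O0f (a + a + 1) (2 * b + 1) = 0 := by
      simp only [N0f, O0f, show (a + a + 1) % 2 = 1 from by omega,
        show (2 * b + 1) % 2 = 1 from by omega,
        show (a + a + 1 - 1) / 2 = a from by omega,
        show (a + a + 1) / 2 = a from by omega]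
      norm_num
    rw [this.1, this.2]
    push_cast
    ring

end CK


/-- The set `W⁻_[J] ⊆ S_{l+1}`: permutations `w` of `{0,1,…,l}` such that for every
simple root `j ∈ {1,…,l}∖J` (represented by `i : Fin l`, root `j = i+1`) one has
`w(j-1) < w(j)` and `w(j-1) + w(j)` is odd. -/
def Wminus (l : ℕ) (J : Finset (Fin l)) : Finset (Equiv.Perm (Fin (l + 1))) :=
  Finset.univ.filter fun w => ∀ i : Fin l, i ∉ J →
    (w i.castSucc < w i.succ ∧ Odd ((w i.castSucc : ℕ) + (w i.succ : ℕ)))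


namespace CK

lemma wminus_eq {l k : ℕ} (hk1 : 1 ≤ k) (hk2 : k ≤ l) (h : k - 1 < l) :
    Wminus l {(⟨k - 1, h⟩ : Fin l)} = V (l + 1) k := by
  classical
  ext w
  rw [mem_V]
  simp only [Wminus, Finset.mem_filter, Finset.mem_univ, true_and, Finset.mem_singleton]
  constructor
  · intro hyp j hj hjk
    have hjl : j < l := by omega
    have hne : (⟨j, hjl⟩ : Fin l) ≠ ⟨k - 1, h⟩ := by
      intro hcon
      have := congrArg Fin.val hcon
      simp at this
      omega
    obtain ⟨hlt, hodd⟩ := hyp ⟨j, hjl⟩ hne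
    have e1 : (⟨j, hjl⟩ : Fin l).castSucc = (⟨j, by omega⟩ : Fin (l + 1)) := rfl
    have e2 : (⟨j, hjl⟩ : Fin l).succ = (⟨j + 1, hj⟩ : Fin (l + 1)) := rfl
    rw [e1, e2] at hlt hodd
    rw [pval, dif_pos (show j < l + 1 by omega), pval, dif_pos hj]
    rw [Nat.odd_iff] at hodd
    exact ⟨hlt, hodd⟩
  · intro hyp i hi
    have hne : (i : ℕ) + 1 ≠ k := by
      intro hcon
      apply hi
      apply Fin.ext
      show (i : ℕ) = k - 1
      omega
    obtain ⟨hlt, hodd⟩ := hyp (i : ℕ) (by omega) hne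
    rw [pval, dif_pos (show (i : ℕ) < l + 1 by omega),
      pval, dif_pos (show (i : ℕ) + 1 < l + 1 by omega)] at hlt hodd
    have e1 : (⟨(i : ℕ), by omega⟩ : Fin (l + 1)) = i.castSucc := Fin.ext rfl
    have e2 : (⟨(i : ℕ) + 1, by omega⟩ : Fin (l + 1)) = i.succ := Fin.ext rfl
    rw [e1, e2] at hlt hodd
    exact ⟨hlt, Nat.odd_iff.2 hodd⟩

end CK


/-- **Casian–Kodama, Lemma 4.7 + Proposition 5.4 (type A incidence numbers)**: for
`1 ≤ k ≤ l`, if `l` and `k` are both odd then `Σ_{w ∈ W⁻_[{α_k}]} sgn(w) = 0`;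
otherwise `|Σ_{w ∈ W⁻_[{α_k}]} sgn(w)| = 2·C(⌊(l+1)/2⌋, ⌊k/2⌋)`.  Consequently the
incidence number `[∅;{α_k}] = (−1)^{k−1}·|Σ sgn(w)|` equals
`((−1)^{k−1} − 1)·C((l+1)/2, ⌊k/2⌋)` for `l` odd and `2·(−1)^{k−1}·C(l/2, ⌊k/2⌋)`
for `l` even. -/
theorem incidence_from_top_typeA (l k : ℕ) (hk1 : 1 ≤ k) (hk2 : k ≤ l) :
    (Odd l → Odd k →
      ∑ w ∈ Wminus l {(⟨k - 1, by omega⟩ : Fin l)}, (Equiv.Perm.sign w : ℤ) = 0) ∧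
    (¬(Odd l ∧ Odd k) →
      (∑ w ∈ Wminus l {(⟨k - 1, by omega⟩ : Fin l)}, (Equiv.Perm.sign w : ℤ)).natAbs =
        2 * Nat.choose ((l + 1) / 2) (k / 2)) ∧
    (Odd l →
      ((-1 : ℤ) ^ (k - 1)) *
        ((∑ w ∈ Wminus l {(⟨k - 1, by omega⟩ : Fin l)},
            (Equiv.Perm.sign w : ℤ)).natAbs : ℤ) =
        ((-1 : ℤ) ^ (k - 1) - 1) * (Nat.choose ((l + 1) / 2) (k / 2) : ℤ)) ∧
    (Even l →
      ((-1 : ℤ) ^ (k - 1)) *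
        ((∑ w ∈ Wminus l {(⟨k - 1, by omega⟩ : Fin l)},
            (Equiv.Perm.sign w : ℤ)).natAbs : ℤ) =
        2 * (-1 : ℤ) ^ (k - 1) * (Nat.choose (l / 2) (k / 2) : ℤ)) := by
  have hWV := CK.wminus_eq hk1 hk2 (show k - 1 < l by omega)
  rw [hWV, CK.sum_sign (l + 1) k hk1 (by omega)]
  have habs : ¬(Odd l ∧ Odd k) →
      ((CK.N0f (l + 1) k : ℤ) + (-1) ^ k * (CK.O0f (l + 1) k : ℤ)).natAbs
        = 2 * Nat.choose ((l + 1) / 2) (k / 2) := by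
    intro h
    rw [CK.hval hk1 hk2 h]
    rw [show (2 : ℤ) * (Nat.choose ((l + 1) / 2) (k / 2) : ℤ)
      = ((2 * Nat.choose ((l + 1) / 2) (k / 2) : ℕ) : ℤ) from by push_cast; ring]
    exact Int.natAbs_natCast _
  refine ⟨fun hl hk => CK.hzero hk1 hk2 hl hk, habs, ?_, ?_⟩
  · intro hl
    by_cases hk : Odd k
    · rw [CK.hzero hk1 hk2 hl hk]
      have hk2' : k % 2 = 1 := Nat.odd_iff.1 hk
      have : Even (k - 1) := Nat.even_iff.2 (by omega)
      rw [Even.neg_one_pow this]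
      simp
    · rw [habs (by tauto)]
      have hke : k % 2 = 0 := Nat.even_iff.1 (Nat.not_odd_iff_even.1 hk)
      have hko : Odd (k - 1) := Nat.odd_iff.2 (by omega)
      rw [Odd.neg_one_pow hko]
      push_cast
      ring
  · intro hl
    have hnl : ¬(Odd l ∧ Odd k) := fun hcon => (Nat.not_odd_iff_even.2 hl) hcon.1
    rw [habs hnl]
    have : (l + 1) / 2 = l / 2 := by
      obtain ⟨a, rfl⟩ := hl
      omega
    rw [this]
    push_cast
    ring
end

section
/- For the Toda chain complex (C_•, ∂) of type A_l: (i) for every l ≥ 2, H_l(C_•) = 0 (i.e. the compactified isospectral variety of the nilpotent sl(l+1,ℝ) Toda lattice is nonorientable); (ii) if l is even and l ≥ 4, then H_{l−1}(C_•) ≅ ℤ/2ℤ; (iii) if l = 2p−1 with p a prime number, then H_{l−1}(C_•) = H_{2p−2}(C_•) ≅ ℤ/2pℤ. -/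
/-! The type-A incidence numbers and the integral Toda chain complex. -/

/-- `n1 l J i`: the number of elements of the connected component of `i` in the
complement of `J` (maximal run of consecutive indices avoiding `J`) that are smaller
than `i`.  Here `Fin l` represents the simple roots `{1,…,l}` (index `i` ↦ root `i+1`). -/
def n1 (l : ℕ) (J : Finset (Fin l)) (i : Fin l) : ℕ :=
  (Finset.univ.filter (fun j : Fin l => j < i ∧ ∀ k : Fin l, j ≤ k → k ≤ i → k ∉ J)).card

/-- `n2 l J i`: the number of elements of the connected component of `i` in the
complement of `J` that are larger than `i`. -/
def n2 (l : ℕ) (J : Finset (Fin l)) (i : Fin l) : ℕ :=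
  (Finset.univ.filter (fun j : Fin l => i < j ∧ ∀ k : Fin l, i ≤ k → k ≤ j → k ∉ J)).card

/-- `nu l J i = ν(J; J∪{i})`: the number of `j ∉ J` with `j < i`. -/
def nu (l : ℕ) (J : Finset (Fin l)) (i : Fin l) : ℕ :=
  (Finset.univ.filter (fun j : Fin l => j < i ∧ j ∉ J)).card

/-- The incidence number `[J ; J ∪ {i}]` of the type-`A_l` Toda chain complex. -/
def incA (l : ℕ) (J : Finset (Fin l)) (i : Fin l) : ℤ :=
  if Odd (n1 l J i + n2 l J i + 1) ∧ Odd (n1 l J i + 1) then 0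
  else (-1) ^ (nu l J i) * 2 *
    (((n1 l J i + n2 l J i + 2) / 2).choose ((n1 l J i + 1) / 2) : ℤ)

/-- The chain group in degree `q` with coefficients in `R`; for `R = ℤ` this is the
free ℤ-module on the subsets `J ⊆ {1,…,l}` with `|J| = l - q`. -/
abbrev Chain (R : Type) [CommRing R] (l q : ℕ) : Type :=
  {J : Finset (Fin l) // J.card + q = l} → R

/-- `J ∖ {i}` for `i ∈ J`, as an element of the index set one degree higher. -/
def ersElt (l q : ℕ) (J : {J : Finset (Fin l) // J.card + q = l})
    (i : {x : Fin l // x ∈ J.1}) : {J' : Finset (Fin l) // J'.card + (q + 1) = l} :=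
  ⟨J.1.erase i.1, by
    have hJ := J.2
    have h1 : 1 ≤ J.1.card := Finset.card_pos.mpr ⟨i.1, i.2⟩
    rw [Finset.card_erase_of_mem i.2]; omega⟩

/-- `(∂f)(J) = Σ_{i ∈ J} [J∖{i} ; J] · f(J∖{i})`: the boundary map `∂ : C_{q+1} → C_q`,
i.e. the linear extension of `∂⟨K⟩ = Σ_{i∉K} [K;K∪{i}] ⟨K∪{i}⟩` on generators. -/
def bdryFun (R : Type) [CommRing R] (l : ℕ) (inc : Finset (Fin l) → Fin l → ℤ) (q : ℕ)
    (f : Chain R l (q + 1)) : Chain R l q :=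
  fun J => ∑ i ∈ J.1.attach, (inc (J.1.erase i.1) i.1 : R) * f (ersElt l q J i)

/-- The boundary map `∂ : C_{q+1} → C_q` as a linear map. -/
def bdry (R : Type) [CommRing R] (l : ℕ) (inc : Finset (Fin l) → Fin l → ℤ) (q : ℕ) :
    Chain R l (q + 1) →ₗ[R] Chain R l q where
  toFun := bdryFun R l inc q
  map_add' f g := by
    funext J
    simp [bdryFun, mul_add, Finset.sum_add_distrib]
  map_smul' c f := by
    funext J
    simp [bdryFun, Finset.mul_sum, mul_left_comm]


open Finset

lemma n1_empty (l : ℕ) (i : Fin l) : n1 l ∅ i = i.val := by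
  unfold n1
  have h : univ.filter (fun j : Fin l => j < i ∧ ∀ k : Fin l, j ≤ k → k ≤ i →
      k ∉ (∅ : Finset (Fin l))) = Finset.Iio i := by
    ext x; simp
  rw [h, Fin.card_Iio]

lemma n2_empty (l : ℕ) (i : Fin l) : n2 l ∅ i = l - 1 - i.val := by
  unfold n2
  have h : univ.filter (fun j : Fin l => i < j ∧ ∀ k : Fin l, i ≤ k → k ≤ j →
      k ∉ (∅ : Finset (Fin l))) = Finset.Ioi i := by
    ext x; simp
  rw [h, Fin.card_Ioi]

lemma nu_empty (l : ℕ) (i : Fin l) : nu l ∅ i = i.val := by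
  unfold nu
  have h : univ.filter (fun j : Fin l => j < i ∧ j ∉ (∅ : Finset (Fin l))) = Finset.Iio i := by
    ext x; simp
  rw [h, Fin.card_Iio]

lemma n1_single_lt (l : ℕ) (i j : Fin l) (hij : i < j) : n1 l {j} i = i.val := by
  unfold n1
  have h : univ.filter (fun x : Fin l => x < i ∧ ∀ k : Fin l, x ≤ k → k ≤ i →
      k ∉ ({j} : Finset (Fin l))) = Finset.Iio i := by
    ext x
    simp only [mem_filter, mem_univ, true_and, Finset.mem_Iio, Finset.mem_singleton]
    constructor
    · rintro ⟨h1, _⟩; exact h1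
    · intro h1
      refine ⟨h1, fun k _ hk2 hk3 => ?_⟩
      subst hk3; exact absurd (lt_of_le_of_lt hk2 hij) (lt_irrefl _)
  rw [h, Fin.card_Iio]

lemma n2_single_lt (l : ℕ) (i j : Fin l) (hij : i < j) :
    n2 l {j} i = j.val - i.val - 1 := by
  unfold n2
  have h : univ.filter (fun x : Fin l => i < x ∧ ∀ k : Fin l, i ≤ k → k ≤ x →
      k ∉ ({j} : Finset (Fin l))) = Finset.Ioo i j := by
    ext x
    simp only [mem_filter, mem_univ, true_and, Finset.mem_Ioo, Finset.mem_singleton]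
    constructor
    · rintro ⟨h1, h2⟩
      refine ⟨h1, ?_⟩
      by_contra hx
      exact h2 j (le_of_lt hij) (not_lt.mp hx) rfl
    · rintro ⟨h1, h2⟩
      refine ⟨h1, fun k _ hk2 hk3 => ?_⟩
      subst hk3; exact absurd (lt_of_le_of_lt hk2 h2) (lt_irrefl _)
  rw [h, Fin.card_Ioo]

lemma nu_single_lt (l : ℕ) (i j : Fin l) (hij : i < j) : nu l {j} i = i.val := by
  unfold nu
  have h : univ.filter (fun x : Fin l => x < i ∧ x ∉ ({j} : Finset (Fin l))) =
      Finset.Iio i := by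
    ext x
    simp only [mem_filter, mem_univ, true_and, Finset.mem_Iio, Finset.mem_singleton]
    constructor
    · rintro ⟨h1, _⟩; exact h1
    · intro h1
      exact ⟨h1, fun hx => absurd (hx ▸ h1) (not_lt.mpr (le_of_lt hij))⟩
  rw [h, Fin.card_Iio]

lemma n1_single_gt (l : ℕ) (i j : Fin l) (hji : j < i) :
    n1 l {j} i = i.val - j.val - 1 := by
  unfold n1
  have h : univ.filter (fun x : Fin l => x < i ∧ ∀ k : Fin l, x ≤ k → k ≤ i →
      k ∉ ({j} : Finset (Fin l))) = Finset.Ioo j i := by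
    ext x
    simp only [mem_filter, mem_univ, true_and, Finset.mem_Ioo, Finset.mem_singleton]
    constructor
    · rintro ⟨h1, h2⟩
      refine ⟨?_, h1⟩
      by_contra hx
      exact h2 j (not_lt.mp hx) (le_of_lt hji) rfl
    · rintro ⟨h1, h2⟩
      refine ⟨h2, fun k hk1 _ hk3 => ?_⟩
      subst hk3; exact absurd (lt_of_lt_of_le h1 hk1) (lt_irrefl _)
  rw [h, Fin.card_Ioo]

lemma n2_single_gt (l : ℕ) (i j : Fin l) (hji : j < i) :
    n2 l {j} i = l - 1 - i.val := by
  unfold n2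
  have h : univ.filter (fun x : Fin l => i < x ∧ ∀ k : Fin l, i ≤ k → k ≤ x →
      k ∉ ({j} : Finset (Fin l))) = Finset.Ioi i := by
    ext x
    simp only [mem_filter, mem_univ, true_and, Finset.mem_Ioi, Finset.mem_singleton]
    constructor
    · rintro ⟨h1, _⟩; exact h1
    · intro h1
      refine ⟨h1, fun k hk1 _ hk3 => ?_⟩
      subst hk3; exact absurd (lt_of_lt_of_le hji hk1) (lt_irrefl _)
  rw [h, Fin.card_Ioi]

lemma nu_single_gt (l : ℕ) (i j : Fin l) (hji : j < i) : nu l {j} i = i.val - 1 := by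
  unfold nu
  have h : univ.filter (fun x : Fin l => x < i ∧ x ∉ ({j} : Finset (Fin l))) =
      (Finset.Iio i).erase j := by
    ext x
    simp only [mem_filter, mem_univ, true_and, Finset.mem_erase, Finset.mem_Iio,
      Finset.mem_singleton]
    tauto
  rw [h, Finset.card_erase_of_mem (by simpa using hji), Fin.card_Iio]

lemma incA_empty (l : ℕ) (i : Fin l) :
    incA l ∅ i = if Odd l ∧ Odd (i.val + 1) then 0
      else (-1) ^ i.val * 2 * (((l + 1) / 2).choose ((i.val + 1) / 2) : ℤ) := by
  have hi := i.isLt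
  rw [incA, n1_empty, n2_empty, nu_empty]
  have e1 : i.val + (l - 1 - i.val) + 1 = l := by omega
  have e2 : i.val + (l - 1 - i.val) + 2 = l + 1 := by omega
  rw [e1, e2]

lemma incA_single_lt (l : ℕ) (i j : Fin l) (hij : i < j) :
    incA l {j} i = if Odd j.val ∧ Odd (i.val + 1) then 0
      else (-1) ^ i.val * 2 * (((j.val + 1) / 2).choose ((i.val + 1) / 2) : ℤ) := by
  have hij' : i.val < j.val := hij
  rw [incA, n1_single_lt l i j hij, n2_single_lt l i j hij, nu_single_lt l i j hij]
  have e1 : i.val + (j.val - i.val - 1) + 1 = j.val := by omega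
  have e2 : i.val + (j.val - i.val - 1) + 2 = j.val + 1 := by omega
  rw [e1, e2]

lemma incA_single_gt (l : ℕ) (i j : Fin l) (hji : j < i) :
    incA l {j} i = if Odd (l - 1 - j.val) ∧ Odd (i.val - j.val) then 0
      else (-1) ^ (i.val - 1) * 2 *
        (((l - j.val) / 2).choose ((i.val - j.val) / 2) : ℤ) := by
  have hji' : j.val < i.val := hji
  have hi := i.isLt
  rw [incA, n1_single_gt l i j hji, n2_single_gt l i j hji, nu_single_gt l i j hji]
  have e1 : i.val - j.val - 1 + (l - 1 - i.val) + 1 = l - 1 - j.val := by omega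
  have e2 : i.val - j.val - 1 + (l - 1 - i.val) + 2 = l - j.val := by omega
  have e3 : i.val - j.val - 1 + 1 = i.val - j.val := by omega
  rw [e1, e2, e3]

def sIdx {l : ℕ} (m : ℕ) (hlm : l = m + 2) (i : Fin l) :
    {J : Finset (Fin l) // J.card + (m + 1) = l} :=
  ⟨{i}, by rw [Finset.card_singleton]; omega⟩

def eIdx {l : ℕ} (m : ℕ) (hlm : l = m + 2) : {J : Finset (Fin l) // J.card + (m + 2) = l} :=
  ⟨∅, by rw [Finset.card_empty]; omega⟩

def pIdx {l : ℕ} (m : ℕ) (hlm : l = m + 2) (i j : Fin l) (hij : i ≠ j) :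
    {J : Finset (Fin l) // J.card + m = l} :=
  ⟨{i, j}, by
    rw [Finset.card_insert_of_notMem (by simpa using hij), Finset.card_singleton]; omega⟩

lemma term_eq {l q : ℕ} (inc : Finset (Fin l) → Fin l → ℤ) (f : Chain ℤ l (q + 1))
    (J : {J : Finset (Fin l) // J.card + q = l}) (x : {y // y ∈ J.1})
    (K : {J' : Finset (Fin l) // J'.card + (q + 1) = l}) (hE : J.1.erase x.1 = K.1) :
    (inc (J.1.erase x.1) x.1 : ℤ) * f (ersElt l q J x) = inc K.1 x.1 * f K := by
  have h2 : ersElt l q J x = K := Subtype.ext hE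
  rw [h2, hE]

lemma attach_pair {l : ℕ} (i j : Fin l) (hij : i ≠ j) :
    ({i, j} : Finset (Fin l)).attach =
      {⟨i, by simp⟩, ⟨j, by simp⟩} := by
  ext x
  simp only [Finset.mem_attach, true_iff, Finset.mem_insert, Finset.mem_singleton]
  rcases Finset.mem_insert.mp x.2 with h | h
  · left; exact Subtype.ext h
  · right; exact Subtype.ext (Finset.mem_singleton.mp h)

lemma attach_single {l : ℕ} (i : Fin l) :
    ({i} : Finset (Fin l)).attach = {⟨i, Finset.mem_singleton_self i⟩} := by
  ext x
  simp only [Finset.mem_attach, true_iff, Finset.mem_singleton]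
  exact Subtype.ext (Finset.mem_singleton.mp x.2)

lemma bdry_pair_apply {l m : ℕ} (hlm : l = m + 2) (f : Chain ℤ l (m + 1)) (i j : Fin l)
    (hij : i < j) :
    bdry ℤ l (incA l) m f (pIdx m hlm i j (ne_of_lt hij)) =
      incA l {j} i * f (sIdx m hlm j) + incA l {i} j * f (sIdx m hlm i) := by
  have hne : i ≠ j := ne_of_lt hij
  rw [show (bdry ℤ l (incA l) m) f = bdryFun ℤ l (incA l) m f from rfl, bdryFun]
  have hP : (pIdx m hlm i j hne).1 = ({i, j} : Finset (Fin l)) := rfl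
  have e1 : ({i, j} : Finset (Fin l)).erase i = {j} :=
    Finset.erase_insert (by simpa using hne)
  have e2 : ({i, j} : Finset (Fin l)).erase j = {i} := by
    rw [Finset.erase_insert_of_ne hne, Finset.erase_singleton]
    rfl
  rw [show (pIdx m hlm i j hne).1.attach = {⟨i, by rw [hP]; simp⟩, ⟨j, by rw [hP]; simp⟩}
    from attach_pair i j hne]
  rw [Finset.sum_pair (by intro h; exact hne (congrArg Subtype.val h))]
  exact congrArg₂ (· + ·)
    (term_eq (incA l) f _ _ (sIdx m hlm j) e1)
    (term_eq (incA l) f _ _ (sIdx m hlm i) e2)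

lemma bdry_top_apply {l m : ℕ} (hlm : l = m + 2) (g : Chain ℤ l (m + 2)) (i : Fin l) :
    bdry ℤ l (incA l) (m + 1) g (sIdx m hlm i) = incA l ∅ i * g (eIdx m hlm) := by
  rw [show (bdry ℤ l (incA l) (m + 1)) g = bdryFun ℤ l (incA l) (m + 1) g from rfl, bdryFun]
  rw [show (sIdx m hlm i).1.attach = {⟨i, Finset.mem_singleton_self i⟩} from attach_single i]
  rw [Finset.sum_singleton]
  exact term_eq (incA l) g _ _ (eIdx m hlm) (Finset.erase_singleton i)

lemma chain1_eq {l m : ℕ} (hlm : l = m + 2) (f g : Chain ℤ l (m + 1))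
    (h : ∀ i, f (sIdx m hlm i) = g (sIdx m hlm i)) : f = g := by
  funext J
  have hcard : J.1.card = 1 := by have := J.2; omega
  obtain ⟨a, ha⟩ := Finset.card_eq_one.mp hcard
  have hJ : J = sIdx m hlm a := Subtype.ext ha
  rw [hJ]; exact h a

lemma mem_ker_iff {l m : ℕ} (hlm : l = m + 2) (f : Chain ℤ l (m + 1)) :
    f ∈ LinearMap.ker (bdry ℤ l (incA l) m) ↔ ∀ i j : Fin l, i < j →
      incA l {j} i * f (sIdx m hlm j) + incA l {i} j * f (sIdx m hlm i) = 0 := by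
  rw [LinearMap.mem_ker]
  constructor
  · intro h i j hij
    have h2 := congrFun h (pIdx m hlm i j (ne_of_lt hij))
    rw [bdry_pair_apply hlm f i j hij] at h2
    exact h2
  · intro h
    funext J
    have hcard : J.1.card = 2 := by have := J.2; omega
    obtain ⟨a, b, hab, hJ⟩ := Finset.card_eq_two.mp hcard
    show bdry ℤ l (incA l) m f J = 0
    rcases lt_or_gt_of_ne hab with hlt | hgt
    · rw [show J = pIdx m hlm a b hab from Subtype.ext hJ,
        bdry_pair_apply hlm f a b hlt]
      exact h a b hlt
    · rw [show J = pIdx m hlm b a hab.symm from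
        Subtype.ext (hJ.trans (Finset.pair_comm a b)),
        bdry_pair_apply hlm f b a hgt]
      exact h b a hgt

lemma mem_range_iff {l m : ℕ} (hlm : l = m + 2) (f : Chain ℤ l (m + 1)) :
    f ∈ LinearMap.range (bdry ℤ l (incA l) (m + 1)) ↔
      ∃ c : ℤ, ∀ i : Fin l, f (sIdx m hlm i) = incA l ∅ i * c := by
  constructor
  · rintro ⟨g, rfl⟩
    exact ⟨g (eIdx m hlm), fun i => bdry_top_apply hlm g i⟩
  · rintro ⟨c, hc⟩
    refine ⟨fun _ => c, ?_⟩
    refine chain1_eq hlm _ f (fun i => ?_)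
    rw [bdry_top_apply hlm (fun _ => c) i]
    exact (hc i).symm

lemma ker_top_eq_zero {l m : ℕ} (hlm : l = m + 2) (f : Chain ℤ l (m + 2))
    (hf : f ∈ LinearMap.ker (bdry ℤ l (incA l) (m + 1))) : f = 0 := by
  have hl2 : 2 ≤ l := by omega
  have i1 : Fin l := ⟨1, by omega⟩
  have h := congrFun (LinearMap.mem_ker.mp hf) (sIdx m hlm ⟨1, by omega⟩)
  rw [bdry_top_apply hlm f ⟨1, by omega⟩] at h
  have hval : ((⟨1, by omega⟩ : Fin l)).val = 1 := rfl
  rw [incA_empty] at h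
  rw [hval] at h
  rw [if_neg (by rintro ⟨_, h2⟩; rw [Nat.odd_iff] at h2; omega)] at h
  have d1 : (1 + 1) / 2 = 1 := rfl
  rw [d1, Nat.choose_one_right] at h
  have hne : ((-1 : ℤ)) ^ 1 * 2 * (((l + 1) / 2 : ℕ) : ℤ) ≠ 0 := by
    have : 1 ≤ (l + 1) / 2 := by omega
    have h1 : (1 : ℤ) ≤ (((l + 1) / 2 : ℕ) : ℤ) := by exact_mod_cast this
    simp only [pow_one]
    intro hc
    linarith
  have hf0 : f (eIdx m hlm) = 0 := by
    rcases mul_eq_zero.mp h with hc | hc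
    · exact absurd hc hne
    · exact hc
  funext J
  have hcard : J.1.card = 0 := by have := J.2; omega
  have hJ : J = eIdx m hlm := Subtype.ext (Finset.card_eq_zero.mp hcard)
  rw [hJ, hf0]
  rfl

def wfunE (l : ℕ) : Fin l → ℤ :=
  fun i => (-1) ^ i.val * ((l / 2).choose ((i.val + 1) / 2) : ℤ)

lemma vE {l : ℕ} (hE : Even l) (i : Fin l) : incA l ∅ i = 2 * wfunE l i := by
  obtain ⟨h0, hh⟩ := hE
  rw [incA_empty]
  simp only [wfunE]
  rw [if_neg (by rintro ⟨h1, _⟩; rw [Nat.odd_iff] at h1; omega)]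
  have d : (l + 1) / 2 = l / 2 := by omega
  rw [d]; ring

lemma kerE_cond {l : ℕ} (hE : Even l) (i j : Fin l) (hij : i < j) :
    incA l {j} i * wfunE l j + incA l {i} j * wfunE l i = 0 := by
  obtain ⟨h0, hh⟩ := hE
  have hij' : i.val < j.val := hij
  have hjl : j.val < l := j.isLt
  rw [incA_single_lt l i j hij, incA_single_gt l j i hij]
  simp only [wfunE]
  rcases Nat.even_or_odd i.val with ⟨a, ha⟩ | ⟨a, ha⟩ <;>
    rcases Nat.even_or_odd j.val with ⟨b, hb⟩ | ⟨b, hb⟩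
  · -- i even, j even
    rw [ha, hb]
    rw [if_neg (by rintro ⟨h1, _⟩; rw [Nat.odd_iff] at h1; omega)]
    rw [if_neg (by rintro ⟨_, h2⟩; rw [Nat.odd_iff] at h2; omega)]
    have d1 : (b + b + 1) / 2 = b := by omega
    have d2 : (a + a + 1) / 2 = a := by omega
    have d3 : (l - (a + a)) / 2 = h0 - a := by omega
    have d4 : (b + b - (a + a)) / 2 = b - a := by omega
    have d5 : l / 2 = h0 := by omega
    rw [d1, d2, d3, d4, d5]
    have p1 : ((-1 : ℤ)) ^ (a + a) = 1 := Even.neg_one_pow ⟨a, rfl⟩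
    have p2 : ((-1 : ℤ)) ^ (b + b) = 1 := Even.neg_one_pow ⟨b, rfl⟩
    have p3 : ((-1 : ℤ)) ^ (b + b - 1) = -1 := Odd.neg_one_pow ⟨b - 1, by omega⟩
    rw [p1, p2, p3]
    have keyZ : ((h0.choose b : ℤ)) * b.choose a =
        (h0.choose a : ℤ) * (h0 - a).choose (b - a) := by
      exact_mod_cast Nat.choose_mul (show a ≤ b by omega)
    linear_combination 2 * keyZ
  · -- i even, j odd
    rw [ha, hb]
    rw [if_pos ⟨⟨b, rfl⟩, ⟨a, by omega⟩⟩]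
    rw [if_pos ⟨by rw [Nat.odd_iff]; omega, by rw [Nat.odd_iff]; omega⟩]
    ring
  · -- i odd, j even
    rw [ha, hb]
    rw [if_neg (by rintro ⟨h1, _⟩; rw [Nat.odd_iff] at h1; omega)]
    rw [if_neg (by rintro ⟨h1, _⟩; rw [Nat.odd_iff] at h1; omega)]
    have d1 : (b + b + 1) / 2 = b := by omega
    have d2 : (2 * a + 1 + 1) / 2 = a + 1 := by omega
    have d3 : (l - (2 * a + 1)) / 2 = h0 - (a + 1) := by omega
    have d4 : (b + b - (2 * a + 1)) / 2 = b - (a + 1) := by omega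
    have d5 : l / 2 = h0 := by omega
    rw [d1, d2, d3, d4, d5]
    have p1 : ((-1 : ℤ)) ^ (2 * a + 1) = -1 := Odd.neg_one_pow ⟨a, rfl⟩
    have p2 : ((-1 : ℤ)) ^ (b + b) = 1 := Even.neg_one_pow ⟨b, rfl⟩
    have p3 : ((-1 : ℤ)) ^ (b + b - 1) = -1 := Odd.neg_one_pow ⟨b - 1, by omega⟩
    rw [p1, p2, p3]
    have keyZ : ((h0.choose b : ℤ)) * b.choose (a + 1) =
        (h0.choose (a + 1) : ℤ) * (h0 - (a + 1)).choose (b - (a + 1)) := by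
      exact_mod_cast Nat.choose_mul (show a + 1 ≤ b by omega)
    linear_combination (-2) * keyZ
  · -- i odd, j odd
    rw [ha, hb]
    rw [if_neg (by rintro ⟨_, h2⟩; rw [Nat.odd_iff] at h2; omega)]
    rw [if_neg (by rintro ⟨h1, _⟩; rw [Nat.odd_iff] at h1; omega)]
    have d1 : (2 * b + 1 + 1) / 2 = b + 1 := by omega
    have d2 : (2 * a + 1 + 1) / 2 = a + 1 := by omega
    have d3 : (l - (2 * a + 1)) / 2 = h0 - (a + 1) := by omega
    have d4 : (2 * b + 1 - (2 * a + 1)) / 2 = (b + 1) - (a + 1) := by omega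
    have d5 : l / 2 = h0 := by omega
    rw [d1, d2, d3, d4, d5]
    have p1 : ((-1 : ℤ)) ^ (2 * a + 1) = -1 := Odd.neg_one_pow ⟨a, rfl⟩
    have p2 : ((-1 : ℤ)) ^ (2 * b + 1) = -1 := Odd.neg_one_pow ⟨b, rfl⟩
    have p3 : ((-1 : ℤ)) ^ (2 * b + 1 - 1) = 1 := Even.neg_one_pow ⟨b, by omega⟩
    rw [p1, p2, p3]
    have keyZ : ((h0.choose (b + 1) : ℤ)) * (b + 1).choose (a + 1) =
        (h0.choose (a + 1) : ℤ) * (h0 - (a + 1)).choose ((b + 1) - (a + 1)) := by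
      exact_mod_cast Nat.choose_mul (show a + 1 ≤ b + 1 by omega)
    linear_combination 2 * keyZ

lemma detE {l m : ℕ} (hlm : l = m + 2) (hE : Even l) (hl4 : 4 ≤ l)
    (f : Chain ℤ l (m + 1)) (hf : f ∈ LinearMap.ker (bdry ℤ l (incA l) m))
    (i0 : Fin l) (h00 : i0.val = 0) (i : Fin l) :
    f (sIdx m hlm i) = f (sIdx m hlm i0) * wfunE l i := by
  obtain ⟨h0, hh⟩ := hE
  have hc := (mem_ker_iff hlm f).mp hf
  have hil := i.isLt
  have d5 : l / 2 = h0 := by omega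
  -- Step A : even coordinates
  have stepA : ∀ i : Fin l, ∀ b : ℕ, i.val = b + b →
      f (sIdx m hlm i) = f (sIdx m hlm i0) * (h0.choose b : ℤ) := by
    intro i b hb
    rcases Nat.eq_zero_or_pos b with rfl | hbpos
    · have hii : i = i0 := Fin.ext (by omega)
      rw [hii]; simp
    · have h0i : i0 < i := by rw [Fin.lt_def]; omega
      have heq := hc i0 i h0i
      rw [incA_single_lt l i0 i h0i, incA_single_gt l i i0 h0i, h00, hb] at heq
      rw [if_neg (by rintro ⟨h1, _⟩; rw [Nat.odd_iff] at h1; omega)] at heq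
      rw [if_neg (by rintro ⟨_, h2⟩; rw [Nat.odd_iff] at h2; omega)] at heq
      have d1 : (b + b + 1) / 2 = b := by omega
      have d2 : (0 + 1) / 2 = 0 := by norm_num
      have d3 : (l - 0) / 2 = h0 := by omega
      have d4 : (b + b - 0) / 2 = b := by omega
      rw [d1, d2, d3, d4] at heq
      have p1 : ((-1 : ℤ)) ^ (0 : ℕ) = 1 := pow_zero _
      have p2 : ((-1 : ℤ)) ^ (b + b - 1) = -1 := Odd.neg_one_pow ⟨b - 1, by omega⟩
      rw [p1, p2, Nat.choose_zero_right] at heq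
      push_cast at heq ⊢
      linarith
  rcases Nat.even_or_odd i.val with ⟨b, hb⟩ | ⟨b, hb⟩
  · rw [stepA i b hb]
    simp only [wfunE]
    rw [hb, d5]
    have d1 : (b + b + 1) / 2 = b := by omega
    have p1 : ((-1 : ℤ)) ^ (b + b) = 1 := Even.neg_one_pow ⟨b, rfl⟩
    rw [d1, p1]; ring
  · -- odd coordinate
    obtain ⟨i1, h1v⟩ : ∃ i1 : Fin l, i1.val = 1 := ⟨⟨1, by omega⟩, rfl⟩
    obtain ⟨i2, h2v⟩ : ∃ i2 : Fin l, i2.val = 2 := ⟨⟨2, by omega⟩, rfl⟩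
    have ha2 : f (sIdx m hlm i2) = f (sIdx m hlm i0) * (h0.choose 1 : ℤ) :=
      stepA i2 1 (by omega)
    have h12 : i1 < i2 := by rw [Fin.lt_def]; omega
    have heq := hc i1 i2 h12
    rw [incA_single_lt l i1 i2 h12, incA_single_gt l i2 i1 h12, h1v, h2v] at heq
    rw [if_neg (by rintro ⟨h1, _⟩; rw [Nat.odd_iff] at h1; omega)] at heq
    rw [if_neg (by rintro ⟨h1, _⟩; rw [Nat.odd_iff] at h1; omega)] at heq
    have d3 : (l - 1) / 2 = h0 - 1 := by omega
    rw [d3] at heq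
    have d1 : ((2 : ℕ) + 1) / 2 = 1 := rfl
    rw [d1] at heq
    have d4 : ((2 : ℕ) - 1) / 2 = 0 := rfl
    rw [d4] at heq
    have p1 : ((-1 : ℤ)) ^ (1 : ℕ) = -1 := pow_one _
    rw [p1] at heq
    rw [Nat.choose_self, Nat.choose_zero_right] at heq
    have ha1 : f (sIdx m hlm i1) = -((h0 : ℤ)) * f (sIdx m hlm i0) := by
      rw [Nat.choose_one_right] at ha2
      push_cast at heq ha2 ⊢
      linarith
    rcases Nat.eq_zero_or_pos b with rfl | hbpos
    · have hii : i = i1 := Fin.ext (by omega)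
      rw [hii, ha1]
      simp only [wfunE]
      rw [h1v, d5]
      norm_num
      ring
    · have h1i : i1 < i := by rw [Fin.lt_def]; omega
      have heq2 := hc i1 i h1i
      rw [incA_single_lt l i1 i h1i, incA_single_gt l i i1 h1i, h1v, hb] at heq2
      rw [if_neg (by rintro ⟨_, h2⟩; rw [Nat.odd_iff] at h2; omega)] at heq2
      rw [if_neg (by rintro ⟨h1, _⟩; rw [Nat.odd_iff] at h1; omega)] at heq2
      have e1 : (2 * b + 1 + 1) / 2 = b + 1 := by omega
      have e3 : (l - 1) / 2 = h0 - 1 := by omega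
      have e4 : (2 * b + 1 - 1) / 2 = b := by omega
      rw [e1, e3, e4] at heq2
      have e2 : ((1 : ℕ) + 1) / 2 = 1 := rfl
      rw [e2] at heq2
      have q2 : ((-1 : ℤ)) ^ (2 * b + 1 - 1) = 1 := Even.neg_one_pow ⟨b, by omega⟩
      rw [q2] at heq2
      have q1 : ((-1 : ℤ)) ^ (1 : ℕ) = -1 := pow_one _
      rw [q1] at heq2
      rw [Nat.choose_one_right, ha1] at heq2
      have key : h0 * ((h0 - 1).choose b) = h0.choose (b + 1) * (b + 1) := by
        have hs := Nat.add_one_mul_choose_eq (h0 - 1) b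
        rwa [show h0 - 1 + 1 = h0 by omega] at hs
      have keyZ : (h0 : ℤ) * ((h0 - 1).choose b : ℤ) =
          (h0.choose (b + 1) : ℤ) * ((b : ℤ) + 1) := by exact_mod_cast key
      have hcancel : (2 * ((b : ℤ) + 1)) * f (sIdx m hlm i) =
          (2 * ((b : ℤ) + 1)) *
            (f (sIdx m hlm i0) * (-1 * (h0.choose (b + 1) : ℤ))) := by
        push_cast at heq2 ⊢
        linear_combination (-1 : ℤ) * heq2 - 2 * f (sIdx m hlm i0) * keyZ
      have := mul_left_cancel₀
        (show (2 * ((b : ℤ) + 1)) ≠ 0 by positivity) hcancel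
      rw [this]
      simp only [wfunE]
      rw [hb, d5, e1]
      have p3 : ((-1 : ℤ)) ^ (2 * b + 1) = -1 := Odd.neg_one_pow ⟨b, rfl⟩
      rw [p3]

def wfunO (p l : ℕ) : Fin l → ℤ :=
  fun i => if i.val % 2 = 1 then ((p.choose ((i.val + 1) / 2) / p : ℕ) : ℤ) else 0

lemma vO {l p : ℕ} (hp : p.Prime) (hl : l = 2 * p - 1) (i : Fin l) :
    incA l ∅ i = -(2 * (p : ℤ)) * wfunO p l i := by
  have hp2 := hp.two_le
  have hil := i.isLt
  rw [incA_empty]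
  simp only [wfunO]
  rcases Nat.even_or_odd i.val with ⟨a, ha⟩ | ⟨b, hb⟩
  · rw [ha]
    rw [if_pos (show Odd l ∧ Odd (a + a + 1) from
      ⟨by rw [Nat.odd_iff]; omega, by rw [Nat.odd_iff]; omega⟩)]
    rw [if_neg (show ¬((a + a) % 2 = 1) by omega)]
    ring
  · rw [hb]
    rw [if_neg (show ¬(Odd l ∧ Odd (2 * b + 1 + 1)) from by
      rintro ⟨_, h2⟩; rw [Nat.odd_iff] at h2; omega)]
    rw [if_pos (show (2 * b + 1) % 2 = 1 by omega)]
    have d1 : (l + 1) / 2 = p := by omega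
    have d2 : (2 * b + 1 + 1) / 2 = b + 1 := by omega
    rw [d1, d2]
    have p1 : ((-1 : ℤ)) ^ (2 * b + 1) = -1 := Odd.neg_one_pow ⟨b, rfl⟩
    rw [p1]
    have hdvd : p ∣ p.choose (b + 1) :=
      Nat.Prime.dvd_choose_self hp (by omega) (by omega)
    have hpcZ : (p : ℤ) * ((p.choose (b + 1) / p : ℕ) : ℤ) = (p.choose (b + 1) : ℤ) := by
      exact_mod_cast Nat.mul_div_cancel' hdvd
    linear_combination (2 : ℤ) * hpcZ

lemma kerO_cond {l p : ℕ} (hp : p.Prime) (hl : l = 2 * p - 1) (i j : Fin l) (hij : i < j) :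
    incA l {j} i * wfunO p l j + incA l {i} j * wfunO p l i = 0 := by
  have hp2 := hp.two_le
  have hij' : i.val < j.val := hij
  have hjl : j.val < l := j.isLt
  rw [incA_single_lt l i j hij, incA_single_gt l j i hij]
  simp only [wfunO]
  rcases Nat.even_or_odd i.val with ⟨a, ha⟩ | ⟨a, ha⟩ <;>
    rcases Nat.even_or_odd j.val with ⟨b, hb⟩ | ⟨b, hb⟩
  · -- i even, j even
    rw [ha, hb]
    rw [if_neg (show ¬((b + b) % 2 = 1) by omega)]
    rw [if_neg (show ¬((a + a) % 2 = 1) by omega)]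
    ring
  · -- i even, j odd
    rw [ha, hb]
    rw [if_pos (show Odd (2 * b + 1) ∧ Odd (a + a + 1) from ⟨⟨b, rfl⟩, ⟨a, by omega⟩⟩)]
    rw [if_neg (show ¬((a + a) % 2 = 1) by omega)]
    ring
  · -- i odd, j even
    rw [ha, hb]
    rw [if_neg (show ¬((b + b) % 2 = 1) by omega)]
    rw [if_pos (show Odd (l - 1 - (2 * a + 1)) ∧ Odd (b + b - (2 * a + 1)) from
      ⟨by rw [Nat.odd_iff]; omega, by rw [Nat.odd_iff]; omega⟩)]
    ring
  · -- i odd, j odd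
    rw [ha, hb]
    rw [if_neg (show ¬(Odd (2 * b + 1) ∧ Odd (2 * a + 1 + 1)) from by
      rintro ⟨_, h2⟩; rw [Nat.odd_iff] at h2; omega)]
    rw [if_neg (show ¬(Odd (l - 1 - (2 * a + 1)) ∧ Odd (2 * b + 1 - (2 * a + 1))) from by
      rintro ⟨_, h2⟩; rw [Nat.odd_iff] at h2; omega)]
    rw [if_pos (show (2 * b + 1) % 2 = 1 by omega)]
    rw [if_pos (show (2 * a + 1) % 2 = 1 by omega)]
    have d1 : (2 * b + 1 + 1) / 2 = b + 1 := by omega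
    have d2 : (2 * a + 1 + 1) / 2 = a + 1 := by omega
    have d3 : (l - (2 * a + 1)) / 2 = p - (a + 1) := by omega
    have d4 : (2 * b + 1 - (2 * a + 1)) / 2 = (b + 1) - (a + 1) := by omega
    rw [d1, d2, d3, d4]
    have p1 : ((-1 : ℤ)) ^ (2 * a + 1) = -1 := Odd.neg_one_pow ⟨a, rfl⟩
    have p2 : ((-1 : ℤ)) ^ (2 * b + 1 - 1) = 1 := Even.neg_one_pow ⟨b, by omega⟩
    rw [p1, p2]
    have hdvd1 : p ∣ p.choose (a + 1) :=
      Nat.Prime.dvd_choose_self hp (by omega) (by omega)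
    have hdvd2 : p ∣ p.choose (b + 1) :=
      Nat.Prime.dvd_choose_self hp (by omega) (by omega)
    have h1Z : (p : ℤ) * ((p.choose (a + 1) / p : ℕ) : ℤ) = (p.choose (a + 1) : ℤ) := by
      exact_mod_cast Nat.mul_div_cancel' hdvd1
    have h2Z : (p : ℤ) * ((p.choose (b + 1) / p : ℕ) : ℤ) = (p.choose (b + 1) : ℤ) := by
      exact_mod_cast Nat.mul_div_cancel' hdvd2
    have keyZ : ((p.choose (b + 1) : ℤ)) * (b + 1).choose (a + 1) =
        (p.choose (a + 1) : ℤ) * ((p - (a + 1)).choose ((b + 1) - (a + 1))) := by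
      exact_mod_cast Nat.choose_mul (show a + 1 ≤ b + 1 by omega)
    have hpne : (p : ℤ) ≠ 0 := by positivity
    refine mul_left_cancel₀ hpne ?_
    rw [mul_zero]
    linear_combination (-2 * ((b + 1).choose (a + 1) : ℤ)) * h2Z +
      (2 * ((p - (a + 1)).choose ((b + 1) - (a + 1)) : ℤ)) * h1Z + (-2 : ℤ) * keyZ

lemma detO {l m p : ℕ} (hlm : l = m + 2) (hp : p.Prime) (hl : l = 2 * p - 1)
    (f : Chain ℤ l (m + 1)) (hf : f ∈ LinearMap.ker (bdry ℤ l (incA l) m))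
    (i1 : Fin l) (h1v : i1.val = 1) (i : Fin l) :
    f (sIdx m hlm i) = f (sIdx m hlm i1) * wfunO p l i := by
  have hp2 := hp.two_le
  have hc := (mem_ker_iff hlm f).mp hf
  have hil := i.isLt
  rcases Nat.even_or_odd i.val with ⟨a, ha⟩ | ⟨b, hb⟩
  · -- even coordinate vanishes
    have hz : f (sIdx m hlm i) = 0 := by
      rcases lt_or_eq_of_le (show i.val ≤ l - 1 by omega) with hlt | heqv
      · obtain ⟨j, hjv⟩ : ∃ j : Fin l, j.val = i.val + 1 := ⟨⟨i.val + 1, by omega⟩, rfl⟩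
        have hij : i < j := by rw [Fin.lt_def]; omega
        have heq := hc i j hij
        rw [incA_single_lt l i j hij, incA_single_gt l j i hij, hjv, ha] at heq
        rw [if_pos (show Odd (a + a + 1) ∧ Odd (a + a + 1) from
          ⟨⟨a, by omega⟩, ⟨a, by omega⟩⟩)] at heq
        rw [if_neg (show ¬(Odd (l - 1 - (a + a)) ∧ Odd (a + a + 1 - (a + a))) from by
          rintro ⟨h1, _⟩; rw [Nat.odd_iff] at h1; omega)] at heq
        have d4 : (a + a + 1 - (a + a)) / 2 = 0 := by omega
        rw [d4, Nat.choose_zero_right] at heq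
        have p2 : ((-1 : ℤ)) ^ (a + a + 1 - 1) = 1 := Even.neg_one_pow ⟨a, by omega⟩
        rw [p2] at heq
        push_cast at heq
        linarith
      · have h1i : i1 < i := by rw [Fin.lt_def]; omega
        have heq := hc i1 i h1i
        rw [incA_single_lt l i1 i h1i, incA_single_gt l i i1 h1i, h1v] at heq
        rw [if_neg (show ¬(Odd i.val ∧ Odd (1 + 1)) from by
          rintro ⟨_, h2⟩; rw [Nat.odd_iff] at h2; omega)] at heq
        rw [if_pos (show Odd (l - 1 - 1) ∧ Odd (i.val - 1) from
          ⟨by rw [Nat.odd_iff]; omega, by rw [Nat.odd_iff]; omega⟩)] at heq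
        have d1 : (i.val + 1) / 2 = p - 1 := by omega
        rw [d1] at heq
        have d2 : ((1 : ℕ) + 1) / 2 = 1 := rfl
        rw [d2, Nat.choose_one_right] at heq
        have q1 : ((-1 : ℤ)) ^ (1 : ℕ) = -1 := pow_one _
        rw [q1] at heq
        have hmul : ((p - 1 : ℕ) : ℤ) * f (sIdx m hlm i) = 0 := by linarith
        rcases mul_eq_zero.mp hmul with hc0 | hc0
        · exfalso
          have : (p - 1 : ℕ) = 0 := by exact_mod_cast hc0
          omega
        · exact hc0
    rw [hz]
    simp only [wfunO]
    rw [ha, if_neg (show ¬((a + a) % 2 = 1) by omega)]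
    ring
  · -- odd coordinate
    rcases Nat.eq_zero_or_pos b with rfl | hbpos
    · have hii : i = i1 := Fin.ext (by omega)
      rw [hii]
      simp only [wfunO]
      rw [h1v]
      rw [if_pos (show (1 : ℕ) % 2 = 1 by norm_num)]
      have d2 : ((1 : ℕ) + 1) / 2 = 1 := rfl
      rw [d2, Nat.choose_one_right, Nat.div_self (show 0 < p by omega)]
      norm_num
    · have h1i : i1 < i := by rw [Fin.lt_def]; omega
      have heq := hc i1 i h1i
      rw [incA_single_lt l i1 i h1i, incA_single_gt l i i1 h1i, h1v, hb] at heq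
      rw [if_neg (show ¬(Odd (2 * b + 1) ∧ Odd (1 + 1)) from by
        rintro ⟨_, h2⟩; rw [Nat.odd_iff] at h2; omega)] at heq
      rw [if_neg (show ¬(Odd (l - 1 - 1) ∧ Odd (2 * b + 1 - 1)) from by
        rintro ⟨_, h2⟩; rw [Nat.odd_iff] at h2; omega)] at heq
      have e1 : (2 * b + 1 + 1) / 2 = b + 1 := by omega
      have e3 : (l - 1) / 2 = p - 1 := by omega
      have e4 : (2 * b + 1 - 1) / 2 = b := by omega
      rw [e1, e3, e4] at heq
      have e2 : ((1 : ℕ) + 1) / 2 = 1 := rfl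
      rw [e2] at heq
      have q2 : ((-1 : ℤ)) ^ (2 * b + 1 - 1) = 1 := Even.neg_one_pow ⟨b, by omega⟩
      rw [q2] at heq
      have q1 : ((-1 : ℤ)) ^ (1 : ℕ) = -1 := pow_one _
      rw [q1] at heq
      rw [Nat.choose_one_right] at heq
      have hdvd : p ∣ p.choose (b + 1) :=
        Nat.Prime.dvd_choose_self hp (by omega) (by omega)
      have key1 : p * (p - 1).choose b = p.choose (b + 1) * (b + 1) := by
        have hs := Nat.add_one_mul_choose_eq (p - 1) b
        rwa [show p - 1 + 1 = p by omega] at hs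
      have key2 : (p - 1).choose b = (p.choose (b + 1) / p) * (b + 1) := by
        apply Nat.eq_of_mul_eq_mul_left (show 0 < p by omega)
        rw [key1, ← mul_assoc, Nat.mul_div_cancel' hdvd]
      have key2Z : (((p - 1).choose b : ℕ) : ℤ) =
          ((p.choose (b + 1) / p : ℕ) : ℤ) * ((b : ℤ) + 1) := by exact_mod_cast key2
      have hcancel : (2 * ((b : ℤ) + 1)) * f (sIdx m hlm i) =
          (2 * ((b : ℤ) + 1)) *
            (((p.choose (b + 1) / p : ℕ) : ℤ) * f (sIdx m hlm i1)) := by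
        push_cast at heq
        linear_combination (-1 : ℤ) * heq + 2 * f (sIdx m hlm i1) * key2Z
      have hfin := mul_left_cancel₀ (show (2 * ((b : ℤ) + 1)) ≠ 0 by positivity) hcancel
      rw [hfin]
      simp only [wfunO]
      rw [hb]
      rw [if_pos (show (2 * b + 1) % 2 = 1 by omega)]
      rw [e1]
      ring

lemma quot_iso {l m N : ℕ} (hlm : l = m + 2) (hN : N ≠ 0) (w : Fin l → ℤ) (i0 : Fin l)
    (v : ℤ) (hvN : v = (N : ℤ) ∨ v = -(N : ℤ))
    (hw1 : w i0 = 1)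
    (hker : ∀ i j : Fin l, i < j → incA l {j} i * w j + incA l {i} j * w i = 0)
    (hv : ∀ i : Fin l, incA l ∅ i = v * w i)
    (hdet : ∀ f ∈ LinearMap.ker (bdry ℤ l (incA l) m),
      ∀ i : Fin l, f (sIdx m hlm i) = f (sIdx m hlm i0) * w i) :
    Nonempty
      ((LinearMap.ker (bdry ℤ l (incA l) m) ⧸
        (LinearMap.range (bdry ℤ l (incA l) (m + 1))).comap
          (LinearMap.ker (bdry ℤ l (incA l) m)).subtype) ≃ₗ[ℤ] ZMod N) := by
  classical
  set K := LinearMap.ker (bdry ℤ l (incA l) m) with hK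
  -- the cycle w as a chain
  set wc : Chain ℤ l (m + 1) := fun J => ∑ x ∈ J.1, w x with hwcdef
  have hwc : ∀ i : Fin l, wc (sIdx m hlm i) = w i := by
    intro i
    show ∑ x ∈ ({i} : Finset (Fin l)), w x = w i
    exact Finset.sum_singleton _ _
  have hwcker : wc ∈ K := by
    rw [hK, mem_ker_iff hlm wc]
    intro i j hij
    rw [hwc, hwc]
    exact hker i j hij
  -- the evaluation map
  let Φ : K →ₗ[ℤ] ZMod N :=
    ((Int.castRingHom (ZMod N)).toAddMonoidHom.toIntLinearMap).comp
      ((LinearMap.proj (sIdx m hlm i0)).comp K.subtype)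
  have hΦ : ∀ f : K, Φ f = ((f.1 (sIdx m hlm i0) : ℤ) : ZMod N) := fun _ => rfl
  have hsurj : Function.Surjective Φ := by
    intro z
    obtain ⟨k, rfl⟩ := ZMod.intCast_surjective z
    refine ⟨k • ⟨wc, hwcker⟩, ?_⟩
    rw [hΦ]
    have : ((k • (⟨wc, hwcker⟩ : K)).1) (sIdx m hlm i0) = k * wc (sIdx m hlm i0) := rfl
    rw [this, hwc, hw1, mul_one]
  have hkerΦ : LinearMap.ker Φ =
      (LinearMap.range (bdry ℤ l (incA l) (m + 1))).comap K.subtype := by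
    ext f
    rw [LinearMap.mem_ker, hΦ, Submodule.mem_comap]
    rw [ZMod.intCast_zmod_eq_zero_iff_dvd]
    constructor
    · rintro ⟨s, hs⟩
      rw [mem_range_iff hlm]
      have hdf := hdet f.1 f.2
      rcases hvN with hv' | hv'
      · refine ⟨s, fun i => ?_⟩
        show f.1 (sIdx m hlm i) = incA l ∅ i * s
        rw [hdf i, hs, hv i, hv']
        ring
      · refine ⟨-s, fun i => ?_⟩
        show f.1 (sIdx m hlm i) = incA l ∅ i * -s
        rw [hdf i, hs, hv i, hv']
        ring
    · intro hmem
      obtain ⟨c, hc⟩ := (mem_range_iff hlm f.1).mp hmem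
      have h0 := hc i0
      rw [hv i0, hw1, mul_one] at h0
      rcases hvN with hv' | hv'
      · exact ⟨c, by rw [h0, hv']⟩
      · exact ⟨-c, by rw [h0, hv']; ring⟩
  exact ⟨(Submodule.quotEquivOfEq _ _ hkerΦ.symm).trans
    (Φ.quotKerEquivOfSurjective hsurj)⟩
/-- **Integral homology of the type `A_l` Toda chain complex in top degrees**
(Casian–Kodama, Corollary 5.10): writing `l = m + 2` (so `l ≥ 2`),
(i) `H_l = 0` (nonorientability of the compactified isospectral variety);
(ii) if `l` is even (and `l ≥ 4`) then `H_{l-1} ≅ ℤ/2ℤ`;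
(iii) if `l = 2p - 1` with `p` prime then `H_{l-1} = H_{2p-2} ≅ ℤ/2pℤ`.
Here `H_l` is the homology in degree `l = m+2` (the top chain group is `C_l`, on the
subset `J = ∅`, and there is no chain group in degree `l+1`, encoded by the fact that
`Chain ℤ l (m+3)` is indexed by the empty set of subsets), and `H_{l-1}` is the
homology in degree `l - 1 = m + 1`. -/
theorem homology_todaComplex_typeA_top (l m : ℕ) (hlm : l = m + 2) :
    (Subsingleton
      (LinearMap.ker (bdry ℤ l (incA l) (m + 1)) ⧸
        (LinearMap.range (bdry ℤ l (incA l) (m + 2))).comap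
          (LinearMap.ker (bdry ℤ l (incA l) (m + 1))).subtype)) ∧
    (Even l → 4 ≤ l →
      Nonempty
        ((LinearMap.ker (bdry ℤ l (incA l) m) ⧸
          (LinearMap.range (bdry ℤ l (incA l) (m + 1))).comap
            (LinearMap.ker (bdry ℤ l (incA l) m)).subtype) ≃ₗ[ℤ] ZMod 2)) ∧
    (∀ p : ℕ, p.Prime → l = 2 * p - 1 →
      Nonempty
        ((LinearMap.ker (bdry ℤ l (incA l) m) ⧸
          (LinearMap.range (bdry ℤ l (incA l) (m + 1))).comap
            (LinearMap.ker (bdry ℤ l (incA l) m)).subtype) ≃ₗ[ℤ] ZMod (2 * p))) := by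
  refine ⟨?_, ?_, ?_⟩
  · -- (i) top homology vanishes
    have hsub : Subsingleton (LinearMap.ker (bdry ℤ l (incA l) (m + 1))) := by
      constructor
      rintro ⟨x, hx⟩ ⟨y, hy⟩
      exact Subtype.ext ((ker_top_eq_zero hlm x hx).trans (ker_top_eq_zero hlm y hy).symm)
    exact (Submodule.Quotient.mk_surjective _).subsingleton
  · -- (ii) even case
    intro hE hl4
    refine quot_iso hlm (by norm_num) (wfunE l) ⟨0, by omega⟩ 2 (Or.inl (by norm_num))
      ?_ (kerE_cond hE) (vE hE) ?_
    · have hv0 : ((⟨0, by omega⟩ : Fin l)).val = 0 := rfl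
      simp only [wfunE, hv0]
      norm_num
    · intro f hf i
      exact detE hlm hE hl4 f hf ⟨0, by omega⟩ rfl i
  · -- (iii) l = 2p - 1 case
    intro p hp hl
    have hp2 := hp.two_le
    refine quot_iso hlm (by omega) (wfunO p l) ⟨1, by omega⟩ (-(2 * (p : ℤ)))
      (Or.inr (by push_cast; ring)) ?_ (kerO_cond hp hl) (vO hp hl) ?_
    · have hv1 : ((⟨1, by omega⟩ : Fin l)).val = 1 := rfl
      simp only [wfunO, hv1]
      rw [show ((1 : ℕ) + 1) / 2 = 1 from rfl, Nat.choose_one_right,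
        Nat.div_self (show 0 < p by omega)]
      norm_num
    · intro f hf i
      exact detO hlm hp hl f hf ⟨1, by omega⟩ rfl i
end

section
/- Define modified incidence numbers on the subsets of {1,…,l} by [J;J∪{i}]₂ := 2·(−1)^{ν(J;J∪{i})} if n_1 or n_2 is odd (i.e. if J ⇒ J∪{i} is an edge of the graph 𝒢_{A_l}), and [J;J∪{i}]₂ := 0 otherwise. Then the cochain complex over ℤ with C^q := Maps({J ⊆ {1,…,l} : |J| = l−q}, ℤ) and (δf)(J) := Σ_{i∉J} [J;J∪{i}]₂·f(J∪{i}) satisfies δ∘δ = 0, and its cohomology is H^0 ≅ ℤ, H^1 ≅ ℤ, and H^q ≅ (ℤ/2)^{C(l−1,q−1)} for every 2 ≤ q ≤ l. (These groups are the integral cohomology groups of the Schubert variety V_l, the closure of N⁺s_1⋯s_l B⁺/B⁺ in the real flag manifold of SL(l+1,ℝ).) -/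
/-- The cochain group in degree `q`: `R`-valued functions on the subsets `J ⊆ {1,…,l}`
with `|J| = l - q` (recorded as `J.card + q = l`). -/
abbrev Coch (R : Type) [CommRing R] (l q : ℕ) : Type :=
  {J : Finset (Fin l) // J.card + q = l} → R

/-- `J ∪ {i}` for `i ∉ J`, as an element of the index set one degree lower. -/
def insElt (l q : ℕ) (J : {J : Finset (Fin l) // J.card + (q + 1) = l})
    (i : {x : Fin l // x ∈ J.1ᶜ}) : {J' : Finset (Fin l) // J'.card + q = l} :=
  ⟨insert i.1 J.1, by
    have hi : i.1 ∉ J.1 := Finset.mem_compl.mp i.2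
    have hJ := J.2
    rw [Finset.card_insert_of_notMem hi]; omega⟩

/-- `(δf)(J) = Σ_{i ∉ J} inc(J; J∪{i}) · f(J∪{i})`. -/
def deltaFun (R : Type) [CommRing R] (l : ℕ) (inc : Finset (Fin l) → Fin l → ℤ) (q : ℕ)
    (f : Coch R l q) : Coch R l (q + 1) :=
  fun J => ∑ i ∈ J.1ᶜ.attach, (inc J.1 i.1 : R) * f (insElt l q J i)

/-- The coboundary map `δ : C^q → C^{q+1}` as a linear map. -/
def delta (R : Type) [CommRing R] (l : ℕ) (inc : Finset (Fin l) → Fin l → ℤ) (q : ℕ) :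
    Coch R l q →ₗ[R] Coch R l (q + 1) where
  toFun := deltaFun R l inc q
  map_add' f g := by
    funext J
    simp [deltaFun, mul_add, Finset.sum_add_distrib]
  map_smul' c f := by
    funext J
    simp [deltaFun, Finset.mul_sum, mul_left_comm]
/-- The modified incidence numbers `[J ; J∪{i}]₂`: equal to `2·(-1)^ν` if `n1` or
`n2` is odd (i.e. if `J ⇒ J∪{i}` is an edge of the graph `𝒢_{A_l}`), and `0`
otherwise. -/
def inc2 (l : ℕ) (J : Finset (Fin l)) (i : Fin l) : ℤ :=
  if Odd (n1 l J i) ∨ Odd (n2 l J i) then 2 * (-1) ^ (nu l J i) else 0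

namespace CK

variable {R : Type} [CommRing R] {l : ℕ}
open Finset

variable {l : ℕ}

/-- `clean J x y` : the whole interval `[x,y]` avoids `J`. -/
def clean (J : Finset (Fin l)) (x y : Fin l) : Prop := ∀ k : Fin l, x ≤ k → k ≤ y → k ∉ J

instance (J : Finset (Fin l)) (x y : Fin l) : Decidable (clean J x y) := by
  unfold clean; infer_instance

def inc1 (l : ℕ) (J : Finset (Fin l)) (i : Fin l) : ℤ :=
  if Odd (n1 l J i) ∨ Odd (n2 l J i) then (-1) ^ (nu l J i) else 0

lemma inc2_eq (J : Finset (Fin l)) (i : Fin l) : inc2 l J i = 2 * inc1 l J i := by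
  unfold inc2 inc1; split <;> ring

lemma n1_def (J : Finset (Fin l)) (i : Fin l) :
    n1 l J i = (univ.filter (fun j : Fin l => j < i ∧ clean J j i)).card := rfl

lemma n2_def (J : Finset (Fin l)) (i : Fin l) :
    n2 l J i = (univ.filter (fun j : Fin l => i < j ∧ clean J i j)).card := rfl

lemma clean_mono {J J' : Finset (Fin l)} (h : J ⊆ J') {x y : Fin l} (hc : clean J' x y) :
    clean J x y := fun k h1 h2 hk => hc k h1 h2 (h hk)

lemma clean_sub {J : Finset (Fin l)} {x y x' y' : Fin l} (hc : clean J x y)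
    (h1 : x ≤ x') (h2 : y' ≤ y) : clean J x' y' :=
  fun k hk1 hk2 => hc k (le_trans h1 hk1) (le_trans hk2 h2)

lemma clean_glue {J : Finset (Fin l)} {x y z : Fin l} (h1 : clean J x y) (h2 : clean J y z) :
    clean J x z := by
  intro k hk1 hk2
  rcases le_total k y with h | h
  · exact h1 k hk1 h
  · exact h2 k h hk2

/-! ### computations at the successor of the minimum of the complement -/

lemma n1_min_succ {J : Finset (Fin l)} {a b : Fin l} (ha : a ∉ J)
    (hmin : ∀ x : Fin l, x ∉ J → a ≤ x) (hb : (b : ℕ) = (a : ℕ) + 1) (hbJ : b ∉ J) :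
    n1 l J b = 1 := by
  rw [n1_def, show univ.filter (fun j : Fin l => j < b ∧ clean J j b) = {a} from ?_, card_singleton]
  ext j
  simp only [mem_filter, mem_univ, true_and, mem_singleton]
  constructor
  · rintro ⟨hj, hc⟩
    have hjJ : j ∉ J := hc j le_rfl (le_of_lt hj)
    have h1 : a ≤ j := hmin j hjJ
    have h2 : (j : ℕ) < (a : ℕ) + 1 := by rw [← hb]; exact hj
    exact le_antisymm (by rw [Fin.le_def]; omega) h1
  · rintro rfl
    refine ⟨by rw [Fin.lt_def]; omega, fun k h1 h2 => ?_⟩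
    have h1' : (j : ℕ) ≤ (k : ℕ) := h1
    have h2' : (k : ℕ) ≤ (b : ℕ) := h2
    rcases (by omega : (k : ℕ) = (j : ℕ) ∨ (k : ℕ) = (b : ℕ)) with h | h
    · rwa [show k = j from Fin.ext h]
    · rwa [show k = b from Fin.ext h]

lemma nu_min_succ {J : Finset (Fin l)} {a b : Fin l} (ha : a ∉ J)
    (hmin : ∀ x : Fin l, x ∉ J → a ≤ x) (hb : (b : ℕ) = (a : ℕ) + 1) :
    nu l J b = 1 := by
  rw [nu, show univ.filter (fun j : Fin l => j < b ∧ j ∉ J) = {a} from ?_, card_singleton]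
  ext j
  simp only [mem_filter, mem_univ, true_and, mem_singleton]
  constructor
  · rintro ⟨hj, hjJ⟩
    have h1 : a ≤ j := hmin j hjJ
    have h2 : (j : ℕ) < (a : ℕ) + 1 := by rw [← hb]; exact hj
    exact le_antisymm (by rw [Fin.le_def]; omega) h1
  · rintro rfl
    exact ⟨by rw [Fin.lt_def]; omega, ha⟩

lemma inc1_min_succ {J : Finset (Fin l)} {a b : Fin l} (ha : a ∉ J)
    (hmin : ∀ x : Fin l, x ∉ J → a ≤ x) (hb : (b : ℕ) = (a : ℕ) + 1) (hbJ : b ∉ J) :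
    inc1 l J b = -1 := by
  rw [inc1, if_pos (Or.inl (by rw [n1_min_succ ha hmin hb hbJ]; exact odd_one)),
    nu_min_succ ha hmin hb, pow_one]

/-! ### small complement computations -/

lemma inc2_singleton {J : Finset (Fin l)} {i : Fin l} (h : Jᶜ = {i}) : inc2 l J i = 0 := by
  have hmem : ∀ x : Fin l, x ∉ J ↔ x = i := by
    intro x; rw [← Finset.mem_compl, h, mem_singleton]
  rw [inc2, if_neg]
  rintro (⟨m, hm⟩ | ⟨m, hm⟩)
  · have : (univ.filter (fun j : Fin l => j < i ∧ clean J j i)) = ∅ := by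
      ext j
      simp only [mem_filter, mem_univ, true_and, notMem_empty, iff_false, not_and]
      intro hj hc
      exact absurd ((hmem j).mp (hc j le_rfl (le_of_lt hj))) (ne_of_lt hj)
    rw [n1_def, this, card_empty] at hm; omega
  · have : (univ.filter (fun j : Fin l => i < j ∧ clean J i j)) = ∅ := by
      ext j
      simp only [mem_filter, mem_univ, true_and, notMem_empty, iff_false, not_and]
      intro hj hc
      exact absurd ((hmem j).mp (hc j (le_of_lt hj) le_rfl)) (ne_of_gt hj)
    rw [n2_def, this, card_empty] at hm; omega

/-! ### more small complement computations -/

lemma inc2_adj_left {J : Finset (Fin l)} {i b : Fin l} (h : Jᶜ = {i, b})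
    (hb : (b : ℕ) = (i : ℕ) + 1) : inc2 l J i = 2 := by
  have hmem : ∀ x : Fin l, x ∉ J ↔ (x = i ∨ x = b) := by
    intro x; rw [← Finset.mem_compl, h, mem_insert, mem_singleton]
  have hn1 : n1 l J i = 0 := by
    rw [n1_def, card_eq_zero]
    ext x
    simp only [mem_filter, mem_univ, true_and, notMem_empty, iff_false, not_and]
    intro hx hc
    rcases (hmem x).mp (hc x le_rfl (le_of_lt hx)) with rfl | rfl
    · exact lt_irrefl _ hx
    · rw [Fin.lt_def] at hx; omega
  have hn2 : n2 l J i = 1 := by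
    rw [n2_def, show univ.filter (fun k : Fin l => i < k ∧ clean J i k) = {b} from ?_,
      card_singleton]
    ext k
    simp only [mem_filter, mem_univ, true_and, mem_singleton]
    constructor
    · rintro ⟨hk, hc⟩
      rcases (hmem k).mp (hc k (le_of_lt hk) le_rfl) with rfl | rfl
      · exact absurd hk (lt_irrefl _)
      · rfl
    · rintro rfl
      refine ⟨by rw [Fin.lt_def]; omega, fun m h1 h2 => ?_⟩
      have h1' : (i : ℕ) ≤ (m : ℕ) := h1
      have h2' : (m : ℕ) ≤ (k : ℕ) := h2
      rw [hmem]
      rcases (by omega : (m : ℕ) = (i : ℕ) ∨ (m : ℕ) = (k : ℕ)) with hm | hm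
      · exact Or.inl (Fin.ext hm)
      · exact Or.inr (Fin.ext hm)
  have hnu : nu l J i = 0 := by
    rw [nu, card_eq_zero]
    ext x
    simp only [mem_filter, mem_univ, true_and, notMem_empty, iff_false, not_and]
    intro hx hxJ
    rcases (hmem x).mp hxJ with rfl | rfl
    · exact lt_irrefl _ hx
    · rw [Fin.lt_def] at hx; omega
  rw [inc2, if_pos (Or.inr (by rw [hn2]; exact odd_one)), hnu, pow_zero, mul_one]

lemma inc2_adj_right {J : Finset (Fin l)} {i b : Fin l} (h : Jᶜ = {i, b})
    (hb : (b : ℕ) = (i : ℕ) + 1) : inc2 l J b = -2 := by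
  have hmem : ∀ x : Fin l, x ∉ J ↔ (x = i ∨ x = b) := by
    intro x; rw [← Finset.mem_compl, h, mem_insert, mem_singleton]
  have hi : i ∉ J := (hmem i).mpr (Or.inl rfl)
  have hbJ : b ∉ J := (hmem b).mpr (Or.inr rfl)
  have hmin : ∀ x : Fin l, x ∉ J → i ≤ x := by
    intro x hx
    rcases (hmem x).mp hx with rfl | rfl
    · exact le_rfl
    · rw [Fin.le_def]; omega
  rw [inc2_eq, inc1_min_succ hi hmin hb hbJ]; ring

lemma inc2_far {J : Finset (Fin l)} {i j : Fin l} (h : Jᶜ = {i, j})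
    (hij : (i : ℕ) + 1 < (j : ℕ)) : inc2 l J i = 0 ∧ inc2 l J j = 0 := by
  have hmem : ∀ x : Fin l, x ∉ J ↔ (x = i ∨ x = j) := by
    intro x; rw [← Finset.mem_compl, h, mem_insert, mem_singleton]
  have hmid : (i : ℕ) + 1 < l := by have := j.isLt; omega
  have hnotclean : ¬ clean J i j := by
    intro hc
    have := hc ⟨(i : ℕ) + 1, hmid⟩ (by rw [Fin.le_def]; simp) (by rw [Fin.le_def]; simp; omega)
    rcases (hmem _).mp this with he | he
    · have := congrArg Fin.val he; simp at this
    · have := congrArg Fin.val he; simp at this; omega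
  constructor
  · rw [inc2, if_neg]
    rintro (⟨m, hm⟩ | ⟨m, hm⟩)
    · have : n1 l J i = 0 := by
        rw [n1_def, card_eq_zero]
        ext x
        simp only [mem_filter, mem_univ, true_and, notMem_empty, iff_false, not_and]
        intro hx hc
        rcases (hmem x).mp (hc x le_rfl (le_of_lt hx)) with rfl | rfl
        · exact lt_irrefl _ hx
        · rw [Fin.lt_def] at hx; omega
      omega
    · have : n2 l J i = 0 := by
        rw [n2_def, card_eq_zero]
        ext k
        simp only [mem_filter, mem_univ, true_and, notMem_empty, iff_false, not_and]
        intro hk hc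
        rcases (hmem k).mp (hc k (le_of_lt hk) le_rfl) with rfl | rfl
        · exact lt_irrefl _ hk
        · exact hnotclean hc
      omega
  · rw [inc2, if_neg]
    rintro (⟨m, hm⟩ | ⟨m, hm⟩)
    · have : n1 l J j = 0 := by
        rw [n1_def, card_eq_zero]
        ext x
        simp only [mem_filter, mem_univ, true_and, notMem_empty, iff_false, not_and]
        intro hx hc
        rcases (hmem x).mp (hc x le_rfl (le_of_lt hx)) with rfl | rfl
        · exact hnotclean hc
        · exact lt_irrefl _ hx
      omega
    · have : n2 l J j = 0 := by
        rw [n2_def, card_eq_zero]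
        ext k
        simp only [mem_filter, mem_univ, true_and, notMem_empty, iff_false, not_and]
        intro hk hc
        rcases (hmem k).mp (hc k (le_of_lt hk) le_rfl) with rfl | rfl
        · rw [Fin.lt_def] at hk; omega
        · exact lt_irrefl _ hk
      omega

/-! ### behaviour of `n1`, `n2`, `nu` under insertion -/

variable {J : Finset (Fin l)} {i j : Fin l}

lemma not_mem_insert' {m : Fin l} (hm : m ≠ i) (hmJ : m ∉ J) : m ∉ insert i J := by
  simp only [mem_insert, not_or]; exact ⟨hm, hmJ⟩

lemma n2_insert_lt (hij : i < j) : n2 l (insert i J) j = n2 l J j := by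
  rw [n2_def, n2_def]
  refine congrArg Finset.card (filter_congr fun k _ => ?_)
  refine and_congr_right fun hk => ⟨clean_mono (subset_insert _ _), fun hc m h1 h2 => ?_⟩
  exact not_mem_insert' (fun e => absurd (lt_of_lt_of_le hij (e ▸ h1)) (lt_irrefl _))
    (hc m h1 h2)

lemma n1_insert_gt (hij : i < j) : n1 l (insert j J) i = n1 l J i := by
  rw [n1_def, n1_def]
  refine congrArg Finset.card (filter_congr fun x _ => ?_)
  refine and_congr_right fun hx => ⟨clean_mono (subset_insert _ _), fun hc m h1 h2 => ?_⟩
  exact not_mem_insert' (fun e => absurd (lt_of_le_of_lt (e ▸ h2) hij) (lt_irrefl _))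
    (hc m h1 h2)

lemma n1_insert_same (hij : i < j) (hcl : clean J i j) :
    n1 l (insert i J) j = (j : ℕ) - (i : ℕ) - 1 := by
  rw [n1_def, show univ.filter (fun x : Fin l => x < j ∧ clean (insert i J) x j) = Ioo i j
    from ?_, Fin.card_Ioo]
  ext x
  simp only [mem_filter, mem_univ, true_and, mem_Ioo]
  constructor
  · rintro ⟨hx, hc⟩
    refine ⟨?_, hx⟩
    by_contra hxi
    push_neg at hxi
    exact hc i hxi (le_of_lt hij) (mem_insert_self _ _)
  · rintro ⟨h1, h2⟩
    refine ⟨h2, fun m hm1 hm2 => ?_⟩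
    exact not_mem_insert' (fun e => absurd (lt_of_lt_of_le h1 (e ▸ hm1)) (lt_irrefl _))
      (hcl m (le_of_lt (lt_of_lt_of_le h1 hm1)) hm2)

lemma n2_insert_same (hij : i < j) (hcl : clean J i j) :
    n2 l (insert j J) i = (j : ℕ) - (i : ℕ) - 1 := by
  rw [n2_def, show univ.filter (fun k : Fin l => i < k ∧ clean (insert j J) i k) = Ioo i j
    from ?_, Fin.card_Ioo]
  ext k
  simp only [mem_filter, mem_univ, true_and, mem_Ioo]
  constructor
  · rintro ⟨hk, hc⟩
    refine ⟨hk, ?_⟩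
    by_contra hkj
    push_neg at hkj
    exact hc j (le_of_lt hij) hkj (mem_insert_self _ _)
  · rintro ⟨h1, h2⟩
    refine ⟨h1, fun m hm1 hm2 => ?_⟩
    exact not_mem_insert' (fun e => absurd (lt_of_le_of_lt (e ▸ hm2) h2) (lt_irrefl _))
      (hcl m hm1 (le_of_lt (lt_of_le_of_lt hm2 h2)))

lemma n1_parts (hij : i < j) (hcl : clean J i j) :
    n1 l J j = n1 l J i + ((j : ℕ) - (i : ℕ)) := by
  have hdis : Disjoint (univ.filter (fun x : Fin l => x < i ∧ clean J x i)) (Ico i j) := by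
    rw [disjoint_left]
    rintro x hx hx'
    rw [mem_filter] at hx
    rw [mem_Ico] at hx'
    exact absurd (lt_of_le_of_lt hx'.1 hx.2.1) (lt_irrefl _)
  have hset : univ.filter (fun x : Fin l => x < j ∧ clean J x j)
      = univ.filter (fun x : Fin l => x < i ∧ clean J x i) ∪ Ico i j := by
    ext x
    simp only [mem_union, mem_filter, mem_univ, true_and, mem_Ico]
    constructor
    · rintro ⟨hx, hc⟩
      rcases lt_or_ge x i with h | h
      · exact Or.inl ⟨h, clean_sub hc le_rfl (le_of_lt hij)⟩
      · exact Or.inr ⟨h, hx⟩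
    · rintro (⟨h1, hc⟩ | ⟨h1, h2⟩)
      · exact ⟨lt_trans h1 hij, clean_glue hc hcl⟩
      · exact ⟨h2, clean_sub hcl h1 le_rfl⟩
  rw [n1_def, n1_def, hset, card_union_of_disjoint hdis, Fin.card_Ico]

lemma n2_parts (hij : i < j) (hcl : clean J i j) :
    n2 l J i = n2 l J j + ((j : ℕ) - (i : ℕ)) := by
  have hdis : Disjoint (univ.filter (fun k : Fin l => j < k ∧ clean J j k)) (Ioc i j) := by
    rw [disjoint_left]
    rintro k hk hk'
    rw [mem_filter] at hk
    rw [mem_Ioc] at hk'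
    exact absurd (lt_of_lt_of_le hk.2.1 hk'.2) (lt_irrefl _)
  have hset : univ.filter (fun k : Fin l => i < k ∧ clean J i k)
      = univ.filter (fun k : Fin l => j < k ∧ clean J j k) ∪ Ioc i j := by
    ext k
    simp only [mem_union, mem_filter, mem_univ, true_and, mem_Ioc]
    constructor
    · rintro ⟨hk, hc⟩
      rcases lt_or_ge j k with h | h
      · exact Or.inl ⟨h, clean_sub hc (le_of_lt hij) le_rfl⟩
      · exact Or.inr ⟨hk, h⟩
    · rintro (⟨h1, hc⟩ | ⟨h1, h2⟩)
      · exact ⟨lt_trans hij h1, clean_glue hcl hc⟩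
      · exact ⟨h1, clean_sub hcl le_rfl h2⟩
  rw [n2_def, n2_def, hset, card_union_of_disjoint hdis, Fin.card_Ioc]

lemma n1_insert_blocked (hij : i < j) (hbl : ¬ clean J i j) :
    n1 l (insert i J) j = n1 l J j := by
  unfold clean at hbl
  push_neg at hbl
  obtain ⟨k0, hk1, hk2, hk0⟩ := hbl
  rw [n1_def, n1_def]
  refine congrArg Finset.card (filter_congr fun x _ => ?_)
  refine and_congr_right fun hx => ⟨clean_mono (subset_insert _ _), fun hc m h1 h2 => ?_⟩
  have hix : i < x := by
    by_contra hxi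
    push_neg at hxi
    exact hc k0 (le_trans hxi hk1) hk2 hk0
  exact not_mem_insert' (fun e => absurd (lt_of_lt_of_le hix (e ▸ h1)) (lt_irrefl _))
    (hc m h1 h2)

lemma n2_insert_blocked (hij : i < j) (hbl : ¬ clean J i j) :
    n2 l (insert j J) i = n2 l J i := by
  unfold clean at hbl
  push_neg at hbl
  obtain ⟨k0, hk1, hk2, hk0⟩ := hbl
  rw [n2_def, n2_def]
  refine congrArg Finset.card (filter_congr fun k _ => ?_)
  refine and_congr_right fun hk => ⟨clean_mono (subset_insert _ _), fun hc m h1 h2 => ?_⟩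
  have hkj : k < j := by
    by_contra hjk
    push_neg at hjk
    exact hc k0 hk1 (le_trans hk2 hjk) hk0
  exact not_mem_insert' (fun e => absurd (lt_of_le_of_lt (e ▸ h2) hkj) (lt_irrefl _))
    (hc m h1 h2)

lemma nu_insert_lt (hij : i < j) (hi : i ∉ J) :
    nu l (insert i J) j + 1 = nu l J j := by
  rw [nu, nu, show univ.filter (fun x : Fin l => x < j ∧ x ∉ insert i J)
      = (univ.filter (fun x : Fin l => x < j ∧ x ∉ J)).erase i from ?_]
  · exact card_erase_add_one (by simp only [mem_filter, mem_univ, true_and]; exact ⟨hij, hi⟩)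
  · ext x
    simp only [mem_erase, mem_filter, mem_univ, true_and, mem_insert, not_or]
    tauto

lemma nu_insert_gt (hij : j < i) : nu l (insert i J) j = nu l J j := by
  rw [nu, nu]
  refine congrArg Finset.card (filter_congr fun x _ => ?_)
  simp only [mem_insert, not_or]
  constructor
  · rintro ⟨h1, _, h3⟩; exact ⟨h1, h3⟩
  · rintro ⟨h1, h2⟩
    exact ⟨h1, fun e => absurd (lt_trans (e ▸ h1) hij) (lt_irrefl _), h2⟩

/-! ### the exchange lemma -/

lemma cond_exchange (hij : i < j) (hi : i ∉ J) (hj : j ∉ J) :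
    ((Odd (n1 l J i) ∨ Odd (n2 l J i)) ∧
      (Odd (n1 l (insert i J) j) ∨ Odd (n2 l (insert i J) j))) ↔
    ((Odd (n1 l J j) ∨ Odd (n2 l J j)) ∧
      (Odd (n1 l (insert j J) i) ∨ Odd (n2 l (insert j J) i))) := by
  have hd : (i : ℕ) < (j : ℕ) := hij
  by_cases hcl : clean J i j
  · rw [n1_insert_same hij hcl, n2_insert_same hij hcl, n2_insert_lt hij, n1_insert_gt hij,
      n1_parts hij hcl, n2_parts hij hcl]
    simp only [Nat.odd_iff]
    omega
  · rw [n1_insert_blocked hij hcl, n2_insert_blocked hij hcl, n2_insert_lt hij,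
      n1_insert_gt hij]
    tauto

lemma inc1_antisym_lt (hij : i < j) (hi : i ∉ J) (hj : j ∉ J) :
    inc1 l J i * inc1 l (insert i J) j + inc1 l J j * inc1 l (insert j J) i = 0 := by
  by_cases hc : (Odd (n1 l J i) ∨ Odd (n2 l J i)) ∧
      (Odd (n1 l (insert i J) j) ∨ Odd (n2 l (insert i J) j))
  · have hc' := (cond_exchange hij hi hj).mp hc
    rw [inc1, inc1, inc1, inc1, if_pos hc.1, if_pos hc.2, if_pos hc'.1, if_pos hc'.2,
      nu_insert_gt hij, ← nu_insert_lt hij hi, pow_succ]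
    ring
  · have hc' : ¬ ((Odd (n1 l J j) ∨ Odd (n2 l J j)) ∧
        (Odd (n1 l (insert j J) i) ∨ Odd (n2 l (insert j J) i))) := fun h =>
      hc ((cond_exchange hij hi hj).mpr h)
    rw [not_and_or] at hc hc'
    have h1 : inc1 l J i * inc1 l (insert i J) j = 0 := by
      rcases hc with h | h <;> rw [inc1, inc1]
      · rw [if_neg h]; ring
      · rw [if_neg h]; ring
    have h2 : inc1 l J j * inc1 l (insert j J) i = 0 := by
      rcases hc' with h | h <;> rw [inc1, inc1]
      · rw [if_neg h]; ring
      · rw [if_neg h]; ring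
    rw [h1, h2]; ring

lemma inc1_antisym (hi : i ∉ J) (hj : j ∉ J) (hne : i ≠ j) :
    inc1 l J i * inc1 l (insert i J) j + inc1 l J j * inc1 l (insert j J) i = 0 := by
  rcases lt_or_gt_of_ne hne with h | h
  · exact inc1_antisym_lt h hi hj
  · rw [add_comm]; exact inc1_antisym_lt h hj hi

lemma inc2_antisym (hi : i ∉ J) (hj : j ∉ J) (hne : i ≠ j) :
    inc2 l J i * inc2 l (insert i J) j + inc2 l J j * inc2 l (insert j J) i = 0 := by
  rw [inc2_eq, inc2_eq, inc2_eq, inc2_eq]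
  have := inc1_antisym hi hj hne
  ring_nf
  ring_nf at this
  linarith

open Finset

variable {R : Type} [CommRing R] {α : Type*} [DecidableEq α]

lemma sum_pairs_antisym (s : Finset α) (G : α → α → R)
    (h : ∀ i ∈ s, ∀ j ∈ s, i ≠ j → G i j + G j i = 0) :
    ∑ i ∈ s, ∑ j ∈ s.erase i, G i j = 0 := by
  refine Eq.trans (Finset.sum_sigma' s (fun i => s.erase i) (fun i j => G i j)) ?_
  refine Finset.sum_involution (fun p _ => ⟨p.2, p.1⟩) ?_ ?_ ?_ ?_
  · rintro ⟨i, j⟩ hp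
    rw [mem_sigma] at hp
    obtain ⟨h1, h2⟩ := hp
    rw [mem_erase] at h2
    exact h i h1 j h2.2 (fun e => h2.1 (e ▸ rfl))
  · rintro ⟨i, j⟩ hp _
    rw [mem_sigma, mem_erase] at hp
    intro e
    exact hp.2.1 (congrArg Sigma.fst e)
  · rintro ⟨i, j⟩ hp
    rw [mem_sigma, mem_erase] at hp
    rw [mem_sigma, mem_erase]
    exact ⟨hp.2.2, fun e => hp.2.1 e.symm, hp.1⟩
  · rintro ⟨i, j⟩ _
    rfl

variable {l : ℕ}

lemma delta_apply (inc : Finset (Fin l) → Fin l → ℤ) (q : ℕ) (f : Coch R l q)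
    (J : {J : Finset (Fin l) // J.card + (q + 1) = l}) :
    delta R l inc q f J = ∑ i ∈ J.1ᶜ.attach, (inc J.1 i.1 : R) * f (insElt l q J i) := rfl

lemma dd_zero (inc : Finset (Fin l) → Fin l → ℤ)
    (hanti : ∀ (J : Finset (Fin l)) (i j : Fin l), i ∉ J → j ∉ J → i ≠ j →
      inc J i * inc (insert i J) j + inc J j * inc (insert j J) i = 0) (q : ℕ) :
    (delta R l inc (q + 1)).comp (delta R l inc q) = 0 := by
  apply LinearMap.ext
  intro f
  funext J
  classical
  set F : Finset (Fin l) → R := fun A => if h : A.card + q = l then f ⟨A, h⟩ else 0 with hF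
  have hfF : ∀ (K : {A : Finset (Fin l) // A.card + (q + 1) = l}) (j : {x : Fin l // x ∈ K.1ᶜ}),
      f (insElt l q K j) = F (insert j.1 K.1) := by
    intro K j
    have hc : (insert j.1 K.1).card + q = l := (insElt l q K j).2
    simp only [hF]
    rw [dif_pos hc]
    exact congrArg f (Subtype.ext rfl)
  have step1 : (delta R l inc (q + 1)).comp (delta R l inc q) f J
      = ∑ i ∈ J.1ᶜ.attach, (inc J.1 i.1 : R) *
          ∑ j ∈ (insert i.1 J.1)ᶜ, (inc (insert i.1 J.1) j : R) *
            F (insert j (insert i.1 J.1)) := by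
    rw [LinearMap.comp_apply, delta_apply]
    refine Finset.sum_congr rfl fun i _ => ?_
    congr 1
    rw [delta_apply]
    have : ∀ j : {x : Fin l // x ∈ (insElt l (q+1) J i).1ᶜ},
        (inc (insElt l (q+1) J i).1 j.1 : R) * f (insElt l q (insElt l (q+1) J i) j)
        = (inc (insert i.1 J.1) j.1 : R) * F (insert j.1 (insert i.1 J.1)) := by
      intro j
      rw [hfF]
      rfl
    rw [Finset.sum_congr rfl (fun j _ => this j)]
    exact Finset.sum_attach ((insert i.1 J.1)ᶜ)
      (fun j => (inc (insert i.1 J.1) j : R) * F (insert j (insert i.1 J.1)))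
  rw [step1]
  have step2 : ∑ i ∈ J.1ᶜ.attach, (inc J.1 i.1 : R) *
          ∑ j ∈ (insert i.1 J.1)ᶜ, (inc (insert i.1 J.1) j : R) *
            F (insert j (insert i.1 J.1))
      = ∑ i ∈ J.1ᶜ, (inc J.1 i : R) *
          ∑ j ∈ (insert i J.1)ᶜ, (inc (insert i J.1) j : R) *
            F (insert j (insert i J.1)) :=
    Finset.sum_attach (J.1ᶜ) (fun i => (inc J.1 i : R) *
      ∑ j ∈ (insert i J.1)ᶜ, (inc (insert i J.1) j : R) * F (insert j (insert i J.1)))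
  rw [step2]
  have step3 : ∀ i ∈ J.1ᶜ, (inc J.1 i : R) *
          (∑ j ∈ (insert i J.1)ᶜ, (inc (insert i J.1) j : R) * F (insert j (insert i J.1)))
      = ∑ j ∈ J.1ᶜ.erase i,
          (inc J.1 i : R) * ((inc (insert i J.1) j : R) * F (insert j (insert i J.1))) := by
    intro i _
    rw [Finset.compl_insert, Finset.mul_sum]
  rw [Finset.sum_congr rfl step3]
  apply sum_pairs_antisym
  intro i hi j hj hne
  rw [Finset.mem_compl] at hi hj
  have h0 := hanti J.1 i j hi hj hne
  have hcast : ((inc J.1 i : ℤ) : R) * ((inc (insert i J.1) j : ℤ) : R)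
      + ((inc J.1 j : ℤ) : R) * ((inc (insert j J.1) i : ℤ) : R) = 0 := by
    have := congrArg (fun z : ℤ => (z : R)) h0
    push_cast at this
    convert this using 1
  have hFs : F (insert i (insert j J.1)) = F (insert j (insert i J.1)) := by
    rw [Finset.insert_comm]
  rw [hFs]
  linear_combination (F (insert j (insert i J.1))) * hcast


/-! ### the homotopy, weights, and the support lemma -/

def minc (A : Finset (Fin l)) : ℕ := if h : Aᶜ.Nonempty then ((Aᶜ).min' h : ℕ) else l

def upperP (A : Finset (Fin l)) : Prop := ∃ b ∈ Aᶜ, (b : ℕ) = minc A + 1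

instance (A : Finset (Fin l)) : Decidable (upperP A) := by unfold upperP; infer_instance

def Wt (A : Finset (Fin l)) : ℕ := 2 * minc A + (if upperP A then 1 else 0)

lemma minc_le_of_mem {A : Finset (Fin l)} {x : Fin l} (hx : x ∈ Aᶜ) : minc A ≤ (x : ℕ) := by
  rw [minc, dif_pos ⟨x, hx⟩]
  exact Finset.min'_le _ _ hx

lemma minc_ge {A : Finset (Fin l)} {c : ℕ} (hne : Aᶜ.Nonempty)
    (h : ∀ y ∈ Aᶜ, c ≤ (y : ℕ)) : c ≤ minc A := by
  rw [minc, dif_pos hne]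
  exact h _ (Finset.min'_mem _ _)

lemma minc_eq {A : Finset (Fin l)} {x : Fin l} (hx : x ∈ Aᶜ)
    (h : ∀ y ∈ Aᶜ, (x : ℕ) ≤ (y : ℕ)) : minc A = (x : ℕ) :=
  le_antisymm (minc_le_of_mem hx) (minc_ge ⟨x, hx⟩ h)

lemma Wt_le (A : Finset (Fin l)) : Wt A ≤ 2 * minc A + 1 := by
  rw [Wt]; split <;> omega

lemma Wt_ge (A : Finset (Fin l)) : 2 * minc A ≤ Wt A := by
  rw [Wt]; omega

lemma Wt_upper {A : Finset (Fin l)} (h : upperP A) : Wt A = 2 * minc A + 1 := by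
  rw [Wt, if_pos h]

lemma Wt_lower {A : Finset (Fin l)} (h : ¬ upperP A) : Wt A = 2 * minc A := by
  rw [Wt, if_neg h, add_zero]

lemma minc_le_l (A : Finset (Fin l)) : minc A ≤ l := by
  rw [minc]; split
  · exact le_of_lt (Fin.isLt _)
  · exact le_rfl

lemma Wt_top (A : Finset (Fin l)) : Wt A ≤ 2 * l + 1 := by
  have h1 := Wt_le A
  have h2 := minc_le_l A
  omega

/-- turn an element of the cochain group into a total function on finsets -/
def Fg (q : ℕ) (g : Coch ℤ l q) : Finset (Fin l) → ℤ :=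
  fun A => if h : A.card + q = l then g ⟨A, h⟩ else 0

lemma Fg_eq (q : ℕ) (g : Coch ℤ l q) (A : Finset (Fin l)) (h : A.card + q = l) :
    Fg q g A = g ⟨A, h⟩ := by
  rw [Fg, dif_pos h]

/-- the homotopy `h` -/
def hmapFun (q : ℕ) (g : Coch ℤ l (q + 1)) : Coch ℤ l q := fun J =>
  -∑ b ∈ J.1.filter (fun b : Fin l => (b : ℕ) = minc J.1 + 1), Fg (q + 1) g (J.1.erase b)

lemma hmapFun_of_not (q : ℕ) (g : Coch ℤ l (q + 1)) (J : {J : Finset (Fin l) // J.card + q = l})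
    (h : ∀ b ∈ J.1, (b : ℕ) ≠ minc J.1 + 1) : hmapFun q g J = 0 := by
  unfold hmapFun
  rw [Finset.filter_eq_empty_iff.mpr h, Finset.sum_empty, neg_zero]

lemma hmapFun_of (q : ℕ) (g : Coch ℤ l (q + 1)) (J : {J : Finset (Fin l) // J.card + q = l})
    (b : Fin l) (hb : b ∈ J.1) (hv : (b : ℕ) = minc J.1 + 1) :
    hmapFun q g J = - Fg (q + 1) g (J.1.erase b) := by
  unfold hmapFun
  rw [show J.1.filter (fun x : Fin l => (x : ℕ) = minc J.1 + 1) = {b} from ?_, Finset.sum_singleton]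
  ext x
  simp only [Finset.mem_filter, Finset.mem_singleton]
  constructor
  · rintro ⟨hx, he⟩
    exact Fin.ext (he.trans hv.symm)
  · rintro rfl
    exact ⟨hb, hv⟩

lemma hmapFun_zero (q : ℕ) : hmapFun q (0 : Coch ℤ l (q + 1)) = 0 := by
  funext J
  unfold hmapFun
  have : ∀ b ∈ J.1.filter (fun b : Fin l => (b : ℕ) = minc J.1 + 1),
      Fg (q + 1) (0 : Coch ℤ l (q + 1)) (J.1.erase b) = 0 := by
    intro b _
    rw [Fg]
    split <;> rfl
  rw [Finset.sum_congr rfl this, Finset.sum_const_zero, neg_zero]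
  rfl

lemma delta_eval (inc : Finset (Fin l) → Fin l → ℤ) (q : ℕ) (f : Coch ℤ l q)
    (J : {J : Finset (Fin l) // J.card + (q + 1) = l}) :
    delta ℤ l inc q f J = ∑ i ∈ J.1ᶜ, (inc J.1 i) * Fg q f (insert i J.1) := by
  rw [delta_apply]
  simp only [Int.cast_id]
  have : ∀ i : {x : Fin l // x ∈ J.1ᶜ},
      (inc J.1 i.1) * f (insElt l q J i) = (inc J.1 i.1) * Fg q f (insert i.1 J.1) := by
    intro i
    have h2 : (insert i.1 J.1).card + q = l := (insElt l q J i).2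
    rw [Fg_eq q f (insert i.1 J.1) h2]
    exact congrArg (fun z => inc J.1 i.1 * z) (congrArg f (Subtype.ext rfl))
  rw [Finset.sum_congr rfl fun i _ => this i]
  exact Finset.sum_attach (J.1ᶜ) (fun i => (inc J.1 i) * Fg q f (insert i J.1))

lemma support_lemma (q : ℕ) (g : Coch ℤ l (q + 2))
    (J : {J : Finset (Fin l) // J.card + (q + 2) = l})
    (hg : ∀ J' : {J : Finset (Fin l) // J.card + (q + 2) = l}, Wt J.1 < Wt J'.1 → g J' = 0) :
    delta ℤ l (inc1 l) (q + 1) (hmapFun (q + 1) g) J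
      + hmapFun (q + 2) (delta ℤ l (inc1 l) (q + 2) g) J = g J := by
  classical
  have hScard : J.1ᶜ.card = q + 2 := by
    have h1 := J.2
    have h2 : J.1.card + J.1ᶜ.card = l := by
      rw [Finset.card_add_card_compl, Fintype.card_fin]
    omega
  have hne : J.1ᶜ.Nonempty := Finset.card_pos.mp (by omega)
  set a : Fin l := J.1ᶜ.min' hne with ha_def
  have haS : a ∈ J.1ᶜ := Finset.min'_mem _ _
  have haJ : a ∉ J.1 := Finset.mem_compl.mp haS
  have hminJ : ∀ x : Fin l, x ∉ J.1 → a ≤ x := fun x hx =>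
    Finset.min'_le _ _ (Finset.mem_compl.mpr hx)
  have hminc : minc J.1 = (a : ℕ) := by rw [minc, dif_pos hne]
  obtain ⟨t, htS, hta⟩ := Finset.exists_mem_ne (s := J.1ᶜ) (by omega) a
  have htgt : (a : ℕ) < (t : ℕ) := by
    have h1 : a ≤ t := hminJ t (Finset.mem_compl.mp htS)
    have h2 : (a : ℕ) ≤ (t : ℕ) := h1
    rcases lt_or_eq_of_le h2 with h | h
    · exact h
    · exact absurd (Fin.ext h).symm hta
  have hbl : (a : ℕ) + 1 < l := by have := t.isLt; omega
  set b : Fin l := ⟨(a : ℕ) + 1, hbl⟩ with hb_def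
  have hbval : (b : ℕ) = (a : ℕ) + 1 := rfl
  have hab : a ≠ b := by
    intro e
    have := congrArg Fin.val e
    rw [hbval] at this
    omega
  have hWJle : Wt J.1 ≤ 2 * (a : ℕ) + 1 := by
    have := Wt_le J.1
    omega
  -- the generic "remote value vanishes" helper
  have hvanish : ∀ A : Finset (Fin l), ∀ h : A.card + (q + 2) = l,
      Wt J.1 < Wt A → Fg (q + 2) g A = 0 := by
    intro A h hW
    rw [Fg_eq _ _ _ h]
    exact hg ⟨A, h⟩ hW
  -- `i = a` term of the first sum always vanishes
  have hterm_a : inc1 l J.1 a * Fg (q + 1) (hmapFun (q + 1) g) (insert a J.1) = 0 := by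
    have hcard_a : (insert a J.1).card + (q + 1) = l := by
      rw [Finset.card_insert_of_notMem haJ]; have := J.2; omega
    rw [Fg_eq _ _ _ hcard_a]
    by_cases hex : ∃ b' ∈ insert a J.1, (b' : ℕ) = minc (insert a J.1) + 1
    · obtain ⟨b', hb'A, hb'v⟩ := hex
      rw [hmapFun_of _ _ _ b' hb'A hb'v]
      have hcompl : (insert a J.1)ᶜ = J.1ᶜ.erase a := Finset.compl_insert
      have hmincA : (a : ℕ) + 1 ≤ minc (insert a J.1) := by
        apply minc_ge
        · rw [hcompl]
          exact ⟨t, Finset.mem_erase.mpr ⟨hta, htS⟩⟩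
        · intro y hy
          rw [hcompl, Finset.mem_erase] at hy
          have h1 : a ≤ y := hminJ y (Finset.mem_compl.mp hy.2)
          have h2 : (a : ℕ) ≤ (y : ℕ) := h1
          have h3 : (y : ℕ) ≠ (a : ℕ) := fun e => hy.1 (Fin.ext e)
          omega
      have hb'mem : b' ∈ insert a J.1 := hb'A
      have hcard'' : ((insert a J.1).erase b').card + (q + 2) = l := by
        rw [Finset.card_erase_of_mem hb'mem, Finset.card_insert_of_notMem haJ]
        have := J.2
        have : 0 < (insert a J.1).card := Finset.card_pos.mpr ⟨b', hb'mem⟩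
        rw [Finset.card_insert_of_notMem haJ] at this
        omega
      have hW : Wt J.1 < Wt ((insert a J.1).erase b') := by
        have hcompl2 : ((insert a J.1).erase b')ᶜ = insert b' (insert a J.1)ᶜ :=
          Finset.compl_erase
        have hm : (a : ℕ) + 1 ≤ minc ((insert a J.1).erase b') := by
          apply minc_ge
          · rw [hcompl2]; exact ⟨b', Finset.mem_insert_self _ _⟩
          · intro y hy
            rw [hcompl2, Finset.mem_insert] at hy
            rcases hy with rfl | hy
            · omega
            · rw [hcompl, Finset.mem_erase] at hy
              have h1 : a ≤ y := hminJ y (Finset.mem_compl.mp hy.2)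
              have h2 : (a : ℕ) ≤ (y : ℕ) := h1
              have h3 : (y : ℕ) ≠ (a : ℕ) := fun e => hy.1 (Fin.ext e)
              omega
        have := Wt_ge ((insert a J.1).erase b')
        omega
      rw [hvanish _ hcard'' hW, neg_zero, mul_zero]
    · push_neg at hex
      rw [hmapFun_of_not _ _ _ hex, mul_zero]

  -- the generic `i ≠ a, b` terms of the first sum vanish
  have hterm_i : ∀ i : Fin l, i ∈ J.1ᶜ → i ≠ a → i ≠ b →
      inc1 l J.1 i * Fg (q + 1) (hmapFun (q + 1) g) (insert i J.1) = 0 := by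
    intro i hiS hia hib
    have hiJ : i ∉ J.1 := Finset.mem_compl.mp hiS
    have hcard_i : (insert i J.1).card + (q + 1) = l := by
      rw [Finset.card_insert_of_notMem hiJ]; have := J.2; omega
    rw [Fg_eq _ _ _ hcard_i]
    have hcompl : (insert i J.1)ᶜ = J.1ᶜ.erase i := Finset.compl_insert
    have hmincI : minc (insert i J.1) = (a : ℕ) := by
      apply minc_eq (x := a)
      · rw [hcompl]; exact Finset.mem_erase.mpr ⟨Ne.symm hia, haS⟩
      · intro y hy
        rw [hcompl, Finset.mem_erase] at hy
        exact Fin.le_def.mp (hminJ y (Finset.mem_compl.mp hy.2))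
    by_cases hbJ : b ∈ J.1
    · have hbA : b ∈ insert i J.1 := Finset.mem_insert_of_mem hbJ
      rw [hmapFun_of _ _ _ b hbA (by rw [hmincI])]
      have hcard'' : ((insert i J.1).erase b).card + (q + 2) = l := by
        rw [Finset.card_erase_of_mem hbA, Finset.card_insert_of_notMem hiJ]
        have h1 := J.2
        have hpos : 0 < J.1.card := Finset.card_pos.mpr ⟨b, hbJ⟩
        omega
      have hcompl2 : ((insert i J.1).erase b)ᶜ = insert b (insert i J.1)ᶜ := Finset.compl_erase
      have hminc'' : minc ((insert i J.1).erase b) = (a : ℕ) := by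
        apply minc_eq (x := a)
        · rw [hcompl2]
          exact Finset.mem_insert_of_mem
            (by rw [hcompl]; exact Finset.mem_erase.mpr ⟨Ne.symm hia, haS⟩)
        · intro y hy
          rw [hcompl2, Finset.mem_insert] at hy
          rcases hy with rfl | hy
          · omega
          · rw [hcompl, Finset.mem_erase] at hy
            exact Fin.le_def.mp (hminJ y (Finset.mem_compl.mp hy.2))
      have hupper'' : upperP ((insert i J.1).erase b) := by
        refine ⟨b, ?_, by rw [hminc'']⟩
        rw [hcompl2]; exact Finset.mem_insert_self _ _
      have hnupJ : ¬ upperP J.1 := by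
        rintro ⟨c, hcS, hcv⟩
        rw [hminc] at hcv
        have hcb : c = b := Fin.ext (by rw [hbval]; exact hcv)
        exact (Finset.mem_compl.mp hcS) (hcb ▸ hbJ)
      have hW : Wt J.1 < Wt ((insert i J.1).erase b) := by
        rw [Wt_upper hupper'', Wt_lower hnupJ, hminc'', hminc]
        omega
      rw [hvanish _ hcard'' hW, neg_zero, mul_zero]
    · have h0 : hmapFun (q + 1) g ⟨insert i J.1, hcard_i⟩ = 0 := by
        apply hmapFun_of_not
        intro b' hb'A hb'v
        rw [hmincI] at hb'v
        have hb'b : b' = b := Fin.ext (by rw [hbval]; exact hb'v)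
        subst hb'b
        rcases Finset.mem_insert.mp hb'A with h | h
        · exact hib h.symm
        · exact hbJ h
      rw [h0, mul_zero]
  by_cases hbJ : b ∈ J.1
  · -- `J` is of "lower" type
    have hnupJ : ¬ upperP J.1 := by
      rintro ⟨c, hcS, hcv⟩
      rw [hminc] at hcv
      have hcb : c = b := Fin.ext (by rw [hbval]; exact hcv)
      exact (Finset.mem_compl.mp hcS) (hcb ▸ hbJ)
    have hT1 : delta ℤ l (inc1 l) (q + 1) (hmapFun (q + 1) g) J = 0 := by
      rw [delta_eval]
      apply Finset.sum_eq_zero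
      intro i hiS
      have hib : i ≠ b := fun e => (Finset.mem_compl.mp hiS) (e ▸ hbJ)
      by_cases hia : i = a
      · subst hia; exact hterm_a
      · exact hterm_i i hiS hia hib
    have hcard' : (J.1.erase b).card + (q + 2 + 1) = l := by
      rw [Finset.card_erase_of_mem hbJ]
      have h1 := J.2
      have hpos : 0 < J.1.card := Finset.card_pos.mpr ⟨b, hbJ⟩
      omega
    have hcompl : (J.1.erase b)ᶜ = insert b J.1ᶜ := Finset.compl_erase
    have hT2 : hmapFun (q + 2) (delta ℤ l (inc1 l) (q + 2) g) J = g J := by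
      rw [hmapFun_of _ _ _ b hbJ (by rw [hminc]), Fg_eq _ _ _ hcard',
        delta_eval]
      have hzero : ∀ k ∈ ((⟨J.1.erase b, hcard'⟩ :
          {A : Finset (Fin l) // A.card + (q + 2 + 1) = l}) : Finset (Fin l))ᶜ, k ≠ b →
          inc1 l (J.1.erase b) k * Fg (q + 2) g (insert k (J.1.erase b)) = 0 := by
        intro k hk hkb
        have hk' : k ∈ insert b J.1ᶜ := by rw [← hcompl]; exact hk
        have hkS : k ∈ J.1ᶜ := by
          rcases Finset.mem_insert.mp hk' with h | h
          · exact absurd h hkb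
          · exact h
        have hkJ : k ∉ J.1 := Finset.mem_compl.mp hkS
        have hkE : k ∉ J.1.erase b := fun h => hkJ (Finset.mem_of_mem_erase h)
        have hcard'' : (insert k (J.1.erase b)).card + (q + 2) = l := by
          rw [Finset.card_insert_of_notMem hkE, Finset.card_erase_of_mem hbJ]
          have h1 := J.2
          have hpos : 0 < J.1.card := Finset.card_pos.mpr ⟨b, hbJ⟩
          omega
        have hcompl2 : (insert k (J.1.erase b))ᶜ = (insert b J.1ᶜ).erase k := by
          rw [Finset.compl_insert, hcompl]
        by_cases hka : k = a
        · have hkaval : (k : ℕ) = (a : ℕ) := congrArg Fin.val hka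
          have hm : (a : ℕ) + 1 ≤ minc (insert k (J.1.erase b)) := by
            apply minc_ge
            · rw [hcompl2]
              exact ⟨b, Finset.mem_erase.mpr ⟨Ne.symm hkb, Finset.mem_insert_self _ _⟩⟩
            · intro y hy
              rw [hcompl2, Finset.mem_erase, Finset.mem_insert] at hy
              rcases hy.2 with rfl | hyS
              · omega
              · have h1 : (a : ℕ) ≤ (y : ℕ) :=
                  Fin.le_def.mp (hminJ y (Finset.mem_compl.mp hyS))
                have h2 : (y : ℕ) ≠ (k : ℕ) := fun e => hy.1 (Fin.ext e)
                omega
          have hW : Wt J.1 < Wt (insert k (J.1.erase b)) := by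
            have := Wt_ge (insert k (J.1.erase b))
            omega
          rw [hvanish _ hcard'' hW, mul_zero]
        · have hminc'' : minc (insert k (J.1.erase b)) = (a : ℕ) := by
            apply minc_eq (x := a)
            · rw [hcompl2]
              exact Finset.mem_erase.mpr ⟨Ne.symm hka, Finset.mem_insert_of_mem haS⟩
            · intro y hy
              rw [hcompl2, Finset.mem_erase, Finset.mem_insert] at hy
              rcases hy.2 with rfl | hyS
              · omega
              · exact Fin.le_def.mp (hminJ y (Finset.mem_compl.mp hyS))
          have hupper'' : upperP (insert k (J.1.erase b)) := by
            refine ⟨b, ?_, by rw [hminc'']⟩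
            rw [hcompl2]
            exact Finset.mem_erase.mpr ⟨Ne.symm hkb, Finset.mem_insert_self _ _⟩
          have hW : Wt J.1 < Wt (insert k (J.1.erase b)) := by
            rw [Wt_upper hupper'', Wt_lower hnupJ, hminc'', hminc]
            omega
          rw [hvanish _ hcard'' hW, mul_zero]
      have hbmem : b ∈ ((⟨J.1.erase b, hcard'⟩ :
          {A : Finset (Fin l) // A.card + (q + 2 + 1) = l}) : Finset (Fin l))ᶜ := by
        show b ∈ (J.1.erase b)ᶜ
        rw [hcompl]; exact Finset.mem_insert_self _ _
      rw [Finset.sum_eq_single_of_mem b hbmem hzero]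
      have hmain : inc1 l (J.1.erase b) b = -1 := by
        refine inc1_min_succ (a := a) ?_ ?_ hbval (Finset.notMem_erase _ _)
        · exact fun h => haJ (Finset.mem_of_mem_erase h)
        · intro x hx
          by_cases hxb : x = b
          · subst hxb; rw [Fin.le_def]; omega
          · refine hminJ x fun hxJ => hx (Finset.mem_erase.mpr ⟨hxb, hxJ⟩)
      rw [Finset.insert_erase hbJ] at *
      rw [hmain, Fg_eq _ _ _ J.2]
      have hJeta : (⟨J.1, J.2⟩ : {A : Finset (Fin l) // A.card + (q + 2) = l}) = J :=
        Subtype.ext rfl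
      rw [hJeta]
      ring
    rw [hT1, hT2, zero_add]
  · -- `J` is of "upper" type
    have hT2 : hmapFun (q + 2) (delta ℤ l (inc1 l) (q + 2) g) J = 0 := by
      apply hmapFun_of_not
      intro b' hb' hv
      rw [hminc] at hv
      have hb'b : b' = b := Fin.ext (by rw [hbval]; exact hv)
      exact hbJ (hb'b ▸ hb')
    have hT1 : delta ℤ l (inc1 l) (q + 1) (hmapFun (q + 1) g) J = g J := by
      rw [delta_eval]
      have hzero : ∀ i ∈ J.1ᶜ, i ≠ b →
          inc1 l J.1 i * Fg (q + 1) (hmapFun (q + 1) g) (insert i J.1) = 0 := by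
        intro i hiS hib
        by_cases hia : i = a
        · subst hia; exact hterm_a
        · exact hterm_i i hiS hia hib
      rw [Finset.sum_eq_single_of_mem b (Finset.mem_compl.mpr hbJ) hzero]
      have hcard_b : (insert b J.1).card + (q + 1) = l := by
        rw [Finset.card_insert_of_notMem hbJ]; have := J.2; omega
      rw [Fg_eq _ _ _ hcard_b]
      have hmincB : minc (insert b J.1) = (a : ℕ) := by
        apply minc_eq (x := a)
        · rw [Finset.compl_insert]
          exact Finset.mem_erase.mpr ⟨hab, haS⟩
        · intro y hy
          rw [Finset.compl_insert, Finset.mem_erase] at hy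
          exact Fin.le_def.mp (hminJ y (Finset.mem_compl.mp hy.2))
      rw [hmapFun_of _ _ _ b (Finset.mem_insert_self _ _) (by rw [hmincB])]
      rw [Finset.erase_insert hbJ, Fg_eq _ _ _ J.2]
      rw [inc1_min_succ haJ hminJ hbval hbJ]
      have hJeta : (⟨J.1, J.2⟩ : {A : Finset (Fin l) // A.card + (q + 2) = l}) = J :=
        Subtype.ext rfl
      rw [hJeta]
      ring
    rw [hT1, hT2, add_zero]


/-! ### exactness in degrees ≥ 2 -/

def Nmap (q : ℕ) (x : Coch ℤ l (q + 2)) : Coch ℤ l (q + 2) :=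
  delta ℤ l (inc1 l) (q + 1) (hmapFun (q + 1) x)
    + hmapFun (q + 2) (delta ℤ l (inc1 l) (q + 2) x) - x

lemma Nmap_iterate_vanish (q : ℕ) :
    ∀ (m : ℕ) (g : Coch ℤ l (q + 2)) (J : {J : Finset (Fin l) // J.card + (q + 2) = l}),
      2 * l + 2 ≤ Wt J.1 + m → (Nmap q)^[m] g J = 0 := by
  intro m
  induction m with
  | zero =>
      intro g J h
      exact absurd h (by have := Wt_top (l := l) J.1; omega)
  | succ m ih =>
      intro g J h
      rw [Function.iterate_succ_apply']
      have hsupp : ∀ J' : {J : Finset (Fin l) // J.card + (q + 2) = l},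
          Wt J.1 < Wt J'.1 → (Nmap q)^[m] g J' = 0 := fun J' hJ' => ih g J' (by omega)
      have hs := support_lemma q ((Nmap q)^[m] g) J hsupp
      simp only [Nmap, Pi.add_apply, Pi.sub_apply]
      omega

lemma dd_inc1 (q : ℕ) :
    (delta ℤ l (inc1 l) (q + 1)).comp (delta ℤ l (inc1 l) q) = 0 :=
  dd_zero (inc1 l) (fun _ _ _ hi hj hne => inc1_antisym hi hj hne) q

lemma dd_inc1_apply (q : ℕ) (y : Coch ℤ l q) :
    delta ℤ l (inc1 l) (q + 1) (delta ℤ l (inc1 l) q y) = 0 := by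
  have h := DFunLike.congr_fun (dd_inc1 (l := l) q) y
  simpa using h

lemma exact_aux (q : ℕ) : ∀ (m : ℕ) (x : Coch ℤ l (q + 2)),
    delta ℤ l (inc1 l) (q + 2) x = 0 → (Nmap q)^[m] x = 0 →
    x ∈ LinearMap.range (delta ℤ l (inc1 l) (q + 1)) := by
  intro m
  induction m with
  | zero =>
      intro x _ h0
      rw [Function.iterate_zero_apply] at h0
      rw [h0]
      exact Submodule.zero_mem _
  | succ m ih =>
      intro x hker hN
      have hBzero : hmapFun (q + 2) (delta ℤ l (inc1 l) (q + 2) x) = 0 := by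
        rw [hker, hmapFun_zero]
      have hNker : delta ℤ l (inc1 l) (q + 2) (Nmap q x) = 0 := by
        unfold Nmap
        rw [map_sub, map_add, dd_inc1_apply, hker, hmapFun_zero, map_zero]
        simp
      have hNN : (Nmap q)^[m] (Nmap q x) = 0 := by
        rw [← Function.iterate_succ_apply]; exact hN
      have hmem := ih (Nmap q x) hNker hNN
      have hxeq : x = delta ℤ l (inc1 l) (q + 1) (hmapFun (q + 1) x) - Nmap q x := by
        unfold Nmap
        rw [hBzero]
        funext K
        simp only [Pi.sub_apply, Pi.add_apply, Pi.zero_apply]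
        ring
      rw [hxeq]
      exact Submodule.sub_mem _ ⟨hmapFun (q + 1) x, rfl⟩ hmem

lemma exact2 (q : ℕ) (x : Coch ℤ l (q + 2)) (hx : delta ℤ l (inc1 l) (q + 2) x = 0) :
    x ∈ LinearMap.range (delta ℤ l (inc1 l) (q + 1)) := by
  apply exact_aux q (2 * l + 2) x hx
  funext J
  exact Nmap_iterate_vanish q (2 * l + 2) x J (by omega)

/-! ### degrees 0 and 1 -/

lemma delta0_zero : delta ℤ l (inc2 l) 0 = 0 := by
  apply LinearMap.ext
  intro f
  funext J
  rw [delta_eval]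
  have hc1 : J.1ᶜ.card = 1 := by
    have h2 : J.1.card + J.1ᶜ.card = l := by
      rw [Finset.card_add_card_compl, Fintype.card_fin]
    have := J.2
    omega
  obtain ⟨x, hx⟩ := Finset.card_eq_one.mp hc1
  have : ∀ i ∈ J.1ᶜ, inc2 l J.1 i * Fg 0 f (insert i J.1) = 0 := by
    intro i hi
    rw [hx, Finset.mem_singleton] at hi
    subst hi
    rw [inc2_singleton hx, zero_mul]
  rw [Finset.sum_eq_zero this]
  simp

lemma compl_pair_erase₁ {x y : Fin l} (hxy : x ≠ y) :
    insert x (({x, y} : Finset (Fin l))ᶜ) = ({y} : Finset (Fin l))ᶜ := by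
  rw [← Finset.compl_erase]
  congr 1
  rw [Finset.erase_insert (by simpa using hxy)]

lemma compl_pair_erase₂ {x y : Fin l} (hxy : x ≠ y) :
    insert y (({x, y} : Finset (Fin l))ᶜ) = ({x} : Finset (Fin l))ᶜ := by
  rw [← Finset.compl_erase]
  congr 1
  rw [Finset.pair_comm, Finset.erase_insert (by simpa using hxy.symm)]

lemma pair_compl_card {x y : Fin l} (hxy : x ≠ y) (hl2 : 2 ≤ l) :
    (({x, y} : Finset (Fin l))ᶜ).card + 2 = l := by
  have h2 : (({x, y} : Finset (Fin l))).card + (({x, y} : Finset (Fin l))ᶜ).card = l := by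
    rw [Finset.card_add_card_compl, Fintype.card_fin]
  rw [Finset.card_insert_of_notMem (by simpa using hxy), Finset.card_singleton] at h2
  omega

lemma singleton_compl_card (x : Fin l) (hl : 1 ≤ l) :
    (({x} : Finset (Fin l))ᶜ).card + 1 = l := by
  have h2 : (({x} : Finset (Fin l))).card + (({x} : Finset (Fin l))ᶜ).card = l := by
    rw [Finset.card_add_card_compl, Fintype.card_fin]
  rw [Finset.card_singleton] at h2
  omega

/-- the relation coming from an adjacent pair: `f({x}ᶜ) = f({x+1}ᶜ)` -/
lemma ker1_adj (hl : 1 ≤ l) (f : Coch ℤ l 1) (hf : delta ℤ l (inc2 l) 1 f = 0)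
    (x x' : Fin l) (hx' : (x' : ℕ) = (x : ℕ) + 1) :
    f ⟨({x} : Finset (Fin l))ᶜ, singleton_compl_card x hl⟩
      = f ⟨({x'} : Finset (Fin l))ᶜ, singleton_compl_card x' hl⟩ := by
  have hxy : x ≠ x' := by
    intro e; have := congrArg Fin.val e; omega
  have hl2 : 2 ≤ l := by have := x'.isLt; omega
  have hcard := pair_compl_card hxy hl2
  have h0 : delta ℤ l (inc2 l) 1 f ⟨(({x, x'} : Finset (Fin l))ᶜ), hcard⟩ = 0 := by
    rw [hf]; rfl
  rw [delta_eval] at h0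
  have hJc : ((⟨(({x, x'} : Finset (Fin l))ᶜ), hcard⟩ :
      {J : Finset (Fin l) // J.card + (1 + 1) = l}) : Finset (Fin l))ᶜ
      = ({x, x'} : Finset (Fin l)) := compl_compl _
  rw [hJc, Finset.sum_pair hxy, compl_pair_erase₁ hxy, compl_pair_erase₂ hxy,
    inc2_adj_left (compl_compl _) hx', inc2_adj_right (compl_compl _) hx',
    Fg_eq _ _ _ (singleton_compl_card x' hl), Fg_eq _ _ _ (singleton_compl_card x hl)] at h0
  omega

lemma compl_card_one (J : {J : Finset (Fin l) // J.card + 1 = l}) :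
    ∃ x : Fin l, J.1 = ({x} : Finset (Fin l))ᶜ := by
  have hc1 : J.1ᶜ.card = 1 := by
    have h2 : J.1.card + J.1ᶜ.card = l := by
      rw [Finset.card_add_card_compl, Fintype.card_fin]
    have := J.2
    omega
  obtain ⟨x, hx⟩ := Finset.card_eq_one.mp hc1
  exact ⟨x, by rw [← compl_compl J.1, hx]⟩

lemma ker1_const (hl : 1 ≤ l) (f : Coch ℤ l 1) (hf : delta ℤ l (inc2 l) 1 f = 0)
    (J J' : {J : Finset (Fin l) // J.card + 1 = l}) : f J = f J' := by
  have key : ∀ (n : ℕ) (hn : n < l),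
      f ⟨({⟨n, hn⟩} : Finset (Fin l))ᶜ, singleton_compl_card _ hl⟩
        = f ⟨({⟨0, hl⟩} : Finset (Fin l))ᶜ, singleton_compl_card _ hl⟩ := by
    intro n
    induction n with
    | zero => intro hn; rfl
    | succ n ih =>
        intro hn
        have hn' : n < l := by omega
        have := ker1_adj hl f hf ⟨n, hn'⟩ ⟨n + 1, hn⟩ rfl
        rw [← this]
        exact ih hn'
  obtain ⟨x, hx⟩ := compl_card_one J
  obtain ⟨y, hy⟩ := compl_card_one J'
  have hJ : J = ⟨({x} : Finset (Fin l))ᶜ, singleton_compl_card x hl⟩ := Subtype.ext hx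
  have hJ' : J' = ⟨({y} : Finset (Fin l))ᶜ, singleton_compl_card y hl⟩ := Subtype.ext hy
  rw [hJ, hJ']
  have hxx : x = ⟨(x : ℕ), x.isLt⟩ := by apply Fin.ext; rfl
  have hyy : y = ⟨(y : ℕ), y.isLt⟩ := by apply Fin.ext; rfl
  rw [hxx, hyy, key (x : ℕ) x.isLt, key (y : ℕ) y.isLt]

lemma pair_inc2_sum {J : Finset (Fin l)} {x y : Fin l} (hJc : Jᶜ = {x, y})
    (hxy : (x : ℕ) < (y : ℕ)) : inc2 l J x + inc2 l J y = 0 := by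
  by_cases hadj : (y : ℕ) = (x : ℕ) + 1
  · rw [inc2_adj_left hJc hadj, inc2_adj_right hJc hadj]; ring
  · obtain ⟨h1, h2⟩ := inc2_far hJc (by omega)
    rw [h1, h2]; ring

lemma const_ker (c : ℤ) : delta ℤ l (inc2 l) 1 (fun _ => c) = 0 := by
  funext J
  rw [delta_eval]
  have hc2 : J.1ᶜ.card = 2 := by
    have h2 : J.1.card + J.1ᶜ.card = l := by
      rw [Finset.card_add_card_compl, Fintype.card_fin]
    have := J.2
    omega
  obtain ⟨x, y, hxy, hJc⟩ := Finset.card_eq_two.mp hc2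
  have hJc' : J.1ᶜ = {x, y} := hJc
  have hFg : ∀ i ∈ J.1ᶜ, Fg 1 (fun _ => c : Coch ℤ l 1) (insert i J.1) = c := by
    intro i hi
    have hiJ : i ∉ J.1 := Finset.mem_compl.mp hi
    have hcard : (insert i J.1).card + 1 = l := by
      rw [Finset.card_insert_of_notMem hiJ]; have := J.2; omega
    rw [Fg_eq _ _ _ hcard]
  rw [Finset.sum_congr rfl (fun i hi => by rw [hFg i hi])]
  rw [hJc', Finset.sum_pair hxy]
  have hsum : inc2 l J.1 x + inc2 l J.1 y = 0 := by
    rcases lt_or_gt_of_ne (fun e : (x : ℕ) = (y : ℕ) => hxy (Fin.ext e)) with h | h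
    · exact pair_inc2_sum hJc' h
    · have hJc'' : J.1ᶜ = {y, x} := by rw [hJc', Finset.pair_comm]
      have := pair_inc2_sum hJc'' h
      omega
  show inc2 l J.1 x * c + inc2 l J.1 y * c = 0
  linear_combination c * hsum

lemma delta2_eq (q : ℕ) (f : Coch ℤ l q) (J : {J : Finset (Fin l) // J.card + (q + 1) = l}) :
    delta ℤ l (inc2 l) q f J = 2 * delta ℤ l (inc1 l) q f J := by
  rw [delta_eval, delta_eval, Finset.mul_sum]
  refine Finset.sum_congr rfl fun i _ => ?_
  rw [inc2_eq]
  ring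

lemma ker_inc2_eq (q : ℕ) :
    LinearMap.ker (delta ℤ l (inc2 l) q) = LinearMap.ker (delta ℤ l (inc1 l) q) := by
  ext f
  rw [LinearMap.mem_ker, LinearMap.mem_ker]
  constructor
  · intro h
    funext J
    have := congrFun h J
    rw [delta2_eq] at this
    have h0 : (0 : Coch ℤ l (q + 1)) J = 0 := rfl
    rw [h0] at this
    simpa using (by omega : delta ℤ l (inc1 l) q f J = 0)
  · intro h
    funext J
    rw [delta2_eq, h]
    rfl

/-! ### rank bookkeeping -/

lemma card_index (q : ℕ) (hq : q ≤ l) :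
    Fintype.card {J : Finset (Fin l) // J.card + q = l} = l.choose q := by
  rw [Fintype.card_subtype]
  have : Finset.univ.filter (fun J : Finset (Fin l) => J.card + q = l)
      = Finset.univ.powersetCard (l - q) := by
    ext A
    simp only [Finset.mem_filter, Finset.mem_univ, true_and, Finset.mem_powersetCard,
      Finset.subset_univ]
    omega
  rw [this, Finset.card_powersetCard, Finset.card_univ, Fintype.card_fin,
    Nat.choose_symm hq]

lemma card_index_zero (q : ℕ) (hq : l < q) :
    Fintype.card {J : Finset (Fin l) // J.card + q = l} = 0 := by
  rw [Fintype.card_eq_zero_iff]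
  exact ⟨fun J => absurd J.2 (by omega)⟩

lemma finrank_split {ι κ : Type} [Fintype ι] [Fintype κ]
    (f : (ι → ℤ) →ₗ[ℤ] (κ → ℤ)) :
    Fintype.card ι
      = Module.finrank ℤ (LinearMap.ker f) + Module.finrank ℤ (LinearMap.range f) := by
  classical
  obtain ⟨m, bk⟩ := Submodule.basisOfPid (Pi.basisFun ℤ ι) (LinearMap.ker f)
  obtain ⟨n, br⟩ := Submodule.basisOfPid (Pi.basisFun ℤ κ) (LinearMap.range f)
  choose sec hsec using fun t : Fin n => LinearMap.mem_range.mp (br t).2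
  set σ : (LinearMap.range f) →ₗ[ℤ] (ι → ℤ) := br.constr ℤ sec with hσ
  have hfσ : ∀ y : LinearMap.range f, f (σ y) = (y : κ → ℤ) := by
    intro y
    have hcomp : f.comp σ = (LinearMap.range f).subtype := by
      apply br.ext
      intro t
      rw [LinearMap.comp_apply, hσ, Module.Basis.constr_basis, hsec]
      rfl
    exact DFunLike.congr_fun hcomp y
  set A : (ι → ℤ) →ₗ[ℤ] LinearMap.range f := f.rangeRestrict with hA
  have hAval : ∀ x, ((A x : κ → ℤ)) = f x := fun x => rfl
  have hkerpf : ∀ x : ι → ℤ, ((LinearMap.id : (ι → ℤ) →ₗ[ℤ] (ι → ℤ)) - σ.comp A) x ∈ LinearMap.ker f := by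
    intro x
    rw [LinearMap.mem_ker, LinearMap.sub_apply, map_sub, LinearMap.comp_apply, hfσ,
      hAval, LinearMap.id_apply, sub_self]
  set B : (ι → ℤ) →ₗ[ℤ] LinearMap.ker f :=
    LinearMap.codRestrict (LinearMap.ker f) ((LinearMap.id : (ι → ℤ) →ₗ[ℤ] (ι → ℤ)) - σ.comp A) hkerpf with hB
  set Φ : (ι → ℤ) →ₗ[ℤ] (LinearMap.ker f) × (LinearMap.range f) := B.prod A with hΦ
  set Ψ : (LinearMap.ker f) × (LinearMap.range f) →ₗ[ℤ] (ι → ℤ) :=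
    (LinearMap.ker f).subtype.comp (LinearMap.fst _ _ _)
      + σ.comp (LinearMap.snd _ _ _) with hΨ
  have h1 : Ψ.comp Φ = LinearMap.id := by
    apply LinearMap.ext
    intro x
    simp only [hΨ, hΦ, hB, LinearMap.comp_apply, LinearMap.add_apply, LinearMap.prod_apply,
      Pi.prod, Function.prod_apply, LinearMap.fst_apply, LinearMap.snd_apply, Submodule.coe_subtype,
      LinearMap.codRestrict_apply, LinearMap.sub_apply, LinearMap.id_apply]
    abel
  have h2 : Φ.comp Ψ = LinearMap.id := by
    apply LinearMap.ext
    rintro ⟨k, r⟩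
    have hfk : f (k : ι → ℤ) = 0 := k.2
    have hAkr : A ((k : ι → ℤ) + σ r) = r := by
      apply Subtype.ext
      rw [hAval, map_add, hfk, hfσ, zero_add]
    have hBkr : B ((k : ι → ℤ) + σ r) = k := by
      apply Subtype.ext
      simp only [hB, LinearMap.codRestrict_apply, LinearMap.sub_apply, LinearMap.id_apply,
        LinearMap.comp_apply, hAkr]
      abel
    simp only [hΦ, hΨ, LinearMap.comp_apply, LinearMap.add_apply, LinearMap.prod_apply,
      Pi.prod, Function.prod_apply, LinearMap.fst_apply, LinearMap.snd_apply, Submodule.coe_subtype,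
      LinearMap.id_apply]
    rw [hBkr, hAkr]
  let e : (ι → ℤ) ≃ₗ[ℤ] (LinearMap.ker f) × (LinearMap.range f) :=
    LinearEquiv.ofLinear Φ Ψ h2 h1
  have e0 : Module.finrank ℤ (ι → ℤ) = Fintype.card ι :=
    Module.finrank_eq_card_basis (Pi.basisFun ℤ ι)
  have e1 : Module.finrank ℤ (ι → ℤ)
      = Module.finrank ℤ ((LinearMap.ker f) × (LinearMap.range f)) := e.finrank_eq
  have e2 : Module.finrank ℤ ((LinearMap.ker f) × (LinearMap.range f)) = m + n := by
    rw [Module.finrank_eq_card_basis (bk.prod br)]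
    simp
  have e3 : Module.finrank ℤ (LinearMap.ker f) = m := by
    rw [Module.finrank_eq_card_basis bk, Fintype.card_fin]
  have e4 : Module.finrank ℤ (LinearMap.range f) = n := by
    rw [Module.finrank_eq_card_basis br, Fintype.card_fin]
  omega

lemma finrank_coch (q : ℕ) : Module.finrank ℤ (Coch ℤ l q)
    = Fintype.card {J : Finset (Fin l) // J.card + q = l} :=
  Module.finrank_eq_card_basis (Pi.basisFun _ _)

lemma ker_eq_range (q : ℕ) :
    LinearMap.ker (delta ℤ l (inc1 l) (q + 2))
      = LinearMap.range (delta ℤ l (inc1 l) (q + 1)) := by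
  apply le_antisymm
  · intro x hx
    exact exact2 q x (LinearMap.mem_ker.mp hx)
  · rintro x ⟨y, rfl⟩
    exact LinearMap.mem_ker.mpr (dd_inc1_apply (q + 1) y)

lemma ker1_equiv (hl : 1 ≤ l) :
    Nonempty ((LinearMap.ker (delta ℤ l (inc2 l) 1)) ≃ₗ[ℤ] ℤ) := by
  have hl0 : 0 < l := hl
  set J0 : {J : Finset (Fin l) // J.card + 1 = l} :=
    ⟨({⟨0, hl0⟩} : Finset (Fin l))ᶜ, singleton_compl_card _ hl⟩ with hJ0
  set φ : (LinearMap.ker (delta ℤ l (inc2 l) 1)) →ₗ[ℤ] ℤ :=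
    (LinearMap.proj J0).comp (LinearMap.ker (delta ℤ l (inc2 l) 1)).subtype with hφ
  have hinj : Function.Injective φ := by
    intro f g h
    apply Subtype.ext
    funext J
    have hf := ker1_const hl f.1 (LinearMap.mem_ker.mp f.2) J J0
    have hg := ker1_const hl g.1 (LinearMap.mem_ker.mp g.2) J J0
    rw [hf, hg]
    exact h
  have hsurj : Function.Surjective φ := by
    intro c
    exact ⟨⟨fun _ => c, LinearMap.mem_ker.mpr (const_ker c)⟩, rfl⟩
  exact ⟨LinearEquiv.ofBijective φ ⟨hinj, hsurj⟩⟩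

lemma finrank_ker1 (hl : 1 ≤ l) :
    Module.finrank ℤ (LinearMap.ker (delta ℤ l (inc1 l) 1)) = 1 := by
  obtain ⟨e⟩ := ker1_equiv (l := l) hl
  rw [← ker_inc2_eq]
  rw [e.finrank_eq, Module.finrank_self]

lemma rank_range (hl : 1 ≤ l) (q : ℕ) :
    Module.finrank ℤ (LinearMap.range (delta ℤ l (inc1 l) (q + 1)))
      = (l - 1).choose (q + 1) := by
  induction q with
  | zero =>
      show Module.finrank ℤ (LinearMap.range (delta ℤ l (inc1 l) 1)) = (l - 1).choose 1
      have hsplit : Fintype.card {J : Finset (Fin l) // J.card + 1 = l}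
          = Module.finrank ℤ (LinearMap.ker (delta ℤ l (inc1 l) 1))
            + Module.finrank ℤ (LinearMap.range (delta ℤ l (inc1 l) 1)) :=
        finrank_split _
      have hC1 : Fintype.card {J : Finset (Fin l) // J.card + 1 = l} = l := by
        rw [card_index 1 hl, Nat.choose_one_right]
      have hker1 := finrank_ker1 (l := l) hl
      rw [Nat.choose_one_right]
      omega
  | succ q ih =>
      show Module.finrank ℤ (LinearMap.range (delta ℤ l (inc1 l) (q + 2)))
        = (l - 1).choose (q + 2)
      have hsplit : Fintype.card {J : Finset (Fin l) // J.card + (q + 2) = l}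
          = Module.finrank ℤ (LinearMap.ker (delta ℤ l (inc1 l) (q + 2)))
            + Module.finrank ℤ (LinearMap.range (delta ℤ l (inc1 l) (q + 2))) :=
        finrank_split _
      have hker2 : Module.finrank ℤ (LinearMap.ker (delta ℤ l (inc1 l) (q + 2)))
          = Module.finrank ℤ (LinearMap.range (delta ℤ l (inc1 l) (q + 1))) := by
        rw [ker_eq_range q]
      by_cases hq2 : q + 2 ≤ l
      · have hC : Fintype.card {J : Finset (Fin l) // J.card + (q + 2) = l}
            = l.choose (q + 2) := card_index _ hq2
        have hpas : l.choose (q + 2) = (l - 1).choose (q + 1) + (l - 1).choose (q + 2) := by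
          have hl1 : l = (l - 1) + 1 := by omega
          conv_lhs => rw [hl1]
          rw [Nat.choose_succ_succ]
        omega
      · have hC0 : Fintype.card {J : Finset (Fin l) // J.card + (q + 2) = l} = 0 :=
          card_index_zero _ (by omega)
        have hz : (l - 1).choose (q + 2) = 0 := Nat.choose_eq_zero_of_lt (by omega)
        omega

/-- the quotient of `ℤ` by the ideal `(2)`, as `ZMod 2` -/
noncomputable def zmodEquiv :
    (ℤ ⧸ (Ideal.span {(2 : ℤ)} : Submodule ℤ ℤ)) ≃ₗ[ℤ] ZMod 2 :=
  (Submodule.quotEquivOfEq _ _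
      (by rw [show ((2 : ℕ) : ℤ) = (2 : ℤ) from by norm_num] :
        (Ideal.span {(2 : ℤ)} : Submodule ℤ ℤ) = Ideal.span {((2 : ℕ) : ℤ)})).trans
    (Int.quotientSpanNatEquivZMod 2).toAddEquiv.toIntLinearEquiv

end CK

/-- **Casian–Kodama, Theorem 8.9 / Proposition 8.8**: the cochain complex built from
the modified incidence numbers `[·;·]₂` satisfies `δ∘δ = 0` and has cohomology
`H^0 ≅ ℤ`, `H^1 ≅ ℤ`, and `H^q ≅ (ℤ/2)^{C(l-1,q-1)}` for `2 ≤ q ≤ l` (the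
integral cohomology of the Schubert variety `V_l`). -/
theorem cohomology_schubert_variety (l : ℕ) (hl : 1 ≤ l) :
    (∀ q : ℕ, (delta ℤ l (inc2 l) (q + 1)).comp (delta ℤ l (inc2 l) q) = 0) ∧
    Nonempty ((LinearMap.ker (delta ℤ l (inc2 l) 0)) ≃ₗ[ℤ] ℤ) ∧
    Nonempty
      ((LinearMap.ker (delta ℤ l (inc2 l) 1) ⧸
        (LinearMap.range (delta ℤ l (inc2 l) 0)).comap
          (LinearMap.ker (delta ℤ l (inc2 l) 1)).subtype) ≃ₗ[ℤ] ℤ) ∧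
    ∀ q : ℕ, 2 ≤ q + 2 → q + 2 ≤ l →
      Nonempty
        ((LinearMap.ker (delta ℤ l (inc2 l) (q + 2)) ⧸
          (LinearMap.range (delta ℤ l (inc2 l) (q + 1))).comap
            (LinearMap.ker (delta ℤ l (inc2 l) (q + 2))).subtype) ≃ₗ[ℤ]
          (Fin ((l - 1).choose (q + 1)) → ZMod 2)) := by
  classical
  refine ⟨fun q => CK.dd_zero (inc2 l)
    (fun _ _ _ hi hj hne => CK.inc2_antisym hi hj hne) q, ?_, ?_, ?_⟩
  · -- H^0 ≅ ℤ
    have h0 : LinearMap.ker (delta ℤ l (inc2 l) 0) = ⊤ := by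
      rw [CK.delta0_zero]; exact LinearMap.ker_zero
    haveI : Unique {J : Finset (Fin l) // J.card + 0 = l} :=
      { default := ⟨Finset.univ, by rw [Finset.card_univ, Fintype.card_fin]; omega⟩,
        uniq := fun J => Subtype.ext (Finset.eq_univ_of_card _ (by
          have := J.2; rw [Fintype.card_fin]; omega)) }
    exact ⟨(LinearEquiv.ofEq _ _ h0).trans (Submodule.topEquiv.trans
      (LinearEquiv.funUnique {J : Finset (Fin l) // J.card + 0 = l} ℤ ℤ))⟩
  · -- H^1 ≅ ℤ
    have hbot : (LinearMap.range (delta ℤ l (inc2 l) 0)).comap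
        (LinearMap.ker (delta ℤ l (inc2 l) 1)).subtype = ⊥ := by
      rw [CK.delta0_zero, LinearMap.range_zero, Submodule.comap_bot, Submodule.ker_subtype]
    obtain ⟨e1⟩ := CK.ker1_equiv (l := l) hl
    exact ⟨(Submodule.quotEquivOfEqBot _ hbot).trans e1⟩
  · -- H^{q+2} ≅ (ℤ/2)^{C(l-1,q+1)}
    intro q _ _
    set K := LinearMap.ker (delta ℤ l (inc2 l) (q + 2)) with hK
    have hKM : K = LinearMap.range (delta ℤ l (CK.inc1 l) (q + 1)) :=
      (CK.ker_inc2_eq (q + 2)).trans (CK.ker_eq_range q)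
    have htwo : ∀ y : Coch ℤ l (q + 1),
        delta ℤ l (inc2 l) (q + 1) y = (2 : ℤ) • delta ℤ l (CK.inc1 l) (q + 1) y := by
      intro y
      funext Jx
      rw [CK.delta2_eq]
      simp [Pi.smul_apply, smul_eq_mul]
    have hN : (LinearMap.range (delta ℤ l (inc2 l) (q + 1))).comap K.subtype
        = LinearMap.range ((2 : ℤ) • (LinearMap.id : K →ₗ[ℤ] K)) := by
      ext x
      rw [Submodule.mem_comap, LinearMap.mem_range, LinearMap.mem_range]
      constructor
      · rintro ⟨y, hy⟩
        have hzK : delta ℤ l (CK.inc1 l) (q + 1) y ∈ K := by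
          rw [hKM]; exact ⟨y, rfl⟩
        refine ⟨⟨_, hzK⟩, ?_⟩
        apply Subtype.ext
        show (2 : ℤ) • delta ℤ l (CK.inc1 l) (q + 1) y = (x : Coch ℤ l (q + 2))
        rw [← htwo y]
        exact hy
      · rintro ⟨z, rfl⟩
        have hz' : (z : Coch ℤ l (q + 2)) ∈ LinearMap.range (delta ℤ l (CK.inc1 l) (q + 1)) := by
          rw [← hKM]; exact z.2
        obtain ⟨y, hy⟩ := hz'
        refine ⟨y, ?_⟩
        show delta ℤ l (inc2 l) (q + 1) y
          = ((((2 : ℤ) • (LinearMap.id : K →ₗ[ℤ] K)) z : K) : Coch ℤ l (q + 2))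
        rw [htwo y, hy]
        rfl
    obtain ⟨n, bas⟩ := Submodule.basisOfPid
      (Pi.basisFun ℤ {J : Finset (Fin l) // J.card + (q + 2) = l}) K
    have hn : n = (l - 1).choose (q + 1) := by
      have h1 : Module.finrank ℤ K = n := by
        rw [Module.finrank_eq_card_basis bas, Fintype.card_fin]
      have h2 : Module.finrank ℤ K = (l - 1).choose (q + 1) := by
        rw [hKM]
        exact CK.rank_range hl q
      omega
    have hmap : (Submodule.comap K.subtype
          (LinearMap.range (delta ℤ l (inc2 l) (q + 1)))).map
            ((bas.equivFun : K ≃ₗ[ℤ] (Fin n → ℤ)) : K →ₗ[ℤ] (Fin n → ℤ))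
        = LinearMap.range ((2 : ℤ) • (LinearMap.id : (Fin n → ℤ) →ₗ[ℤ] (Fin n → ℤ))) := by
      rw [show Submodule.comap K.subtype
          (LinearMap.range (delta ℤ l (inc2 l) (q + 1)))
          = (LinearMap.range (delta ℤ l (inc2 l) (q + 1))).comap K.subtype from rfl, hN]
      ext v
      simp only [Submodule.mem_map, LinearMap.mem_range]
      constructor
      · rintro ⟨w, ⟨z, rfl⟩, rfl⟩
        refine ⟨bas.equivFun z, ?_⟩
        show (2 : ℤ) • bas.equivFun z = bas.equivFun ((2 : ℤ) • z)
        rw [map_smul]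
      · rintro ⟨v', rfl⟩
        refine ⟨(2 : ℤ) • bas.equivFun.symm v', ⟨bas.equivFun.symm v', rfl⟩, ?_⟩
        show bas.equivFun ((2 : ℤ) • bas.equivFun.symm v') = (2 : ℤ) • v'
        rw [map_smul, LinearEquiv.apply_symm_apply]
    have hQpi : LinearMap.range ((2 : ℤ) • (LinearMap.id : (Fin n → ℤ) →ₗ[ℤ] (Fin n → ℤ)))
        = Submodule.pi Set.univ (fun _ : Fin n => (Ideal.span {(2 : ℤ)} : Submodule ℤ ℤ)) := by
      ext v
      rw [LinearMap.mem_range, Submodule.mem_pi]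
      constructor
      · rintro ⟨y, rfl⟩ i _
        show ((2 : ℤ) • y) i ∈ _
        rw [Ideal.mem_span_singleton]
        exact ⟨y i, by simp [Pi.smul_apply, smul_eq_mul]⟩
      · intro h
        have h' : ∀ i, ∃ c, v i = 2 * c := by
          intro i
          have hi := h i (Set.mem_univ i)
          rw [Ideal.mem_span_singleton] at hi
          obtain ⟨c, hc⟩ := hi
          exact ⟨c, hc⟩
        choose w hw using h'
        refine ⟨w, ?_⟩
        funext i
        show (2 : ℤ) • w i = v i
        rw [smul_eq_mul, ← hw i]
    rw [← hn]
    exact ⟨(Submodule.Quotient.equiv _ _ (bas.equivFun) hmap).trans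
      ((Submodule.quotEquivOfEq _ _ hQpi).trans
        ((Submodule.quotientPi _).trans
          (LinearEquiv.piCongrRight (fun _ : Fin n => CK.zmodEquiv))))⟩
end
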